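/- arXiv:2206.15028 — 2 statements merged into one kernel-verified Lean document; each statement's English description precedes it below -/
import Mathlib

section
/- Let X be a coherent configuration, φ : X → X' a sesquiclosed algebraic isomorphism, 𝔖 a section of X and 𝔖' a section of X'. Assume that φ induces an algebraic isomorphism ψ : X_𝔖 → X'_{𝔖'} (i.e., ψ(s_𝔖) = φ(s)_{𝔖'} for all basis relations s of X). Then ψ is sesquiclosed. -/
open Set

universe u

/-- A coherent configuration on a finite set `Ω`: a partition `S` of `Ω × Ω`
satisfying (C1) the diagonal is a union of classes, (C2) closure under converse,
(C3) well-defined intersection numbers. -/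
structure CohCfg (Ω : Type u) : Type u where
  S : Set (Set (Ω × Ω))
  finite : Finite Ω
  cover : ∀ p : Ω × Ω, ∃ s ∈ S, p ∈ s
  disj : ∀ s ∈ S, ∀ t ∈ S, s ≠ t → s ∩ t = ∅
  nonemp : ∀ s ∈ S, s.Nonempty
  diag : ∀ s ∈ S, (∃ p ∈ s, p.1 = p.2) → ∀ p ∈ s, p.1 = p.2
  conv : ∀ s ∈ S, {p : Ω × Ω | (p.2, p.1) ∈ s} ∈ S
  inum : ∀ r ∈ S, ∀ s ∈ S, ∀ t ∈ S, ∀ p ∈ t, ∀ q ∈ t,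
    {γ : Ω | (p.1, γ) ∈ r ∧ (γ, p.2) ∈ s}.ncard =
    {γ : Ω | (q.1, γ) ∈ r ∧ (γ, q.2) ∈ s}.ncard

namespace CohCfg

variable {Ω Ω' : Type u}

/-- The intersection number `c^t_{rs}` computed at the pair `p`. -/
noncomputable def cnum (r s : Set (Ω × Ω)) (p : Ω × Ω) : ℕ :=
  {γ : Ω | (p.1, γ) ∈ r ∧ (γ, p.2) ∈ s}.ncard

/-- `X` is a scheme (homogeneous) if the full diagonal is a basis relation. -/
def IsScheme (X : CohCfg Ω) : Prop := {p : Ω × Ω | p.1 = p.2} ∈ X.S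

/-- Commutativity: `c^t_{rs} = c^t_{sr}`. -/
def IsCommutative (X : CohCfg Ω) : Prop :=
  ∀ r ∈ X.S, ∀ s ∈ X.S, ∀ p : Ω × Ω, cnum r s p = cnum s r p

/-- `s` is a relation of `X`, i.e. a union of basis relations. -/
def IsRelationOf (X : CohCfg Ω) (s : Set (Ω × Ω)) : Prop :=
  ∀ t ∈ X.S, (t ∩ s).Nonempty → t ⊆ s

/-- `X ≤ Y`: every (basis) relation of `X` is a relation of `Y`. -/
def le (X Y : CohCfg Ω) : Prop := ∀ s ∈ X.S, IsRelationOf Y s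

/-- The diagonal relation `1_Δ` of a subset `Δ`. -/
def diagRel (Δ : Set Ω) : Set (Ω × Ω) := {p | p.1 = p.2 ∧ p.1 ∈ Δ}

/-- `Δ` is a fiber of `X`. -/
def IsFiber (X : CohCfg Ω) (Δ : Set Ω) : Prop := diagRel Δ ∈ X.S

/-- `αs = {β | (α,β) ∈ s}`. -/
def pointSet (s : Set (Ω × Ω)) (α : Ω) : Set Ω := {β | (α, β) ∈ s}

/-- `X` is partly regular: some point `α` has `|αs| ≤ 1` for all basis relations. -/
def PartlyRegular (X : CohCfg Ω) : Prop :=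
  ∃ α : Ω, ∀ s ∈ X.S, (pointSet s α).ncard ≤ 1

/-- The image `s^f` of a relation under a map of points. -/
def relImage (f : Ω → Ω') (s : Set (Ω × Ω)) : Set (Ω' × Ω') :=
  (fun p : Ω × Ω => (f p.1, f p.2)) '' s

/-- `φ` is an algebraic isomorphism from `X` to `X'`. -/
structure IsAlgIso (X : CohCfg Ω) (X' : CohCfg Ω')
    (φ : Set (Ω × Ω) → Set (Ω' × Ω')) : Prop where
  bijOn : Set.BijOn φ X.S X'.S
  cnum_eq : ∀ r ∈ X.S, ∀ s ∈ X.S, ∀ t ∈ X.S, ∀ p ∈ t, ∀ q ∈ φ t,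
    cnum r s p = cnum (φ r) (φ s) q

/-- The natural extension of an algebraic isomorphism to unions of basis relations. -/
def algImage (X : CohCfg Ω) (φ : Set (Ω × Ω) → Set (Ω' × Ω')) (s : Set (Ω × Ω)) :
    Set (Ω' × Ω') := ⋃₀ (φ '' {t | t ∈ X.S ∧ t ⊆ s})

/-- The image `Δ^φ` of a fiber under an algebraic isomorphism. -/
def fiberImage (X : CohCfg Ω) (φ : Set (Ω × Ω) → Set (Ω' × Ω')) (Δ : Set Ω) : Set Ω' :=
  {α' | (α', α') ∈ φ (diagRel Δ)}

/-- `Y` is the point extension `X_α`: the smallest coherent configuration `≥ X`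
having `1_α` as a basis relation. -/
def IsPointExt (X : CohCfg Ω) (α : Ω) (Y : CohCfg Ω) : Prop :=
  le X Y ∧ ({(α, α)} : Set (Ω × Ω)) ∈ Y.S ∧
    ∀ Z : CohCfg Ω, le X Z → ({(α, α)} : Set (Ω × Ω)) ∈ Z.S → le Y Z

/-- `φ` has an `(α,α')`-extension: an algebraic isomorphism `X_α → X'_{α'}`
extending `φ` and sending `1_α` to `1_{α'}`. -/
def HasExtension (X : CohCfg Ω) (X' : CohCfg Ω') (φ : Set (Ω × Ω) → Set (Ω' × Ω'))
    (α : Ω) (α' : Ω') : Prop :=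
  ∃ (Y : CohCfg Ω) (Y' : CohCfg Ω') (ψ : Set (Ω × Ω) → Set (Ω' × Ω')),
    IsPointExt X α Y ∧ IsPointExt X' α' Y' ∧ IsAlgIso Y Y' ψ ∧
    (∀ s ∈ X.S, algImage Y ψ s = φ s) ∧ ψ {(α, α)} = {(α', α')}

/-- A sesquiclosed algebraic isomorphism: has an `(α,α')`-extension for all
`α ∈ Δ ∈ F(X)` and `α' ∈ Δ^φ`. -/
def SesquiclosedIso (X : CohCfg Ω) (X' : CohCfg Ω')
    (φ : Set (Ω × Ω) → Set (Ω' × Ω')) : Prop :=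
  IsAlgIso X X' φ ∧
  ∀ Δ : Set Ω, IsFiber X Δ → ∀ α ∈ Δ, ∀ α' ∈ fiberImage X φ Δ, HasExtension X X' φ α α'

/-- `φ` is induced by the combinatorial isomorphism `f`. -/
def InducedBy (X : CohCfg Ω) (X' : CohCfg Ω') (φ : Set (Ω × Ω) → Set (Ω' × Ω'))
    (f : Ω → Ω') : Prop :=
  Function.Bijective f ∧ ∀ s ∈ X.S, φ s = relImage f s

/-- `X` is separable: every algebraic isomorphism from `X` is induced by an isomorphism. -/
def Separable (X : CohCfg Ω) : Prop :=
  ∀ (Ω'' : Type u) (X' : CohCfg Ω'') (φ : Set (Ω × Ω) → Set (Ω'' × Ω'')),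
    IsAlgIso X X' φ → ∃ f : Ω → Ω'', InducedBy X X' φ f

/-- `X` is sesquiseparable: every sesquiclosed algebraic isomorphism from `X`
is induced by an isomorphism. -/
def Sesquiseparable (X : CohCfg Ω) : Prop :=
  ∀ (Ω'' : Type u) (X' : CohCfg Ω'') (φ : Set (Ω × Ω) → Set (Ω'' × Ω'')),
    SesquiclosedIso X X' φ → ∃ f : Ω → Ω'', InducedBy X X' φ f

/-- A sesquiclosed coherent configuration: (S1) the fibers of every one-point
extension `X_α` are the nonempty sets `αs`, and (S2) the identity algebraic
automorphism is sesquiclosed. -/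
def SesquiclosedCfg (X : CohCfg Ω) : Prop :=
  (∀ α : Ω, ∀ Y : CohCfg Ω, IsPointExt X α Y →
     ∀ Δ : Set Ω, (IsFiber Y Δ ↔ ∃ s ∈ X.S, Δ = pointSet s α ∧ Δ.Nonempty)) ∧
  SesquiclosedIso X X id

/-- A parabolic of `X`: a relation that is an equivalence relation on `Ω`. -/
def IsParabolic (X : CohCfg Ω) (e : Set (Ω × Ω)) : Prop :=
  IsRelationOf X e ∧ (∀ a : Ω, (a, a) ∈ e) ∧ (∀ p ∈ e, (p.2, p.1) ∈ e) ∧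
    ∀ a b c : Ω, (a, b) ∈ e → (b, c) ∈ e → (a, c) ∈ e

/-- The class of `a` modulo the equivalence relation `e`. -/
def eClass (e : Set (Ω × Ω)) (a : Ω) : Set Ω := {b | (a, b) ∈ e}

/-- `Δ/e` is a section of `X`: `e` is a parabolic and `Δ` is a class of a
parabolic containing `e`. -/
def IsSection (X : CohCfg Ω) (Δ : Set Ω) (e : Set (Ω × Ω)) : Prop :=
  IsParabolic X e ∧ ∃ d : Set (Ω × Ω), IsParabolic X d ∧ e ⊆ d ∧ ∃ a : Ω, Δ = eClass d a

/-- The point set of the section `Δ/e`: the `e`-classes of points of `Δ`. -/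
abbrev Sec (Δ : Set Ω) (e : Set (Ω × Ω)) : Type u :=
  {Γ : Set Ω // ∃ a ∈ Δ, Γ = eClass e a}

/-- The relation `s_𝔖` on the section `𝔖 = Δ/e`. -/
def secRel (Δ : Set Ω) (e : Set (Ω × Ω)) (s : Set (Ω × Ω)) :
    Set (Sec Δ e × Sec Δ e) :=
  {p | ∃ a ∈ p.1.1, ∃ b ∈ p.2.1, (a, b) ∈ s}

/-- `Y` is the coherent configuration `X_𝔖` on the section `𝔖 = Δ/e`. -/
def IsSectionCfg (X : CohCfg Ω) (Δ : Set Ω) (e : Set (Ω × Ω))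
    (Y : CohCfg (Sec Δ e)) : Prop :=
  Y.S = {t | ∃ s ∈ X.S, t = secRel Δ e s ∧ t.Nonempty}

/-- The restriction `s_Δ` of a relation to a subset `Δ`. -/
def restRel (Δ : Set Ω) (s : Set (Ω × Ω)) : Set (↥Δ × ↥Δ) := {p | (p.1.1, p.2.1) ∈ s}

/-- `Y` is the restriction `X_Δ` of `X` to `Δ`. -/
def IsRestrictionCfg (X : CohCfg Ω) (Δ : Set Ω) (Y : CohCfg ↥Δ) : Prop :=
  Y.S = {t | ∃ s ∈ X.S, t = restRel Δ s ∧ t.Nonempty}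

/-- `Iso(X, X', φ)`: isomorphisms inducing the algebraic isomorphism `φ`. -/
def IsoSet (X : CohCfg Ω) (X' : CohCfg Ω') (φ : Set (Ω × Ω) → Set (Ω' × Ω')) :
    Set (Ω → Ω') :=
  {f | Function.Bijective f ∧ ∀ s ∈ X.S, relImage f s = φ s}

/-- `X` is schurian: its basis relations are the orbits of `Aut(X)` on `Ω × Ω`. -/
def Schurian (X : CohCfg Ω) : Prop :=
  ∀ s ∈ X.S, ∀ p ∈ s, ∀ q ∈ s, ∃ f : Ω → Ω,
    (Function.Bijective f ∧ ∀ t ∈ X.S, relImage f t = t) ∧ (f p.1, f p.2) = q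

/-- `e ⊆ rad(s)`: `s` is a union of products of pairs of `e`-classes it meets. -/
def RadGE (e s : Set (Ω × Ω)) : Prop :=
  ∀ p ∈ s, ∀ a b : Ω, (p.1, a) ∈ e → (p.2, b) ∈ e → (a, b) ∈ s

/-- The `e₁/e₀`-condition: every basis relation disjoint from `e₁` has `e₀` in
its radical. -/
def WedgeCond (X : CohCfg Ω) (e0 e1 : Set (Ω × Ω)) : Prop :=
  ∀ s ∈ X.S, s ∩ e1 = ∅ → RadGE e0 s

/-- A circulant coherent configuration on a group `G`: right translations are
automorphisms. -/
def IsCirculant {G : Type u} [Group G] (X : CohCfg G) : Prop :=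
  ∀ g : G, ∀ s ∈ X.S, relImage (fun x => x * g) s = s

/-- The equivalence relation `e(H)` whose classes are the cosets of `H`. -/
def eRelSet {G : Type u} [Group G] (H : Subgroup G) : Set (G × G) :=
  {p | p.1⁻¹ * p.2 ∈ H}

/-- `H` is an `X`-group. -/
def IsXGroup {G : Type u} [Group G] (X : CohCfg G) (H : Subgroup G) : Prop :=
  IsParabolic X (eRelSet H)

/-- A normal circulant scheme: every automorphism fixing the identity is a
group automorphism. -/
def IsNormalCirc {G : Type u} [Group G] (X : CohCfg G) : Prop :=
  ∀ f : G → G, Function.Bijective f → (∀ s ∈ X.S, relImage f s = s) → f 1 = 1 →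
    ∀ a b : G, f (a * b) = f a * f b

/-- Normality of a circulant scheme presented on a section `Δ/e` of a group `G`
(the points are cosets): every automorphism fixing the class of `1` respects the
coset multiplication. -/
def IsNormalSec {G : Type u} [Group G] (Δ : Set G) (e : Set (G × G))
    (Y : CohCfg (Sec Δ e)) : Prop :=
  ∀ F : Sec Δ e → Sec Δ e, Function.Bijective F → (∀ t ∈ Y.S, relImage F t = t) →
    (∀ Γ : Sec Δ e, (1 : G) ∈ Γ.1 → F Γ = Γ) →
    ∀ Γ Γ' Γ'' : Sec Δ e, Γ''.1 = Set.image2 (· * ·) Γ.1 Γ'.1 →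
      (F Γ'').1 = Set.image2 (· * ·) (F Γ).1 (F Γ').1

/-- Normality of a circulant scheme presented on (the subtype of) a subgroup `U ⊆ G`. -/
def IsNormalRest {G : Type u} [Group G] (U : Set G) (Y : CohCfg ↥U) : Prop :=
  ∀ F : ↥U → ↥U, Function.Bijective F → (∀ t ∈ Y.S, relImage F t = t) →
    (∀ x : ↥U, x.1 = 1 → F x = x) →
    ∀ x y z : ↥U, z.1 = x.1 * y.1 → (F z).1 = (F x).1 * (F y).1

/-- `N` is an `X_U`-group: `N ≤ U` and the restriction of `e(N)` to `U` is a
relation of the restriction `X_U`. -/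
def SubXGroup {G : Type u} [Group G] (X : CohCfg G) (U N : Subgroup G) : Prop :=
  N ≤ U ∧ ∀ s ∈ X.S, (∃ p ∈ s, p.1 ∈ U ∧ p.2 ∈ U ∧ p.1⁻¹ * p.2 ∈ N) →
    ∀ p ∈ s, p.1 ∈ U → p.2 ∈ U → p.1⁻¹ * p.2 ∈ N

end CohCfg

namespace SQ
open CohCfg

variable {Ω Ω' Ω'' : Type u}

/-! ### Composition and converse of relations -/

def comp (r s : Set (Ω × Ω)) : Set (Ω × Ω) := {p | ∃ γ : Ω, (p.1, γ) ∈ r ∧ (γ, p.2) ∈ s}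

def conv (r : Set (Ω × Ω)) : Set (Ω × Ω) := {p | (p.2, p.1) ∈ r}

lemma mem_comp {r s : Set (Ω × Ω)} {x y : Ω} :
    (x, y) ∈ comp r s ↔ ∃ γ, (x, γ) ∈ r ∧ (γ, y) ∈ s := Iff.rfl

lemma mem_conv {r : Set (Ω × Ω)} {x y : Ω} : (x, y) ∈ conv r ↔ (y, x) ∈ r := Iff.rfl

lemma comp_mono {r r' s s' : Set (Ω × Ω)} (h1 : r ⊆ r') (h2 : s ⊆ s') :
    comp r s ⊆ comp r' s' := by
  rintro ⟨x, y⟩ ⟨γ, h, h'⟩; exact ⟨γ, h1 h, h2 h'⟩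

/-! ### Basic facts about classes -/

section Basic

variable {X : CohCfg Ω}

/-- two classes sharing a point are equal -/
lemma class_eq {s t : Set (Ω × Ω)} (hs : s ∈ X.S) (ht : t ∈ X.S) {p : Ω × Ω}
    (hps : p ∈ s) (hpt : p ∈ t) : s = t := by
  by_contra h
  have := X.disj s hs t ht h
  rw [Set.eq_empty_iff_forall_notMem] at this
  exact this p ⟨hps, hpt⟩

lemma cnum_congr_class {r s t : Set (Ω × Ω)} (hr : r ∈ X.S) (hs : s ∈ X.S) (ht : t ∈ X.S)
    {p q : Ω × Ω} (hp : p ∈ t) (hq : q ∈ t) : cnum r s p = cnum r s q :=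
  X.inum r hr s hs t ht p hp q hq

lemma cnum_pos' (X : CohCfg Ω) {r s : Set (Ω × Ω)} {p : Ω × Ω} :
    0 < cnum r s p ↔ ∃ γ, (p.1, γ) ∈ r ∧ (γ, p.2) ∈ s := by
  haveI := X.finite
  rw [cnum, Set.ncard_pos (Set.toFinite _)]
  exact ⟨fun ⟨γ, h⟩ => ⟨γ, h⟩, fun ⟨γ, h⟩ => ⟨γ, h⟩⟩

/-! ### Relations (unions of classes) -/

lemma isRel_mem {s : Set (Ω × Ω)} (hs : s ∈ X.S) : IsRelationOf X s := by
  intro t ht ⟨p, hp1, hp2⟩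
  rw [class_eq ht hs hp1 hp2]

lemma isRel_sUnion {A : Set (Set (Ω × Ω))} (h : ∀ r ∈ A, IsRelationOf X r) :
    IsRelationOf X (⋃₀ A) := by
  intro t ht ⟨p, hp1, hp2⟩
  obtain ⟨r, hr, hpr⟩ := hp2
  exact (h r hr t ht ⟨p, hp1, hpr⟩).trans (Set.subset_sUnion_of_mem hr)

lemma isRel_union {r s : Set (Ω × Ω)} (hr : IsRelationOf X r) (hs : IsRelationOf X s) :
    IsRelationOf X (r ∪ s) := by
  intro t ht ⟨p, hp1, hp2⟩
  rcases hp2 with hp2 | hp2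
  · exact (hr t ht ⟨p, hp1, hp2⟩).trans Set.subset_union_left
  · exact (hs t ht ⟨p, hp1, hp2⟩).trans Set.subset_union_right

lemma isRel_inter {r s : Set (Ω × Ω)} (hr : IsRelationOf X r) (hs : IsRelationOf X s) :
    IsRelationOf X (r ∩ s) := by
  intro t ht ⟨p, hp1, hp2⟩
  exact Set.subset_inter (hr t ht ⟨p, hp1, hp2.1⟩) (hs t ht ⟨p, hp1, hp2.2⟩)

lemma isRel_compl {r : Set (Ω × Ω)} (hr : IsRelationOf X r) : IsRelationOf X rᶜ := by
  intro t ht ⟨p, hp1, hp2⟩ q hq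
  intro hqr
  exact hp2 (hr t ht ⟨q, hq, hqr⟩ hp1)

lemma isRel_empty : IsRelationOf X (∅ : Set (Ω × Ω)) := by
  intro t ht ⟨p, _, hp2⟩; exact absurd hp2 (Set.notMem_empty p)

lemma isRel_univ : IsRelationOf X (Set.univ : Set (Ω × Ω)) := fun _ _ _ => Set.subset_univ _

lemma isRel_diag : IsRelationOf X {p : Ω × Ω | p.1 = p.2} := by
  intro t ht ⟨p, hp1, hp2⟩ q hq
  exact X.diag t ht ⟨p, hp1, hp2⟩ q hq

lemma rel_eq_sUnion {r : Set (Ω × Ω)} (hr : IsRelationOf X r) :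
    r = ⋃₀ {t | t ∈ X.S ∧ t ⊆ r} := by
  apply Set.Subset.antisymm
  · intro p hp
    obtain ⟨t, ht, hpt⟩ := X.cover p
    exact ⟨t, ⟨ht, hr t ht ⟨p, hpt, hp⟩⟩, hpt⟩
  · intro p ⟨t, ⟨_, h⟩, hpt⟩; exact h hpt

lemma conv_class {s : Set (Ω × Ω)} (hs : s ∈ X.S) : conv s ∈ X.S := X.conv s hs

lemma isRel_conv {r : Set (Ω × Ω)} (hr : IsRelationOf X r) : IsRelationOf X (conv r) := by
  intro t ht ⟨p, hp1, hp2⟩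
  have h1 : conv t ∈ X.S := conv_class ht
  have h2 : conv t ⊆ r := by
    apply hr (conv t) h1
    exact ⟨(p.2, p.1), hp1, hp2⟩
  intro q hq
  exact h2 hq

lemma conv_mem_conv {r : Set (Ω × Ω)} {p : Ω × Ω} (h : p ∈ r) : (p.2, p.1) ∈ conv r := h

lemma conv_conv (r : Set (Ω × Ω)) : conv (conv r) = r := rfl

lemma conv_subset_conv {r s : Set (Ω × Ω)} (h : r ⊆ s) : conv r ⊆ conv s :=
  fun p hp => h hp

/-! ### Decomposition of relations into classes; additivity of `cnum` -/

noncomputable def classesIn (X : CohCfg Ω) (r : Set (Ω × Ω)) : Finset (Set (Ω × Ω)) :=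
  haveI := X.finite
  (Set.toFinite {u | u ∈ X.S ∧ u ⊆ r}).toFinset

lemma mem_classesIn {r u : Set (Ω × Ω)} :
    u ∈ classesIn X r ↔ u ∈ X.S ∧ u ⊆ r := by
  simp [classesIn]

lemma sUnion_classesIn {r : Set (Ω × Ω)} (hr : IsRelationOf X r) :
    ⋃₀ (classesIn X r : Set (Set (Ω × Ω))) = r := by
  have : (classesIn X r : Set (Set (Ω × Ω))) = {t | t ∈ X.S ∧ t ⊆ r} := by
    ext u; simp [mem_classesIn]
  rw [this, ← rel_eq_sUnion hr]

lemma cnum_union_left {r₁ r₂ s : Set (Ω × Ω)} {p : Ω × Ω} (h : Disjoint r₁ r₂)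
    (hΩ : Finite Ω) :
    cnum (r₁ ∪ r₂) s p = cnum r₁ s p + cnum r₂ s p := by
  have e1 : {γ : Ω | (p.1, γ) ∈ r₁ ∪ r₂ ∧ (γ, p.2) ∈ s} =
      {γ : Ω | (p.1, γ) ∈ r₁ ∧ (γ, p.2) ∈ s} ∪ {γ : Ω | (p.1, γ) ∈ r₂ ∧ (γ, p.2) ∈ s} := by
    ext γ; simp only [Set.mem_setOf_eq, Set.mem_union]; tauto
  have e2 : Disjoint {γ : Ω | (p.1, γ) ∈ r₁ ∧ (γ, p.2) ∈ s}
      {γ : Ω | (p.1, γ) ∈ r₂ ∧ (γ, p.2) ∈ s} := by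
    rw [Set.disjoint_left]
    intro γ h1 h2
    exact Set.disjoint_left.mp h ((h1 : _ ∧ _).1) ((h2 : _ ∧ _).1)
  rw [cnum, e1, Set.ncard_union_eq e2 (Set.toFinite _) (Set.toFinite _)]; rfl

lemma cnum_union_right {r s₁ s₂ : Set (Ω × Ω)} {p : Ω × Ω} (h : Disjoint s₁ s₂)
    (hΩ : Finite Ω) :
    cnum r (s₁ ∪ s₂) p = cnum r s₁ p + cnum r s₂ p := by
  have e1 : {γ : Ω | (p.1, γ) ∈ r ∧ (γ, p.2) ∈ s₁ ∪ s₂} =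
      {γ : Ω | (p.1, γ) ∈ r ∧ (γ, p.2) ∈ s₁} ∪ {γ : Ω | (p.1, γ) ∈ r ∧ (γ, p.2) ∈ s₂} := by
    ext γ; simp only [Set.mem_setOf_eq, Set.mem_union]; tauto
  have e2 : Disjoint {γ : Ω | (p.1, γ) ∈ r ∧ (γ, p.2) ∈ s₁}
      {γ : Ω | (p.1, γ) ∈ r ∧ (γ, p.2) ∈ s₂} := by
    rw [Set.disjoint_left]
    intro γ h1 h2
    exact Set.disjoint_left.mp h ((h1 : _ ∧ _).2) ((h2 : _ ∧ _).2)
  rw [cnum, e1, Set.ncard_union_eq e2 (Set.toFinite _) (Set.toFinite _)]; rfl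

lemma cnum_empty_left {s : Set (Ω × Ω)} {p : Ω × Ω} : cnum (∅ : Set (Ω × Ω)) s p = 0 := by
  have : {γ : Ω | (p.1, γ) ∈ (∅ : Set (Ω × Ω)) ∧ (γ, p.2) ∈ s} = ∅ := by
    ext γ; simp
  rw [cnum, this, Set.ncard_empty]

lemma cnum_empty_right {r : Set (Ω × Ω)} {p : Ω × Ω} : cnum r (∅ : Set (Ω × Ω)) p = 0 := by
  have : {γ : Ω | (p.1, γ) ∈ r ∧ (γ, p.2) ∈ (∅ : Set (Ω × Ω))} = ∅ := by
    ext γ; simp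
  rw [cnum, this, Set.ncard_empty]

/-- classes in a finset `T ⊆ X.S` are pairwise disjoint, so cnum over `⋃₀ T` is a sum -/
lemma cnum_sUnion_left {s : Set (Ω × Ω)} {p : Ω × Ω} :
    ∀ T : Finset (Set (Ω × Ω)), (↑T ⊆ X.S) →
      cnum (⋃₀ (T : Set (Set (Ω × Ω)))) s p = ∑ u ∈ T, cnum u s p := by
  haveI := X.finite
  classical
  intro T
  induction T using Finset.induction_on with
  | empty => intro _; simp [cnum_empty_left]
  | @insert a T ha ih =>
    intro hsub
    have haS : a ∈ X.S := hsub (Finset.mem_insert_self a T)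
    have hTS : ↑T ⊆ X.S := fun u hu => hsub (by exact_mod_cast Finset.mem_insert_of_mem hu)
    have hd : Disjoint a (⋃₀ (T : Set (Set (Ω × Ω)))) := by
      rw [Set.disjoint_sUnion_right]
      intro u hu
      rw [Set.disjoint_iff_inter_eq_empty]
      apply X.disj a haS u (hTS hu)
      rintro rfl
      exact ha hu
    rw [Finset.coe_insert, Set.sUnion_insert, cnum_union_left hd this,
      Finset.sum_insert ha, ih hTS]

lemma cnum_sUnion_right {r : Set (Ω × Ω)} {p : Ω × Ω} :
    ∀ T : Finset (Set (Ω × Ω)), (↑T ⊆ X.S) →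
      cnum r (⋃₀ (T : Set (Set (Ω × Ω)))) p = ∑ u ∈ T, cnum r u p := by
  haveI := X.finite
  classical
  intro T
  induction T using Finset.induction_on with
  | empty => intro _; simp [cnum_empty_right]
  | @insert a T ha ih =>
    intro hsub
    have haS : a ∈ X.S := hsub (Finset.mem_insert_self a T)
    have hTS : ↑T ⊆ X.S := fun u hu => hsub (by exact_mod_cast Finset.mem_insert_of_mem hu)
    have hd : Disjoint a (⋃₀ (T : Set (Set (Ω × Ω)))) := by
      rw [Set.disjoint_sUnion_right]
      intro u hu
      rw [Set.disjoint_iff_inter_eq_empty]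
      apply X.disj a haS u (hTS hu)
      rintro rfl
      exact ha hu
    rw [Finset.coe_insert, Set.sUnion_insert, cnum_union_right hd this,
      Finset.sum_insert ha, ih hTS]

lemma classesIn_subset {r : Set (Ω × Ω)} : (↑(classesIn X r) : Set (Set (Ω × Ω))) ⊆ X.S :=
  fun u hu => (mem_classesIn.mp hu).1

/-- `cnum` of relations decomposes as a double sum over classes. -/
lemma cnum_decomp {r s : Set (Ω × Ω)} (hr : IsRelationOf X r) (hs : IsRelationOf X s)
    (p : Ω × Ω) :
    cnum r s p = ∑ u ∈ classesIn X r, ∑ v ∈ classesIn X s, cnum u v p := by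
  conv_lhs => rw [← sUnion_classesIn hr, ← sUnion_classesIn hs]
  rw [cnum_sUnion_left (classesIn X r) classesIn_subset]
  apply Finset.sum_congr rfl
  intro u _
  exact cnum_sUnion_right (classesIn X s) classesIn_subset

/-- `cnum` of relations is constant on classes. -/
lemma cnum_congr {r s t : Set (Ω × Ω)} (hr : IsRelationOf X r) (hs : IsRelationOf X s)
    (ht : t ∈ X.S) {p q : Ω × Ω} (hp : p ∈ t) (hq : q ∈ t) : cnum r s p = cnum r s q := by
  rw [cnum_decomp hr hs p, cnum_decomp hr hs q]
  apply Finset.sum_congr rfl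
  intro u hu
  apply Finset.sum_congr rfl
  intro v hv
  exact cnum_congr_class (mem_classesIn.mp hu).1 (mem_classesIn.mp hv).1 ht hp hq

/-- composition of relations is a relation -/
lemma isRel_comp {r s : Set (Ω × Ω)} (hr : IsRelationOf X r) (hs : IsRelationOf X s) :
    IsRelationOf X (comp r s) := by
  intro t ht ⟨p, hp1, hp2⟩ q hq
  have h1 : 0 < cnum r s p := by
    rw [cnum_pos' X]
    exact hp2
  have h2 : 0 < cnum r s q := by
    rw [cnum_congr hr hs ht hq hp1]
    exact h1
  rw [cnum_pos' X] at h2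
  exact h2

end Basic

/-! ### Algebraic isomorphisms: inverse, transport lemmas -/

section AlgIso

variable {X : CohCfg Ω} {X' : CohCfg Ω'} {χ : Set (Ω × Ω) → Set (Ω' × Ω')}

noncomputable def invMap (X : CohCfg Ω) (χ : Set (Ω × Ω) → Set (Ω' × Ω')) :
    Set (Ω' × Ω') → Set (Ω × Ω) := Function.invFunOn χ X.S

lemma map_mem (h : IsAlgIso X X' χ) {u : Set (Ω × Ω)} (hu : u ∈ X.S) : χ u ∈ X'.S :=
  h.bijOn.mapsTo hu

lemma invOn (h : IsAlgIso X X' χ) : Set.InvOn (invMap X χ) χ X.S X'.S :=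
  h.bijOn.invOn_invFunOn

lemma invMap_map (h : IsAlgIso X X' χ) {u : Set (Ω × Ω)} (hu : u ∈ X.S) :
    invMap X χ (χ u) = u := (invOn h).1 hu

lemma map_invMap (h : IsAlgIso X X' χ) {u' : Set (Ω' × Ω')} (hu' : u' ∈ X'.S) :
    χ (invMap X χ u') = u' := (invOn h).2 hu'

lemma invMap_bijOn (h : IsAlgIso X X' χ) : Set.BijOn (invMap X χ) X'.S X.S := by
  have h1 := invOn h
  exact Set.BijOn.symm h1.symm h.bijOn

lemma invMap_mem (h : IsAlgIso X X' χ) {u' : Set (Ω' × Ω')} (hu' : u' ∈ X'.S) :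
    invMap X χ u' ∈ X.S := (invMap_bijOn h).mapsTo hu'

lemma invMap_isAlgIso (h : IsAlgIso X X' χ) : IsAlgIso X' X (invMap X χ) := by
  refine ⟨invMap_bijOn h, ?_⟩
  intro r' hr' s' hs' t' ht' p' hp' q hq
  have h1 := h.cnum_eq (invMap X χ r') (invMap_mem h hr') (invMap X χ s') (invMap_mem h hs')
    (invMap X χ t') (invMap_mem h ht') q hq p' (by rw [map_invMap h ht']; exact hp')
  rw [map_invMap h hr', map_invMap h hs'] at h1
  exact h1.symm

/-- algebraic isomorphisms map diagonal classes to diagonal classes -/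
lemma map_diag (h : IsAlgIso X X' χ) {u : Set (Ω × Ω)} (hu : u ∈ X.S)
    (hd : ∀ p ∈ u, p.1 = p.2) : ∀ p ∈ χ u, p.1 = p.2 := by
  rintro ⟨a, b⟩ hab
  obtain ⟨d₀, hd₀, had₀⟩ := X'.cover (a, a)
  have hd₀diag : ∀ p ∈ d₀, p.1 = p.2 := X'.diag d₀ hd₀ ⟨(a, a), had₀, rfl⟩
  have hc : 0 < cnum d₀ (χ u) (a, b) := by
    rw [cnum_pos' X']
    exact ⟨a, had₀, hab⟩
  obtain ⟨⟨x, y⟩, hxy⟩ := X.nonemp u hu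
  have hx : x = y := hd _ hxy
  subst hx
  have h2 := (invMap_isAlgIso h).cnum_eq d₀ hd₀ (χ u) (map_mem h hu) (χ u) (map_mem h hu)
    (a, b) hab (x, x) (by rw [invMap_map h hu]; exact hxy)
  rw [invMap_map h hu] at h2
  rw [h2] at hc
  rw [cnum_pos' X] at hc
  obtain ⟨γ, hγ1, hγ2⟩ := hc
  have : γ = x := hd _ hγ2
  subst this
  have : invMap X χ d₀ = u := class_eq (invMap_mem h hd₀) hu hγ1 hγ2
  have hdu : d₀ = χ u := by rw [← this, map_invMap h hd₀]
  exact hd₀diag (a, b) (hdu ▸ hab)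

/-- algebraic isomorphisms commute with converse on classes -/
lemma map_conv (h : IsAlgIso X X' χ) {u : Set (Ω × Ω)} (hu : u ∈ X.S) :
    χ (conv u) = conv (χ u) := by
  obtain ⟨⟨x, y⟩, hxy⟩ := X.nonemp u hu
  obtain ⟨d, hd, hxd⟩ := X.cover (x, x)
  have hdd : ∀ p ∈ d, p.1 = p.2 := X.diag d hd ⟨(x, x), hxd, rfl⟩
  have hcu : conv u ∈ X.S := X.conv u hu
  have hc : 0 < cnum u (conv u) (x, x) := by
    rw [cnum_pos' X]
    exact ⟨y, hxy, hxy⟩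
  obtain ⟨⟨z, w⟩, hzw⟩ := X'.nonemp (χ d) (map_mem h hd)
  have : z = w := map_diag h hd hdd _ hzw
  subst this
  have h2 := h.cnum_eq u hu (conv u) hcu d hd (x, x) hxd (z, z) hzw
  rw [h2] at hc
  rw [cnum_pos' X'] at hc
  obtain ⟨γ, hγ1, hγ2⟩ := hc
  have hγ3 : (γ, z) ∈ conv (χ u) := hγ1
  exact class_eq (map_mem h hcu) (X'.conv (χ u) (map_mem h hu)) hγ2 hγ3

/-! ### algImage: extension to relations -/

lemma subset_algImage {u r : Set (Ω × Ω)} (hu : u ∈ X.S) (hur : u ⊆ r) :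
    χ u ⊆ algImage X χ r := by
  intro p hp
  exact ⟨χ u, ⟨u, ⟨hu, hur⟩, rfl⟩, hp⟩

lemma algImage_class (h : IsAlgIso X X' χ) {u : Set (Ω × Ω)} (hu : u ∈ X.S) :
    algImage X χ u = χ u := by
  apply Set.Subset.antisymm
  · rintro p ⟨w, ⟨v, ⟨hv, hvu⟩, rfl⟩, hp⟩
    have : v = u := by
      obtain ⟨q, hq⟩ := X.nonemp v hv
      exact class_eq hv hu hq (hvu hq)
    rwa [this] at hp
  · exact subset_algImage hu subset_rfl

lemma isRel_algImage (h : IsAlgIso X X' χ) (r : Set (Ω × Ω)) :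
    IsRelationOf X' (algImage X χ r) := by
  apply isRel_sUnion
  rintro w ⟨u, ⟨hu, _⟩, rfl⟩
  exact isRel_mem (map_mem h hu)

lemma class_subset_algImage_iff (h : IsAlgIso X X' χ) {w : Set (Ω' × Ω')} (hw : w ∈ X'.S)
    {r : Set (Ω × Ω)} : w ⊆ algImage X χ r ↔ ∃ u ∈ X.S, u ⊆ r ∧ w = χ u := by
  constructor
  · intro hsub
    obtain ⟨p, hp⟩ := X'.nonemp w hw
    obtain ⟨w', ⟨u, ⟨hu, hur⟩, rfl⟩, hpw'⟩ := hsub hp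
    exact ⟨u, hu, hur, class_eq hw (map_mem h hu) hp hpw'⟩
  · rintro ⟨u, hu, hur, rfl⟩
    exact subset_algImage hu hur

lemma map_subset_algImage_iff (h : IsAlgIso X X' χ) {u : Set (Ω × Ω)} (hu : u ∈ X.S)
    {r : Set (Ω × Ω)} (hr : IsRelationOf X r) : χ u ⊆ algImage X χ r ↔ u ⊆ r := by
  rw [class_subset_algImage_iff h (map_mem h hu)]
  constructor
  · rintro ⟨v, hv, hvr, hvu⟩
    have : u = v := h.bijOn.injOn hu hv hvu
    rwa [this]
  · intro hur
    exact ⟨u, hu, hur, rfl⟩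

lemma algImage_mono {r r' : Set (Ω × Ω)} (hrr : r ⊆ r') :
    algImage X χ r ⊆ algImage X χ r' := by
  rintro p ⟨w, ⟨u, ⟨hu, hur⟩, rfl⟩, hp⟩
  exact ⟨χ u, ⟨u, ⟨hu, hur.trans hrr⟩, rfl⟩, hp⟩

lemma invMap_algImage (h : IsAlgIso X X' χ) {r : Set (Ω × Ω)} (hr : IsRelationOf X r) :
    algImage X' (invMap X χ) (algImage X χ r) = r := by
  apply Set.Subset.antisymm
  · rintro p ⟨w, ⟨u', ⟨hu', hur'⟩, rfl⟩, hp⟩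
    obtain ⟨u, hu, hur, rfl⟩ := (class_subset_algImage_iff h hu').mp hur'
    rw [invMap_map h hu] at hp
    exact hur hp
  · intro p hp
    obtain ⟨u, hu, hpu⟩ := X.cover p
    have hur : u ⊆ r := hr u hu ⟨p, hpu, hp⟩
    refine ⟨invMap X χ (χ u), ⟨χ u, ⟨map_mem h hu, subset_algImage hu hur⟩, rfl⟩, ?_⟩
    rw [invMap_map h hu]
    exact hpu

/-- transport of `cnum` for relations -/
lemma cnum_eq_rel (h : IsAlgIso X X' χ) {r s : Set (Ω × Ω)} (hr : IsRelationOf X r)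
    (hs : IsRelationOf X s) {t : Set (Ω × Ω)} (ht : t ∈ X.S) {p : Ω × Ω} {q : Ω' × Ω'}
    (hp : p ∈ t) (hq : q ∈ χ t) :
    cnum r s p = cnum (algImage X χ r) (algImage X χ s) q := by
  classical
  have him : ∀ rr : Set (Ω × Ω), IsRelationOf X rr →
      classesIn X' (algImage X χ rr) = (classesIn X rr).image χ := by
    intro rr hrr
    ext w
    rw [mem_classesIn, Finset.mem_image]
    constructor
    · rintro ⟨hw, hsub⟩
      obtain ⟨u, hu, hur, rfl⟩ := (class_subset_algImage_iff h hw).mp hsub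
      exact ⟨u, mem_classesIn.mpr ⟨hu, hur⟩, rfl⟩
    · rintro ⟨u, hu, rfl⟩
      obtain ⟨hu1, hu2⟩ := mem_classesIn.mp hu
      exact ⟨map_mem h hu1, subset_algImage hu1 hu2⟩
  rw [cnum_decomp hr hs p, cnum_decomp (isRel_algImage h r) (isRel_algImage h s) q,
    him r hr, him s hs]
  rw [Finset.sum_image (fun u hu v hv huv =>
    h.bijOn.injOn (classesIn_subset hu) (classesIn_subset hv) huv)]
  apply Finset.sum_congr rfl
  intro u hu
  rw [Finset.sum_image (fun x hx y hy hxy =>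
    h.bijOn.injOn (classesIn_subset hx) (classesIn_subset hy) hxy)]
  apply Finset.sum_congr rfl
  intro v hv
  exact h.cnum_eq u (classesIn_subset hu) v (classesIn_subset hv) t ht p hp q hq

/-- transport of composition -/
lemma algImage_comp (h : IsAlgIso X X' χ) {r s : Set (Ω × Ω)} (hr : IsRelationOf X r)
    (hs : IsRelationOf X s) :
    algImage X χ (comp r s) = comp (algImage X χ r) (algImage X χ s) := by
  apply Set.Subset.antisymm
  · rintro p' ⟨w, ⟨w0, ⟨hw0, hsub⟩, rfl⟩, hp'⟩
    obtain ⟨p, hp⟩ := X.nonemp w0 hw0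
    have hcomp : 0 < cnum r s p := (cnum_pos' X).mpr (hsub hp)
    have := cnum_eq_rel h hr hs hw0 hp hp'
    rw [this] at hcomp
    rw [cnum_pos' X'] at hcomp
    obtain ⟨γ, h1, h2⟩ := hcomp
    exact ⟨γ, h1, h2⟩
  · rintro ⟨x', y'⟩ ⟨γ', h1, h2⟩
    obtain ⟨w', hw', hpw'⟩ := X'.cover (x', y')
    have hw0 : invMap X χ w' ∈ X.S := invMap_mem h hw'
    obtain ⟨p, hp⟩ := X.nonemp _ hw0
    have hcomp : 0 < cnum (algImage X χ r) (algImage X χ s) (x', y') :=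
      (cnum_pos' X').mpr ⟨γ', h1, h2⟩
    have heq := cnum_eq_rel h hr hs hw0 hp (by rw [map_invMap h hw']; exact hpw')
    rw [← heq] at hcomp
    rw [cnum_pos' X] at hcomp
    have hmem : p ∈ comp r s := hcomp.imp (fun γ hγ => hγ)
    have hsub : invMap X χ w' ⊆ comp r s :=
      isRel_comp hr hs _ hw0 ⟨p, hp, hmem⟩
    have : w' ⊆ algImage X χ (comp r s) := by
      have := subset_algImage (χ := χ) hw0 hsub
      rwa [map_invMap h hw'] at this
    exact this hpw'

/-- transport of converse -/
lemma algImage_conv (h : IsAlgIso X X' χ) {r : Set (Ω × Ω)} (hr : IsRelationOf X r) :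
    algImage X χ (conv r) = conv (algImage X χ r) := by
  apply Set.Subset.antisymm
  · rintro p' ⟨w, ⟨u, ⟨hu, hsub⟩, rfl⟩, hp'⟩
    have h1 : conv u ⊆ r := by
      intro q hq
      exact conv_subset_conv hsub hq
    have hcu : conv u ∈ X.S := X.conv u hu
    have h2 : χ u = conv (χ (conv u)) := map_conv h hcu
    rw [h2] at hp'
    have : χ (conv u) ⊆ algImage X χ r := subset_algImage hcu h1
    exact this hp'
  · rintro ⟨x', y'⟩ hp'
    obtain ⟨w, ⟨u, ⟨hu, hsub⟩, rfl⟩, hyx⟩ := hp'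
    have : (x', y') ∈ χ (conv u) := by
      rw [map_conv h hu]
      exact hyx
    have hcu : conv u ∈ X.S := X.conv u hu
    exact subset_algImage hcu (conv_subset_conv hsub) this

/-- transport of out-degrees -/
lemma outdeg_transport (h : IsAlgIso X X' χ) {r : Set (Ω × Ω)} (hr : IsRelationOf X r)
    {f : Set (Ω × Ω)} (hf : f ∈ X.S) {x : Ω} {x' : Ω'}
    (hx : (x, x) ∈ f) (hx' : (x', x') ∈ χ f) :
    (pointSet r x).ncard = (pointSet (algImage X χ r) x').ncard := by
  have e1 : pointSet r x = {γ : Ω | ((x, x).1, γ) ∈ r ∧ (γ, (x, x).2) ∈ conv r} := by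
    ext γ; exact ⟨fun hγ => ⟨hγ, hγ⟩, fun hγ => hγ.1⟩
  have e2 : pointSet (algImage X χ r) x' =
      {γ : Ω' | ((x', x').1, γ) ∈ algImage X χ r ∧ (γ, (x', x').2) ∈ conv (algImage X χ r)} := by
    ext γ; exact ⟨fun hγ => ⟨hγ, hγ⟩, fun hγ => hγ.1⟩
  rw [e1, e2]
  have := cnum_eq_rel h hr (isRel_conv hr) hf hx hx'
  rw [algImage_conv h hr] at this
  exact this

end AlgIso


/-! ### Existence of point extensions (meet of coherent configurations) -/

section Meet

/-- the discrete coherent configuration -/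
def discreteCfg (hΩ : Finite Ω) : CohCfg Ω where
  S := {s | ∃ p : Ω × Ω, s = {p}}
  finite := hΩ
  cover p := ⟨{p}, ⟨p, rfl⟩, rfl⟩
  disj := by
    rintro s ⟨p, rfl⟩ t ⟨q, rfl⟩ hne
    have : p ≠ q := fun h => hne (by rw [h])
    rw [Set.inter_comm]
    exact Set.singleton_inter_eq_empty.mpr (fun h => this (Set.mem_singleton_iff.mp h).symm)
  nonemp := by rintro s ⟨p, rfl⟩; exact ⟨p, rfl⟩
  diag := by
    rintro s ⟨p, rfl⟩ ⟨q, hq, hd⟩ q' hq'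
    rw [Set.mem_singleton_iff] at hq hq'
    rw [hq', ← hq]
    exact hd
  conv := by
    rintro s ⟨p, rfl⟩
    exact ⟨(p.2, p.1), by ext q; simp [Prod.ext_iff]; tauto⟩
  inum := by
    rintro r hr s hs t ⟨p₃, rfl⟩ p hp q hq
    rw [Set.mem_singleton_iff] at hp hq
    rw [hp, hq]

variable (Y : CohCfg Ω) (α : Ω)

/-- configurations above `Y` having `1_α` as a class -/
def extFam : Set (CohCfg Ω) := {V | le Y V ∧ ({(α, α)} : Set (Ω × Ω)) ∈ V.S}

/-- common relations of all members of the family -/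
def extRels : Set (Set (Ω × Ω)) := {s | ∀ V ∈ extFam Y α, IsRelationOf V s}

/-- the class of `p` in the meet -/
def extCl (p : Ω × Ω) : Set (Ω × Ω) := ⋂₀ {s | s ∈ extRels Y α ∧ p ∈ s}

variable {Y α}

lemma extRels_sInter {A : Set (Set (Ω × Ω))} (h : ∀ s ∈ A, s ∈ extRels Y α) (hA : A.Nonempty) :
    ⋂₀ A ∈ extRels Y α := by
  intro V hV t ht ⟨p, hp1, hp2⟩
  intro q hq
  rw [Set.mem_sInter]
  intro s hs
  exact h s hs V hV t ht ⟨p, hp1, hp2 s hs⟩ hq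

lemma extRels_compl {s : Set (Ω × Ω)} (h : s ∈ extRels Y α) : sᶜ ∈ extRels Y α :=
  fun V hV => isRel_compl (X := V) (h V hV)

lemma extRels_conv {s : Set (Ω × Ω)} (h : s ∈ extRels Y α) : conv s ∈ extRels Y α :=
  fun V hV => isRel_conv (X := V) (h V hV)

lemma extRels_diag : {p : Ω × Ω | p.1 = p.2} ∈ extRels Y α :=
  fun V _ => isRel_diag (X := V)

lemma extRels_classY {s : Set (Ω × Ω)} (hs : s ∈ Y.S) : s ∈ extRels Y α :=
  fun V hV => hV.1 s hs

lemma extRels_pt : ({(α, α)} : Set (Ω × Ω)) ∈ extRels Y α :=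
  fun V hV => isRel_mem (X := V) hV.2

lemma extRels_level {r s : Set (Ω × Ω)} (hr : r ∈ extRels Y α) (hs : s ∈ extRels Y α)
    (k : ℕ) : {x : Ω × Ω | cnum r s x = k} ∈ extRels Y α := by
  intro V hV t ht ⟨p, hp1, hp2⟩ q hq
  have : cnum r s q = cnum r s p := cnum_congr (X := V) (hr V hV) (hs V hV) ht hq hp1
  rw [Set.mem_setOf_eq, this]
  exact hp2

lemma mem_extCl_self (p : Ω × Ω) : p ∈ extCl Y α p := by
  rw [extCl, Set.mem_sInter]
  rintro s ⟨_, hp⟩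
  exact hp

lemma extCl_mem_rels (p : Ω × Ω) : extCl Y α p ∈ extRels Y α := by
  apply extRels_sInter
  · rintro s ⟨h1, _⟩; exact h1
  · exact ⟨Set.univ, fun V _ => isRel_univ (X := V), Set.mem_univ p⟩

lemma extCl_min {p : Ω × Ω} {s : Set (Ω × Ω)} (hs : s ∈ extRels Y α) (hp : p ∈ s) :
    extCl Y α p ⊆ s := Set.sInter_subset_of_mem ⟨hs, hp⟩

lemma extCl_eq {p q : Ω × Ω} (h : q ∈ extCl Y α p) : extCl Y α q = extCl Y α p := by
  apply Set.Subset.antisymm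
  · exact extCl_min (extCl_mem_rels p) h
  · -- p ∈ extCl q:  for any s ∈ extRels with q ∈ s, p ∈ s
    apply Set.subset_sInter
    rintro s ⟨hs, hqs⟩
    by_cases hps : p ∈ s
    · exact extCl_min hs hps
    · exfalso
      have : q ∈ sᶜ := extCl_min (extRels_compl hs) hps h
      exact this hqs

/-- the point extension of `Y` at `α` (a meet of all admissible refinements) -/
def pExt : CohCfg Ω where
  S := {s | ∃ p : Ω × Ω, s = extCl Y α p}
  finite := Y.finite
  cover p := ⟨extCl Y α p, ⟨p, rfl⟩, mem_extCl_self p⟩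
  disj := by
    rintro s ⟨p, rfl⟩ t ⟨q, rfl⟩ hne
    rw [Set.eq_empty_iff_forall_notMem]
    rintro x ⟨hx1, hx2⟩
    exact hne ((extCl_eq hx1).symm.trans (extCl_eq hx2))
  nonemp := by rintro s ⟨p, rfl⟩; exact ⟨p, mem_extCl_self p⟩
  diag := by
    rintro s ⟨p, rfl⟩ ⟨q, hq, hd⟩ q' hq'
    rw [← extCl_eq hq] at hq'
    have : extCl Y α q ⊆ {x : Ω × Ω | x.1 = x.2} := extCl_min extRels_diag hd
    exact this hq'
  conv := by
    rintro s ⟨p, rfl⟩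
    refine ⟨(p.2, p.1), ?_⟩
    have h1 : extCl Y α (p.2, p.1) ⊆ conv (extCl Y α p) :=
      extCl_min (extRels_conv (extCl_mem_rels p)) (mem_extCl_self p)
    have h2 : extCl Y α p ⊆ conv (extCl Y α (p.2, p.1)) :=
      extCl_min (extRels_conv (extCl_mem_rels (p.2, p.1))) (mem_extCl_self (p.2, p.1))
    apply Set.Subset.antisymm
    · intro q hq
      exact h2 hq
    · intro q hq
      exact h1 hq
  inum := by
    rintro r ⟨pr, rfl⟩ s ⟨ps, rfl⟩ t ⟨pt, rfl⟩ p hp q hq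
    have hlvl : {x : Ω × Ω | cnum (extCl Y α pr) (extCl Y α ps) x
        = cnum (extCl Y α pr) (extCl Y α ps) p} ∈ extRels Y α :=
      extRels_level (extCl_mem_rels pr) (extCl_mem_rels ps) _
    have h1 : extCl Y α pt = extCl Y α p := (extCl_eq hp).symm
    have h2 : extCl Y α p ⊆ _ := extCl_min hlvl (by simp)
    have := h2 (h1 ▸ hq)
    exact this.symm

lemma le_pExt : le Y (pExt (Y := Y) (α := α)) := by
  intro s hs t ht hne
  obtain ⟨p, rfl⟩ := ht
  obtain ⟨x, hx1, hx2⟩ := hne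
  have : extCl Y α x = extCl Y α p := extCl_eq hx1
  rw [← this]
  exact extCl_min (extRels_classY hs) hx2

lemma pt_mem_pExt : ({(α, α)} : Set (Ω × Ω)) ∈ (pExt (Y := Y) (α := α)).S := by
  refine ⟨(α, α), ?_⟩
  apply Set.Subset.antisymm
  · intro x hx
    rw [Set.mem_singleton_iff] at hx
    rw [hx]
    exact mem_extCl_self (α, α)
  · exact extCl_min extRels_pt rfl

lemma pExt_le {V : CohCfg Ω} (hV : V ∈ extFam Y α) : le (pExt (Y := Y) (α := α)) V := by
  intro s hs
  obtain ⟨p, rfl⟩ := hs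
  exact extCl_mem_rels p V hV

lemma isPointExt_pExt : IsPointExt Y α (pExt (Y := Y) (α := α)) :=
  ⟨le_pExt, pt_mem_pExt, fun V h1 h2 => pExt_le ⟨h1, h2⟩⟩

end Meet


/-! ### Transport of fusions along algebraic isomorphisms -/

section Fusion

variable {W : CohCfg Ω} {W' : CohCfg Ω'} {χ : Set (Ω × Ω) → Set (Ω' × Ω')}
variable {Z : CohCfg Ω}

lemma fusion_img_disj (h : IsAlgIso W W' χ) (hZ : le Z W) {z₁ z₂ : Set (Ω × Ω)}
    (h₁ : z₁ ∈ Z.S) (h₂ : z₂ ∈ Z.S) {p' : Ω' × Ω'}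
    (hp₁ : p' ∈ algImage W χ z₁) (hp₂ : p' ∈ algImage W χ z₂) : z₁ = z₂ := by
  obtain ⟨w₁, ⟨u₁, ⟨hu₁, hu₁z⟩, rfl⟩, hpw₁⟩ := hp₁
  obtain ⟨w₂, ⟨u₂, ⟨hu₂, hu₂z⟩, rfl⟩, hpw₂⟩ := hp₂
  have : χ u₁ = χ u₂ := class_eq (map_mem h hu₁) (map_mem h hu₂) hpw₁ hpw₂
  have hu : u₁ = u₂ := h.bijOn.injOn hu₁ hu₂ this
  obtain ⟨q, hq⟩ := W.nonemp u₁ hu₁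
  exact class_eq h₁ h₂ (hu₁z hq) (hu₂z (hu ▸ hq))

/-- the image fusion configuration -/
def fusionImg (h : IsAlgIso W W' χ) (hZ : le Z W) : CohCfg Ω' where
  S := {t | ∃ z ∈ Z.S, t = algImage W χ z}
  finite := W'.finite
  cover := by
    intro p'
    obtain ⟨w', hw', hpw'⟩ := W'.cover p'
    have hu : invMap W χ w' ∈ W.S := invMap_mem h hw'
    obtain ⟨q, hq⟩ := W.nonemp _ hu
    obtain ⟨z, hz, hqz⟩ := Z.cover q
    have huz : invMap W χ w' ⊆ z := hZ z hz _ hu ⟨q, hq, hqz⟩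
    refine ⟨algImage W χ z, ⟨z, hz, rfl⟩, ?_⟩
    have : χ (invMap W χ w') ⊆ algImage W χ z := subset_algImage hu huz
    rw [map_invMap h hw'] at this
    exact this hpw'
  disj := by
    rintro s ⟨z₁, h₁, rfl⟩ t ⟨z₂, h₂, rfl⟩ hne
    rw [Set.eq_empty_iff_forall_notMem]
    rintro p' ⟨hp₁, hp₂⟩
    exact hne (by rw [fusion_img_disj h hZ h₁ h₂ hp₁ hp₂])
  nonemp := by
    rintro s ⟨z, hz, rfl⟩
    obtain ⟨p, hp⟩ := Z.nonemp z hz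
    obtain ⟨u, hu, hpu⟩ := W.cover p
    have huz : u ⊆ z := hZ z hz u hu ⟨p, hpu, hp⟩
    obtain ⟨q', hq'⟩ := W'.nonemp (χ u) (map_mem h hu)
    exact ⟨q', subset_algImage hu huz hq'⟩
  diag := by
    rintro s ⟨z, hz, rfl⟩ ⟨p', hp', hd⟩ q' hq'
    -- the class of p' inside the image is diagonal, pull back
    obtain ⟨w₁, ⟨u₁, ⟨hu₁, hu₁z⟩, rfl⟩, hpw₁⟩ := hp'
    have hw₁d : ∀ x ∈ χ u₁, x.1 = x.2 := W'.diag _ (map_mem h hu₁) ⟨p', hpw₁, hd⟩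
    have hu₁d : ∀ x ∈ u₁, x.1 = x.2 := by
      have := map_diag (invMap_isAlgIso h) (map_mem h hu₁) hw₁d
      rwa [invMap_map h hu₁] at this
    obtain ⟨q, hq⟩ := W.nonemp u₁ hu₁
    have hzd : ∀ x ∈ z, x.1 = x.2 := Z.diag z hz ⟨q, hu₁z hq, hu₁d q hq⟩
    obtain ⟨w₂, ⟨u₂, ⟨hu₂, hu₂z⟩, rfl⟩, hqw₂⟩ := hq'
    exact map_diag h hu₂ (fun x hx => hzd x (hu₂z hx)) q' hqw₂
  conv := by
    rintro s ⟨z, hz, rfl⟩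
    refine ⟨conv z, Z.conv z hz, ?_⟩
    have : algImage W χ (conv z) = conv (algImage W χ z) :=
      algImage_conv h (fun t ht hne => hZ z hz t ht hne)
    rw [this]
    rfl
  inum := by
    rintro r ⟨zr, hzr, rfl⟩ s ⟨zs, hzs, rfl⟩ t ⟨zt, hzt, rfl⟩ p' hp' q' hq'
    obtain ⟨w₁, ⟨u₁, ⟨hu₁, hu₁z⟩, rfl⟩, hpw₁⟩ := hp'
    obtain ⟨w₂, ⟨u₂, ⟨hu₂, hu₂z⟩, rfl⟩, hqw₂⟩ := hq'
    obtain ⟨p, hp⟩ := W.nonemp u₁ hu₁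
    obtain ⟨q, hq⟩ := W.nonemp u₂ hu₂
    have e1 := cnum_eq_rel h (hZ zr hzr) (hZ zs hzs) hu₁ hp hpw₁
    have e2 := cnum_eq_rel h (hZ zr hzr) (hZ zs hzs) hu₂ hq hqw₂
    have e3 : cnum zr zs p = cnum zr zs q :=
      Z.inum zr hzr zs hzs zt hzt p (hu₁z hp) q (hu₂z hq)
    have := e1.symm.trans (e3.trans e2)
    exact this

lemma fusionImg_isAlgIso (h : IsAlgIso W W' χ) (hZ : le Z W) :
    IsAlgIso Z (fusionImg h hZ) (algImage W χ) := by
  constructor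
  · constructor
    · intro z hz
      exact ⟨z, hz, rfl⟩
    constructor
    · intro z₁ h₁ z₂ h₂ heq
      obtain ⟨p, hp⟩ := Z.nonemp z₁ h₁
      obtain ⟨u, hu, hpu⟩ := W.cover p
      have huz : u ⊆ z₁ := hZ z₁ h₁ u hu ⟨p, hpu, hp⟩
      obtain ⟨q', hq'⟩ := W'.nonemp (χ u) (map_mem h hu)
      have m1 : q' ∈ algImage W χ z₁ := subset_algImage hu huz hq'
      have m2 : q' ∈ algImage W χ z₂ := heq ▸ m1
      exact fusion_img_disj h hZ h₁ h₂ m1 m2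
    · rintro t ⟨z, hz, rfl⟩
      exact ⟨z, hz, rfl⟩
  · intro r hr s hs t ht p hp q' hq'
    obtain ⟨w, ⟨v, ⟨hv, hvt⟩, rfl⟩, hq'w⟩ := hq'
    obtain ⟨qv, hqv⟩ := W.nonemp v hv
    have e1 : cnum r s p = cnum r s qv := Z.inum r hr s hs t ht p hp qv (hvt hqv)
    have e2 := cnum_eq_rel h (hZ r hr) (hZ s hs) hv hqv hq'w
    exact e1.trans e2

lemma fusionImg_le (h : IsAlgIso W W' χ) (hZ : le Z W) : le (fusionImg h hZ) W' := by
  rintro s ⟨z, hz, rfl⟩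
  exact isRel_algImage h z

/-- the fusion map agrees with `algImage W χ` on relations of `Z` -/
lemma fusion_algImage (h : IsAlgIso W W' χ) (hZ : le Z W) {s : Set (Ω × Ω)}
    (hs : IsRelationOf Z s) :
    algImage Z (algImage W χ) s = algImage W χ s := by
  apply Set.Subset.antisymm
  · rintro p' ⟨t, ⟨z, ⟨hz, hzs⟩, rfl⟩, hp'⟩
    obtain ⟨w, ⟨u, ⟨hu, huz⟩, rfl⟩, hp'w⟩ := hp'
    exact subset_algImage hu (huz.trans hzs) hp'w
  · rintro p' ⟨w, ⟨u, ⟨hu, hus⟩, rfl⟩, hp'w⟩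
    obtain ⟨q, hq⟩ := W.nonemp u hu
    obtain ⟨z, hz, hqz⟩ := Z.cover q
    have huz : u ⊆ z := hZ z hz u hu ⟨q, hq, hqz⟩
    have hzs : z ⊆ s := hs z hz ⟨q, hqz, hus hq⟩
    exact ⟨algImage W χ z, ⟨z, ⟨hz, hzs⟩, rfl⟩, subset_algImage hu huz hp'w⟩

end Fusion


/-! ### Sections: setup and the quotient counting formula -/

section Sect

/-- data making `Δ/e` a workable section of `W` -/
structure SecSetup (W : CohCfg Ω) (Δ : Set Ω) (e : Set (Ω × Ω)) : Prop where
  erel : IsRelationOf W e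
  erefl : ∀ a : Ω, (a, a) ∈ e
  esymm : ∀ a b : Ω, (a, b) ∈ e → (b, a) ∈ e
  etrans : ∀ a b c : Ω, (a, b) ∈ e → (b, c) ∈ e → (a, c) ∈ e
  sat : ∀ a ∈ Δ, ∀ b : Ω, (a, b) ∈ e → b ∈ Δ
  Drel : IsRelationOf W (Δ ×ˢ Δ)

variable {W : CohCfg Ω} {Δ : Set Ω} {e : Set (Ω × Ω)}

/-- the restriction of `e` to `Δ` -/
def hatE (Δ : Set Ω) (e : Set (Ω × Ω)) : Set (Ω × Ω) := e ∩ Δ ×ˢ Δ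

lemma mem_hatE {x y : Ω} : (x, y) ∈ hatE Δ e ↔ (x, y) ∈ e ∧ x ∈ Δ ∧ y ∈ Δ := by
  simp [hatE]

namespace SecSetup

variable (ss : SecSetup W Δ e)

include ss

lemma hatE_rel : IsRelationOf W (hatE Δ e) := isRel_inter ss.erel ss.Drel

lemma hatE_symm {x y : Ω} (h : (x, y) ∈ hatE Δ e) : (y, x) ∈ hatE Δ e := by
  rw [mem_hatE] at h ⊢
  exact ⟨ss.esymm _ _ h.1, h.2.2, h.2.1⟩

lemma hatE_trans {x y z : Ω} (h1 : (x, y) ∈ hatE Δ e) (h2 : (y, z) ∈ hatE Δ e) :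
    (x, z) ∈ hatE Δ e := by
  rw [mem_hatE] at h1 h2 ⊢
  exact ⟨ss.etrans _ _ _ h1.1 h2.1, h1.2.1, h2.2.2⟩

lemma hatE_refl {x : Ω} (h : x ∈ Δ) : (x, x) ∈ hatE Δ e :=
  mem_hatE.mpr ⟨ss.erefl x, h, h⟩

lemma conv_hatE : conv (hatE Δ e) = hatE Δ e := by
  ext ⟨x, y⟩
  exact ⟨fun h => ss.hatE_symm h, fun h => ss.hatE_symm h⟩

lemma sec_subset (Γ : Sec Δ e) : Γ.1 ⊆ Δ := by
  obtain ⟨a, ha, hΓ⟩ := Γ.2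
  rw [hΓ]
  intro b hb
  exact ss.sat a ha b hb

lemma sec_eClass {Γ : Sec Δ e} {a : Ω} (ha : a ∈ Γ.1) : Γ.1 = eClass e a := by
  obtain ⟨c, hc, hΓ⟩ := Γ.2
  rw [hΓ] at ha ⊢
  ext x
  constructor
  · intro hx
    exact ss.etrans _ _ _ (ss.esymm _ _ ha) hx
  · intro hx
    exact ss.etrans _ _ _ ha hx

lemma sec_rel {Γ : Sec Δ e} {a b : Ω} (ha : a ∈ Γ.1) (hb : b ∈ Γ.1) : (a, b) ∈ e := by
  rw [ss.sec_eClass ha] at hb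
  exact hb

lemma sec_mem_of_rel {Γ : Sec Δ e} {a b : Ω} (ha : a ∈ Γ.1) (he : (a, b) ∈ e) : b ∈ Γ.1 := by
  rw [ss.sec_eClass ha]
  exact he

lemma eClass_congr {x y : Ω} (h : (x, y) ∈ e) : eClass e x = eClass e y := by
  ext z
  exact ⟨fun hz => ss.etrans _ _ _ (ss.esymm _ _ h) hz, fun hz => ss.etrans _ _ _ h hz⟩

/-- build a point of the section -/
def mkSec (a : Ω) (ha : a ∈ Δ) : Sec Δ e := ⟨eClass e a, a, ha, rfl⟩

lemma mem_mkSec {a : Ω} (ha : a ∈ Δ) : a ∈ (mkSec (Δ := Δ) (e := e) a ha).1 := ss.erefl a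

/-! kernel of the projection to quotient classes -/

omit ss in
lemma secRel_mono {u v : Set (Ω × Ω)} (huv : u ⊆ v) : secRel Δ e u ⊆ secRel Δ e v := by
  rintro ⟨Γ, Γ'⟩ ⟨a, ha, b, hb, hab⟩
  exact ⟨a, ha, b, hb, huv hab⟩

lemma secRel_subset_of_ker {u v : Set (Ω × Ω)}
    (h : u ⊆ comp (hatE Δ e) (comp v (hatE Δ e))) :
    secRel Δ e u ⊆ secRel Δ e v := by
  rintro ⟨Γ, Γ'⟩ ⟨a, ha, b, hb, hab⟩
  obtain ⟨m, hm1, n, hn1, hn2⟩ := h hab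
  have hm : m ∈ Γ.1 := ss.sec_mem_of_rel ha (mem_hatE.mp hm1).1
  have hn : n ∈ Γ'.1 := ss.sec_mem_of_rel hb (ss.esymm _ _ (mem_hatE.mp hn2).1)
  exact ⟨m, hm, n, hn, hn1⟩

lemma secRel_subset_of_ker_full {u v : Set (Ω × Ω)}
    (h : u ⊆ comp e (comp v e)) : secRel Δ e u ⊆ secRel Δ e v := by
  rintro ⟨Γ, Γ'⟩ ⟨a, ha, b, hb, hab⟩
  obtain ⟨m, hm1, n, hn1, hn2⟩ := h hab
  exact ⟨m, ss.sec_mem_of_rel ha hm1, n, ss.sec_mem_of_rel hb (ss.esymm _ _ hn2), hn1⟩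

lemma ker_of_secRel_meet {u v : Set (Ω × Ω)} (hu : u ∈ W.S) (hv : IsRelationOf W v)
    (hmeet : (secRel Δ e u ∩ secRel Δ e v).Nonempty) :
    u ⊆ comp (hatE Δ e) (comp v (hatE Δ e)) := by
  obtain ⟨⟨Γ, Γ'⟩, ⟨a, ha, b, hb, hab⟩, ⟨a₂, ha₂, b₂, hb₂, hab₂⟩⟩ := hmeet
  have haΔ : a ∈ Δ := ss.sec_subset Γ ha
  have ha₂Δ : a₂ ∈ Δ := ss.sec_subset Γ ha₂
  have hbΔ : b ∈ Δ := ss.sec_subset Γ' hb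
  have hb₂Δ : b₂ ∈ Δ := ss.sec_subset Γ' hb₂
  have h1 : (a, a₂) ∈ hatE Δ e := mem_hatE.mpr ⟨ss.sec_rel ha ha₂, haΔ, ha₂Δ⟩
  have h2 : (b₂, b) ∈ hatE Δ e := mem_hatE.mpr ⟨ss.sec_rel hb₂ hb, hb₂Δ, hbΔ⟩
  have hmem : (a, b) ∈ comp (hatE Δ e) (comp v (hatE Δ e)) := ⟨a₂, h1, b₂, hab₂, h2⟩
  have hrel : IsRelationOf W (comp (hatE Δ e) (comp v (hatE Δ e))) :=
    isRel_comp ss.hatE_rel (isRel_comp hv ss.hatE_rel)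
  exact hrel u hu ⟨(a, b), hab, hmem⟩

lemma secRel_eq_of_meet {u v : Set (Ω × Ω)} (hu : u ∈ W.S) (hv : v ∈ W.S)
    (hmeet : (secRel Δ e u ∩ secRel Δ e v).Nonempty) :
    secRel Δ e u = secRel Δ e v := by
  apply Set.Subset.antisymm
  · exact ss.secRel_subset_of_ker (ss.ker_of_secRel_meet hu (isRel_mem hv) hmeet)
  · apply ss.secRel_subset_of_ker
    apply ss.ker_of_secRel_meet hv (isRel_mem hu)
    rwa [Set.inter_comm]

lemma secRel_nonempty_iff {u : Set (Ω × Ω)} :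
    (secRel Δ e u).Nonempty ↔ (u ∩ Δ ×ˢ Δ).Nonempty := by
  constructor
  · rintro ⟨⟨Γ, Γ'⟩, a, ha, b, hb, hab⟩
    exact ⟨(a, b), hab, Set.mk_mem_prod (ss.sec_subset Γ ha) (ss.sec_subset Γ' hb)⟩
  · rintro ⟨⟨a, b⟩, hab, hmem⟩
    rw [Set.mem_prod] at hmem
    exact ⟨(mkSec a hmem.1, mkSec b hmem.2), a, ss.mem_mkSec hmem.1, b, ss.mem_mkSec hmem.2, hab⟩

lemma class_subset_D {u : Set (Ω × Ω)} (hu : u ∈ W.S) (hne : (u ∩ Δ ×ˢ Δ).Nonempty) :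
    u ⊆ Δ ×ˢ Δ := ss.Drel u hu hne

/-! the quotient counting set -/

/-- points counted by a quotient intersection number -/
def USet (r₀ s₀ : Set (Ω × Ω)) (a b : Ω) : Set Ω :=
  {γ : Ω | (a, γ) ∈ comp (hatE Δ e) (comp r₀ (hatE Δ e)) ∧
    (γ, b) ∈ comp (hatE Δ e) (comp s₀ (hatE Δ e))}

omit ss in
lemma USet_subset {r₀ s₀ : Set (Ω × Ω)} {a b : Ω} : USet (Δ := Δ) (e := e) r₀ s₀ a b ⊆ Δ := by
  rintro γ ⟨⟨m, _, n, _, hn⟩, _⟩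
  exact (mem_hatE.mp hn).2.2

lemma USet_sat {r₀ s₀ : Set (Ω × Ω)} {a b : Ω} {γ γ₂ : Ω}
    (hγ : γ ∈ USet (Δ := Δ) (e := e) r₀ s₀ a b) (h2 : (γ, γ₂) ∈ e) :
    γ₂ ∈ USet (Δ := Δ) (e := e) r₀ s₀ a b := by
  obtain ⟨⟨m, hm, n, hn1, hn2⟩, ⟨m', hm', n', hn1', hn2'⟩⟩ := hγ
  have hγΔ : γ ∈ Δ := (mem_hatE.mp hn2).2.2
  have hγ₂Δ : γ₂ ∈ Δ := ss.sat γ hγΔ γ₂ h2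
  constructor
  · refine ⟨m, hm, n, hn1, ?_⟩
    rw [mem_hatE] at hn2 ⊢
    exact ⟨ss.etrans _ _ _ hn2.1 h2, hn2.2.1, hγ₂Δ⟩
  · refine ⟨m', ?_, n', hn1', hn2'⟩
    rw [mem_hatE] at hm' ⊢
    exact ⟨ss.etrans _ _ _ (ss.esymm _ _ h2) hm'.1, hγ₂Δ, hm'.2.2⟩

lemma USet_refl {r₀ s₀ : Set (Ω × Ω)} {a b : Ω} {γ : Ω}
    (hγ : γ ∈ USet (Δ := Δ) (e := e) r₀ s₀ a b) : (γ, γ) ∈ hatE Δ e :=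
  ss.hatE_refl (USet_subset hγ)

/-- the quotient counting formula -/
lemma quotient_count {r₀ s₀ : Set (Ω × Ω)} {Γ Γ' : Sec Δ e} {a b : Ω}
    (ha : a ∈ Γ.1) (hb : b ∈ Γ'.1) :
    cnum (secRel Δ e r₀) (secRel Δ e s₀) (Γ, Γ') =
    {C : Set Ω | ∃ γ ∈ USet (Δ := Δ) (e := e) r₀ s₀ a b, C = eClass e γ}.ncard := by
  haveI := W.finite
  have haΔ : a ∈ Δ := ss.sec_subset Γ ha
  have hbΔ : b ∈ Δ := ss.sec_subset Γ' hb
  have key : ∀ Γ'' : Sec Δ e,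
      (((Γ, Γ').1, Γ'') ∈ secRel Δ e r₀ ∧ (Γ'', (Γ, Γ').2) ∈ secRel Δ e s₀) ↔
      ∃ γ ∈ USet (Δ := Δ) (e := e) r₀ s₀ a b, Γ''.1 = eClass e γ := by
    intro Γ''
    constructor
    · rintro ⟨⟨x, hx, y, hy, hxy⟩, ⟨y₂, hy₂, z, hz, hy₂z⟩⟩
      refine ⟨y, ⟨⟨x, ?_, y, hxy, ?_⟩, ⟨y₂, ?_, z, hy₂z, ?_⟩⟩, ss.sec_eClass hy⟩
      · exact mem_hatE.mpr ⟨ss.sec_rel ha hx, haΔ, ss.sec_subset Γ hx⟩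
      · exact ss.hatE_refl (ss.sec_subset Γ'' hy)
      · exact mem_hatE.mpr ⟨ss.sec_rel hy hy₂, ss.sec_subset Γ'' hy, ss.sec_subset Γ'' hy₂⟩
      · exact mem_hatE.mpr ⟨ss.sec_rel hz hb, ss.sec_subset Γ' hz, hbΔ⟩
    · rintro ⟨γ, ⟨⟨m, hm, n, hn1, hn2⟩, ⟨m', hm', n', hn1', hn2'⟩⟩, hΓ''⟩
      have hγΓ'' : γ ∈ Γ''.1 := by rw [hΓ'']; exact ss.erefl γ
      constructor
      · refine ⟨m, ss.sec_mem_of_rel ha (mem_hatE.mp hm).1, n, ?_, hn1⟩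
        have : (γ, n) ∈ e := ss.esymm _ _ (mem_hatE.mp hn2).1
        exact ss.sec_mem_of_rel hγΓ'' this
      · refine ⟨m', ss.sec_mem_of_rel hγΓ'' (mem_hatE.mp hm').1, n', ?_, hn1'⟩
        exact ss.sec_mem_of_rel hb (ss.esymm _ _ (mem_hatE.mp hn2').1)
  have e1 : {Γ'' : Sec Δ e | ((Γ, Γ').1, Γ'') ∈ secRel Δ e r₀ ∧
      (Γ'', (Γ, Γ').2) ∈ secRel Δ e s₀} =
      {Γ'' : Sec Δ e | ∃ γ ∈ USet (Δ := Δ) (e := e) r₀ s₀ a b, Γ''.1 = eClass e γ} := by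
    ext Γ''; exact key Γ''
  rw [cnum, e1]
  rw [← Set.ncard_image_of_injective _ (Subtype.val_injective)]
  congr 1
  ext C
  constructor
  · rintro ⟨Γ'', ⟨γ, hγ, hΓ''⟩, rfl⟩
    exact ⟨γ, hγ, hΓ''⟩
  · rintro ⟨γ, hγ, rfl⟩
    have hγΔ : γ ∈ Δ := USet_subset hγ
    exact ⟨mkSec γ hγΔ, ⟨γ, hγ, rfl⟩, rfl⟩

end SecSetup

end Sect


/-! ### identity algebraic isomorphism -/

section IdIso

lemma isAlgIso_id (X : CohCfg Ω) : IsAlgIso X X id :=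
  ⟨⟨fun _ h => h, fun _ _ _ _ h => h, fun s hs => ⟨s, hs, rfl⟩⟩,
    fun _ _ _ _ t ht p hp q hq => cnum_congr_class ‹_› ‹_› ht hp hq⟩

lemma algImage_id (X : CohCfg Ω) {r : Set (Ω × Ω)} (hr : IsRelationOf X r) :
    algImage X id r = r := by
  rw [algImage, Set.image_id]
  exact (rel_eq_sUnion hr).symm

end IdIso

/-! ### Transport of class counts (cross-configuration induction) -/

section CIL

variable {W : CohCfg Ω} {W' : CohCfg Ω'} {χ : Set (Ω × Ω) → Set (Ω' × Ω')}

lemma class_count_transport (h : IsAlgIso W W' χ) {eh : Set (Ω × Ω)}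
    (hehr : IsRelationOf W eh)
    (hsym : ∀ x y : Ω, (x, y) ∈ eh → (y, x) ∈ eh)
    (htrans : ∀ x y z : Ω, (x, y) ∈ eh → (y, z) ∈ eh → (x, z) ∈ eh) :
    ∀ (n : ℕ) (U : Set Ω) (U' : Set Ω'), U.ncard = n →
      (∀ x ∈ U, (x, x) ∈ eh) →
      (∀ x ∈ U, ∀ y, (x, y) ∈ eh → y ∈ U) →
      (∀ x ∈ U', (x, x) ∈ algImage W χ eh) →
      (∀ x ∈ U', ∀ y, (x, y) ∈ algImage W χ eh → y ∈ U') →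
      (∀ g ∈ W.S, (∀ p ∈ g, p.1 = p.2) →
        (U ∩ {x | (x, x) ∈ g}).ncard = (U' ∩ {x | (x, x) ∈ χ g}).ncard) →
      {C : Set Ω | ∃ x ∈ U, C = {y | (x, y) ∈ eh}}.ncard =
        {C : Set Ω' | ∃ x ∈ U', C = {y | (x, y) ∈ algImage W χ eh}}.ncard := by
  haveI hfinΩ := W.finite
  haveI hfinΩ' := W'.finite
  set ehp := algImage W χ eh with hehpdef
  have hehprel : IsRelationOf W' ehp := isRel_algImage h eh
  have hsym' : ∀ x y : Ω', (x, y) ∈ ehp → (y, x) ∈ ehp := by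
    have hc : conv eh = eh := by
      ext ⟨x, y⟩; exact ⟨fun hc => hsym y x hc, fun hc => hsym x y hc⟩
    have : conv ehp = ehp := by
      rw [hehpdef, ← algImage_conv h hehr, hc]
    intro x y hxy
    rw [← this]
    exact hxy
  have htrans' : ∀ x y z : Ω', (x, y) ∈ ehp → (y, z) ∈ ehp → (x, z) ∈ ehp := by
    have hc : comp eh eh ⊆ eh := by
      rintro ⟨x, z⟩ ⟨y, h1, h2⟩; exact htrans x y z h1 h2
    have hsub : comp ehp ehp ⊆ ehp := by
      rw [hehpdef, ← algImage_comp h hehr hehr]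
      exact algImage_mono hc
    intro x y z h1 h2
    exact hsub ⟨y, h1, h2⟩
  have cls_eq : ∀ x y : Ω, (x, y) ∈ eh → {z | (x, z) ∈ eh} = {z | (y, z) ∈ eh} := by
    intro x y hxy
    ext z
    exact ⟨fun hz => htrans _ _ _ (hsym _ _ hxy) hz, fun hz => htrans _ _ _ hxy hz⟩
  have cls_eq' : ∀ x y : Ω', (x, y) ∈ ehp → {z | (x, z) ∈ ehp} = {z | (y, z) ∈ ehp} := by
    intro x y hxy
    ext z
    exact ⟨fun hz => htrans' _ _ _ (hsym' _ _ hxy) hz, fun hz => htrans' _ _ _ hxy hz⟩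
  intro n
  induction n using Nat.strong_induction_on with
  | _ n ih =>
  intro U U' hn hU1 hU2 hU1' hU2' hfib
  rcases Set.eq_empty_or_nonempty U with hUe | ⟨γ, hγU⟩
  · -- U empty forces U' empty
    have hU'e : U' = ∅ := by
      rw [Set.eq_empty_iff_forall_notMem]
      intro x' hx'
      obtain ⟨d₀, hd₀, hxd₀⟩ := W'.cover (x', x')
      have hd₀diag : ∀ p ∈ d₀, p.1 = p.2 := W'.diag d₀ hd₀ ⟨(x', x'), hxd₀, rfl⟩
      have hg : invMap W χ d₀ ∈ W.S := invMap_mem h hd₀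
      have hgdiag : ∀ p ∈ invMap W χ d₀, p.1 = p.2 := by
        have := map_diag (invMap_isAlgIso h) hd₀ hd₀diag
        exact this
      have hfg := hfib _ hg hgdiag
      rw [hUe, Set.empty_inter, Set.ncard_empty] at hfg
      have hempty : (U' ∩ {x | (x, x) ∈ χ (invMap W χ d₀)}) = ∅ :=
        (Set.ncard_eq_zero (Set.toFinite _)).mp hfg.symm
      rw [Set.eq_empty_iff_forall_notMem] at hempty
      apply hempty x'
      refine ⟨hx', ?_⟩
      rw [map_invMap h hd₀]
      exact hxd₀
    rw [hUe, hU'e]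
    have h1 : {C : Set Ω | ∃ x ∈ (∅ : Set Ω), C = {y | (x, y) ∈ eh}} = ∅ := by
      rw [Set.eq_empty_iff_forall_notMem]; rintro C ⟨x, hx, _⟩; exact hx
    have h2 : {C : Set Ω' | ∃ x ∈ (∅ : Set Ω'), C = {y | (x, y) ∈ ehp}} = ∅ := by
      rw [Set.eq_empty_iff_forall_notMem]; rintro C ⟨x, hx, _⟩; exact hx
    rw [h1, h2, Set.ncard_empty, Set.ncard_empty]
  · -- pick a class on each side and recurse
    set C := {y | (γ, y) ∈ eh} with hCdef
    obtain ⟨f, hf, hγf⟩ := W.cover (γ, γ)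
    have hfdiag : ∀ p ∈ f, p.1 = p.2 := W.diag f hf ⟨(γ, γ), hγf, rfl⟩
    have hff := hfib f hf hfdiag
    have hpos : 0 < (U ∩ {x | (x, x) ∈ f}).ncard := by
      rw [Set.ncard_pos (Set.toFinite _)]
      exact ⟨γ, hγU, hγf⟩
    rw [hff] at hpos
    rw [Set.ncard_pos (Set.toFinite _)] at hpos
    obtain ⟨γ', hγ'U', hγ'f⟩ := hpos
    set C' := {y | (γ', y) ∈ ehp} with hC'def
    -- matching fiber profiles of the two classes
    have profile : ∀ g ∈ W.S, (∀ p ∈ g, p.1 = p.2) →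
        (C ∩ {x | (x, x) ∈ g}).ncard = (C' ∩ {x | (x, x) ∈ χ g}).ncard := by
      intro g hg hgdiag
      have hχgdiag : ∀ p ∈ χ g, p.1 = p.2 := map_diag h hg hgdiag
      have e1 : C ∩ {x | (x, x) ∈ g} = pointSet (comp eh g) γ := by
        ext y
        constructor
        · rintro ⟨hy1, hy2⟩; exact ⟨y, hy1, hy2⟩
        · rintro ⟨δ, h1, h2⟩
          have : δ = y := hgdiag (δ, y) h2
          subst this
          exact ⟨h1, h2⟩
      have e2 : C' ∩ {x | (x, x) ∈ χ g} = pointSet (comp ehp (χ g)) γ' := by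
        ext y
        constructor
        · rintro ⟨hy1, hy2⟩; exact ⟨y, hy1, hy2⟩
        · rintro ⟨δ, h1, h2⟩
          have : δ = y := hχgdiag (δ, y) h2
          subst this
          exact ⟨h1, h2⟩
      rw [e1, e2]
      have e3 := outdeg_transport h (isRel_comp hehr (isRel_mem hg)) hf hγf hγ'f
      have e4 : algImage W χ (comp eh g) = comp ehp (χ g) := by
        rw [algImage_comp h hehr (isRel_mem hg), algImage_class h hg]
      rw [e4] at e3
      exact e3
    set U₀ := U \ C with hU₀def
    set U₀' := U' \ C' with hU₀'def
    have hCU : C ⊆ U := fun y hy => hU2 γ hγU y hy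
    have hC'U' : C' ⊆ U' := fun y hy => hU2' γ' hγ'U' y hy
    have hγC : γ ∈ C := hU1 γ hγU
    have hγ'C' : γ' ∈ C' := hU1' γ' hγ'U'
    have hU₀1 : ∀ x ∈ U₀, (x, x) ∈ eh := fun x hx => hU1 x hx.1
    have hU₀2 : ∀ x ∈ U₀, ∀ y, (x, y) ∈ eh → y ∈ U₀ := by
      rintro x ⟨hxU, hxC⟩ y hxy
      refine ⟨hU2 x hxU y hxy, ?_⟩
      intro hyC
      exact hxC (htrans _ _ _ hyC (hsym _ _ hxy))
    have hU₀1' : ∀ x ∈ U₀', (x, x) ∈ ehp := fun x hx => hU1' x hx.1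
    have hU₀2' : ∀ x ∈ U₀', ∀ y, (x, y) ∈ ehp → y ∈ U₀' := by
      rintro x ⟨hxU, hxC⟩ y hxy
      refine ⟨hU2' x hxU y hxy, ?_⟩
      intro hyC
      exact hxC (htrans' _ _ _ hyC (hsym' _ _ hxy))
    have hfib₀ : ∀ g ∈ W.S, (∀ p ∈ g, p.1 = p.2) →
        (U₀ ∩ {x | (x, x) ∈ g}).ncard = (U₀' ∩ {x | (x, x) ∈ χ g}).ncard := by
      intro g hg hgdiag
      have e1 : U₀ ∩ {x | (x, x) ∈ g} = (U ∩ {x | (x, x) ∈ g}) \ (C ∩ {x | (x, x) ∈ g}) := by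
        ext x
        simp only [hU₀def, Set.mem_inter_iff, Set.mem_diff, Set.mem_setOf_eq]
        tauto
      have e2 : U₀' ∩ {x | (x, x) ∈ χ g} =
          (U' ∩ {x | (x, x) ∈ χ g}) \ (C' ∩ {x | (x, x) ∈ χ g}) := by
        ext x
        simp only [hU₀'def, Set.mem_inter_iff, Set.mem_diff, Set.mem_setOf_eq]
        tauto
      rw [e1, e2,
        Set.ncard_diff (Set.inter_subset_inter_left _ hCU) (Set.toFinite _),
        Set.ncard_diff (Set.inter_subset_inter_left _ hC'U') (Set.toFinite _),
        hfib g hg hgdiag, profile g hg hgdiag]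
    have hlt : U₀.ncard < n := by
      rw [← hn]
      apply Set.ncard_lt_ncard _ (Set.toFinite _)
      constructor
      · exact Set.diff_subset
      · intro hsub
        exact (hsub hγU).2 hγC
    have hrec := ih U₀.ncard hlt U₀ U₀' rfl hU₀1 hU₀2 hU₀1' hU₀2' hfib₀
    -- assemble via insert
    have eL : {C₀ : Set Ω | ∃ x ∈ U, C₀ = {y | (x, y) ∈ eh}} =
        insert C {C₀ : Set Ω | ∃ x ∈ U₀, C₀ = {y | (x, y) ∈ eh}} := by
      ext C₀
      constructor
      · rintro ⟨x, hx, rfl⟩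
        by_cases hxC : x ∈ C
        · left
          exact (cls_eq γ x hxC).symm
        · right
          exact ⟨x, ⟨hx, hxC⟩, rfl⟩
      · rintro (rfl | ⟨x, hx, rfl⟩)
        · exact ⟨γ, hγU, rfl⟩
        · exact ⟨x, hx.1, rfl⟩
    have eL' : {C₀ : Set Ω' | ∃ x ∈ U', C₀ = {y | (x, y) ∈ ehp}} =
        insert C' {C₀ : Set Ω' | ∃ x ∈ U₀', C₀ = {y | (x, y) ∈ ehp}} := by
      ext C₀
      constructor
      · rintro ⟨x, hx, rfl⟩
        by_cases hxC : x ∈ C'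
        · left
          exact (cls_eq' γ' x hxC).symm
        · right
          exact ⟨x, ⟨hx, hxC⟩, rfl⟩
      · rintro (rfl | ⟨x, hx, rfl⟩)
        · exact ⟨γ', hγ'U', rfl⟩
        · exact ⟨x, hx.1, rfl⟩
    have hnmem : C ∉ {C₀ : Set Ω | ∃ x ∈ U₀, C₀ = {y | (x, y) ∈ eh}} := by
      rintro ⟨x, hx, heq⟩
      have : x ∈ C := by
        rw [heq]
        exact hU1 x hx.1
      exact hx.2 this
    have hnmem' : C' ∉ {C₀ : Set Ω' | ∃ x ∈ U₀', C₀ = {y | (x, y) ∈ ehp}} := by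
      rintro ⟨x, hx, heq⟩
      have : x ∈ C' := by
        rw [heq]
        exact hU1' x hx.1
      exact hx.2 this
    rw [eL, eL', Set.ncard_insert_of_notMem hnmem (Set.toFinite _),
      Set.ncard_insert_of_notMem hnmem' (Set.toFinite _), hrec]

end CIL


/-! ### The quotient configuration on a section -/

section Quot

variable {W : CohCfg Ω} {Δ : Set Ω} {e : Set (Ω × Ω)}

/-- specialization of the class-count transport to a single configuration -/
lemma class_count_id {W : CohCfg Ω} {eh : Set (Ω × Ω)} (hehr : IsRelationOf W eh)
    (hsym : ∀ x y : Ω, (x, y) ∈ eh → (y, x) ∈ eh)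
    (htrans : ∀ x y z : Ω, (x, y) ∈ eh → (y, z) ∈ eh → (x, z) ∈ eh)
    (U U' : Set Ω)
    (hU1 : ∀ x ∈ U, (x, x) ∈ eh) (hU2 : ∀ x ∈ U, ∀ y, (x, y) ∈ eh → y ∈ U)
    (hU1' : ∀ x ∈ U', (x, x) ∈ eh) (hU2' : ∀ x ∈ U', ∀ y, (x, y) ∈ eh → y ∈ U')
    (hfib : ∀ g ∈ W.S, (∀ p ∈ g, p.1 = p.2) →
      (U ∩ {x | (x, x) ∈ g}).ncard = (U' ∩ {x | (x, x) ∈ g}).ncard) :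
    {C : Set Ω | ∃ x ∈ U, C = {y | (x, y) ∈ eh}}.ncard =
      {C : Set Ω | ∃ x ∈ U', C = {y | (x, y) ∈ eh}}.ncard := by
  have hid : algImage W id eh = eh := algImage_id W hehr
  have := class_count_transport (isAlgIso_id W) hehr hsym htrans U.ncard U U' rfl
    hU1 hU2 (by rw [hid]; exact hU1') (by rw [hid]; exact hU2')
    (by intro g hg hd; exact hfib g hg hd)
  rwa [hid] at this

namespace SecSetup

variable (ss : SecSetup W Δ e)

include ss

lemma eClass_eq_hatE {γ : Ω} (hγ : γ ∈ Δ) :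
    eClass e γ = {y | (γ, y) ∈ hatE Δ e} := by
  ext y
  constructor
  · intro hy
    exact mem_hatE.mpr ⟨hy, hγ, ss.sat γ hγ y hy⟩
  · intro hy
    exact (mem_hatE.mp hy).1

lemma count_eClass_eq {U : Set Ω} (hU : U ⊆ Δ) :
    {C : Set Ω | ∃ γ ∈ U, C = eClass e γ} =
    {C : Set Ω | ∃ γ ∈ U, C = {y | (γ, y) ∈ hatE Δ e}} := by
  ext C
  constructor
  · rintro ⟨γ, hγ, rfl⟩
    exact ⟨γ, hγ, ss.eClass_eq_hatE (hU hγ)⟩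
  · rintro ⟨γ, hγ, rfl⟩
    exact ⟨γ, hγ, (ss.eClass_eq_hatE (hU hγ)).symm⟩

omit ss in
/-- fiber counts of the counting set are intersection numbers -/
lemma USet_fib_ncard {r₀ s₀ : Set (Ω × Ω)} {a b : Ω} {g : Set (Ω × Ω)}
    (hgdiag : ∀ p ∈ g, p.1 = p.2) :
    (USet (Δ := Δ) (e := e) r₀ s₀ a b ∩ {x | (x, x) ∈ g}).ncard =
    cnum (comp (comp (hatE Δ e) (comp r₀ (hatE Δ e))) g)
      (comp (hatE Δ e) (comp s₀ (hatE Δ e))) (a, b) := by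
  rw [cnum]
  congr 1
  ext γ
  constructor
  · rintro ⟨⟨h1, h2⟩, h3⟩
    exact ⟨⟨γ, h1, h3⟩, h2⟩
  · rintro ⟨⟨δ, h1, h2⟩, h3⟩
    have : δ = γ := hgdiag (δ, γ) h2
    subst this
    exact ⟨⟨h1, h3⟩, h2⟩

/-- well-definedness of quotient intersection numbers -/
lemma quot_inum {r₀ s₀ t₀ : Set (Ω × Ω)} (hr₀ : r₀ ∈ W.S) (hs₀ : s₀ ∈ W.S) (ht₀ : t₀ ∈ W.S)
    {p q : Sec Δ e × Sec Δ e} (hp : p ∈ secRel Δ e t₀) (hq : q ∈ secRel Δ e t₀) :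
    cnum (secRel Δ e r₀) (secRel Δ e s₀) p = cnum (secRel Δ e r₀) (secRel Δ e s₀) q := by
  obtain ⟨Γ₁, Γ₂⟩ := p
  obtain ⟨Λ₁, Λ₂⟩ := q
  obtain ⟨a, ha, b, hb, hab⟩ := hp
  obtain ⟨a₂, ha₂, b₂, hb₂, hab₂⟩ := hq
  rw [ss.quotient_count ha hb, ss.quotient_count ha₂ hb₂]
  rw [ss.count_eClass_eq (USet_subset), ss.count_eClass_eq (USet_subset)]
  apply class_count_id ss.hatE_rel (fun x y hxy => ss.hatE_symm hxy)
    (fun x y z h1 h2 => ss.hatE_trans h1 h2)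
  · exact fun x hx => USet_refl ss hx
  · exact fun x hx y hxy => USet_sat ss hx (mem_hatE.mp hxy).1
  · exact fun x hx => USet_refl ss hx
  · exact fun x hx y hxy => USet_sat ss hx (mem_hatE.mp hxy).1
  · intro g hg hgdiag
    rw [USet_fib_ncard hgdiag, USet_fib_ncard hgdiag]
    have hP : IsRelationOf W (comp (comp (hatE Δ e) (comp r₀ (hatE Δ e))) g) :=
      isRel_comp (isRel_comp ss.hatE_rel (isRel_comp (isRel_mem hr₀) ss.hatE_rel)) (isRel_mem hg)
    have hQ : IsRelationOf W (comp (hatE Δ e) (comp s₀ (hatE Δ e))) :=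
      isRel_comp ss.hatE_rel (isRel_comp (isRel_mem hs₀) ss.hatE_rel)
    exact cnum_congr hP hQ ht₀ hab hab₂

/-- the quotient coherent configuration on the section `Δ/e` -/
def quotCfg : CohCfg (Sec Δ e) where
  S := {t | ∃ u ∈ W.S, t = secRel Δ e u ∧ t.Nonempty}
  finite := by
    haveI := W.finite
    exact Subtype.finite
  cover := by
    rintro ⟨Γ, Γ'⟩
    obtain ⟨a₀, ha₀, hΓ⟩ := Γ.2
    obtain ⟨b₀, hb₀, hΓ'⟩ := Γ'.2
    have haΓ : a₀ ∈ Γ.1 := by rw [hΓ]; exact ss.erefl a₀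
    have hbΓ' : b₀ ∈ Γ'.1 := by rw [hΓ']; exact ss.erefl b₀
    obtain ⟨t₀, ht₀, hab⟩ := W.cover (a₀, b₀)
    have hmem : (Γ, Γ') ∈ secRel Δ e t₀ := ⟨a₀, haΓ, b₀, hbΓ', hab⟩
    exact ⟨secRel Δ e t₀, ⟨t₀, ht₀, rfl, ⟨(Γ, Γ'), hmem⟩⟩, hmem⟩
  disj := by
    rintro s ⟨u, hu, rfl, _⟩ t ⟨v, hv, rfl, _⟩ hne
    rw [Set.eq_empty_iff_forall_notMem]
    intro p hp
    exact hne (ss.secRel_eq_of_meet hu hv ⟨p, hp⟩)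
  nonemp := by rintro s ⟨u, hu, rfl, hne⟩; exact hne
  diag := by
    rintro s ⟨u, hu, rfl, hne⟩ ⟨⟨Γ, Γ'⟩, hmem, (hd : Γ = Γ')⟩ ⟨Λ, Λ'⟩ hmem'
    subst hd
    obtain ⟨a, ha, b, hb, hab⟩ := hmem
    have hue : u ⊆ e := ss.erel u hu ⟨(a, b), hab, ss.sec_rel ha hb⟩
    obtain ⟨x, hx, y, hy, hxy⟩ := hmem'
    have hyΛ : y ∈ Λ.1 := ss.sec_mem_of_rel hx (hue hxy)
    have : Λ.1 = Λ'.1 := by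
      rw [ss.sec_eClass hyΛ, ss.sec_eClass hy]
    exact Subtype.ext this
  conv := by
    rintro s ⟨u, hu, rfl, hne⟩
    refine ⟨conv u, conv_class hu, ?_, ?_⟩
    · ext ⟨Γ, Γ'⟩
      constructor
      · rintro (h : (Γ', Γ) ∈ secRel Δ e u)
        obtain ⟨a, ha, b, hb, hab⟩ := h
        exact ⟨b, hb, a, ha, hab⟩
      · rintro ⟨a, ha, b, hb, hab⟩
        exact ⟨b, hb, a, ha, hab⟩
    · obtain ⟨⟨Γ, Γ'⟩, a, ha, b, hb, hab⟩ := hne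
      exact ⟨(Γ', Γ), a, ha, b, hb, hab⟩
  inum := by
    rintro r ⟨r₀, hr₀, rfl, _⟩ s ⟨s₀, hs₀, rfl, _⟩ t ⟨t₀, ht₀, rfl, _⟩ p hp q hq
    exact ss.quot_inum hr₀ hs₀ ht₀ hp hq

lemma quotCfg_S {t : Set (Sec Δ e × Sec Δ e)} :
    t ∈ (quotCfg ss).S ↔ ∃ u ∈ W.S, t = secRel Δ e u ∧ t.Nonempty := Iff.rfl

end SecSetup

end Quot


/-! ### Algebraic isomorphisms preserve the number of points -/

section CardTransport

variable {X : CohCfg Ω} {X' : CohCfg Ω'} {χ : Set (Ω × Ω) → Set (Ω' × Ω')}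

lemma ncard_sUnion_classes : ∀ T : Finset (Set (Ω × Ω)), (↑T ⊆ X.S) →
    (⋃₀ (T : Set (Set (Ω × Ω)))).ncard = ∑ u ∈ T, u.ncard := by
  haveI := X.finite
  classical
  intro T
  induction T using Finset.induction_on with
  | empty => intro _; simp
  | @insert a T ha ih =>
    intro hsub
    have haS : a ∈ X.S := hsub (Finset.mem_insert_self a T)
    have hTS : ↑T ⊆ X.S := fun u hu => hsub (by exact_mod_cast Finset.mem_insert_of_mem hu)
    have hd : Disjoint a (⋃₀ (T : Set (Set (Ω × Ω)))) := by
      rw [Set.disjoint_sUnion_right]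
      intro u hu
      rw [Set.disjoint_iff_inter_eq_empty]
      apply X.disj a haS u (hTS hu)
      rintro rfl
      exact ha hu
    rw [Finset.coe_insert, Set.sUnion_insert,
      Set.ncard_union_eq hd (Set.toFinite _) (Set.toFinite _),
      Finset.sum_insert ha, ih hTS]

lemma algImage_univ (h : IsAlgIso X X' χ) :
    algImage X χ (Set.univ : Set (Ω × Ω)) = Set.univ := by
  apply Set.eq_univ_of_forall
  intro p'
  obtain ⟨w', hw', hpw'⟩ := X'.cover p'
  have : χ (invMap X χ w') ⊆ algImage X χ Set.univ :=
    subset_algImage (invMap_mem h hw') (Set.subset_univ _)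
  rw [map_invMap h hw'] at this
  exact this hpw'

/-- sizes of diagonal classes are preserved -/
lemma map_diag_ncard (h : IsAlgIso X X' χ) {g : Set (Ω × Ω)} (hg : g ∈ X.S)
    (hd : ∀ p ∈ g, p.1 = p.2) : g.ncard = (χ g).ncard := by
  haveI := X.finite
  haveI := X'.finite
  have hd' : ∀ p ∈ χ g, p.1 = p.2 := map_diag h hg hd
  set sg := {x : Ω | (x, x) ∈ g} with hsg
  set sg' := {x : Ω' | (x, x) ∈ χ g} with hsg'
  have e1 : g = (fun x : Ω => (x, x)) '' sg := by
    ext ⟨a, b⟩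
    constructor
    · intro hab
      have : a = b := hd (a, b) hab
      subst this
      exact ⟨a, hab, rfl⟩
    · rintro ⟨x, hx, heq⟩
      rw [← heq]
      exact hx
  have e1' : χ g = (fun x : Ω' => (x, x)) '' sg' := by
    ext ⟨a, b⟩
    constructor
    · intro hab
      have : a = b := hd' (a, b) hab
      subst this
      exact ⟨a, hab, rfl⟩
    · rintro ⟨x, hx, heq⟩
      rw [← heq]
      exact hx
  have inj1 : Function.Injective (fun x : Ω => (x, x)) := fun x y hxy => congrArg Prod.fst hxy
  have inj1' : Function.Injective (fun x : Ω' => (x, x)) := fun x y hxy => congrArg Prod.fst hxy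
  rw [e1', e1, Set.ncard_image_of_injective _ inj1, Set.ncard_image_of_injective _ inj1']
  -- now compare |sg| and |sg'|
  have hsq : sg ×ˢ sg = comp g (comp Set.univ g) := by
    ext ⟨x, y⟩
    constructor
    · rintro ⟨hx, hy⟩
      exact ⟨x, hx, y, Set.mem_univ _, hy⟩
    · rintro ⟨δ, h1, ε, _, h2⟩
      have hδ : x = δ := hd (x, δ) h1
      have hε : ε = y := hd (ε, y) h2
      subst hδ
      subst hε
      exact ⟨h1, h2⟩
  have hsq' : sg' ×ˢ sg' = comp (χ g) (comp Set.univ (χ g)) := by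
    ext ⟨x, y⟩
    constructor
    · rintro ⟨hx, hy⟩
      exact ⟨x, hx, y, Set.mem_univ _, hy⟩
    · rintro ⟨δ, h1, ε, _, h2⟩
      have hδ : x = δ := hd' (x, δ) h1
      have hε : ε = y := hd' (ε, y) h2
      subst hδ
      subst hε
      exact ⟨h1, h2⟩
  obtain ⟨⟨x₀, y₀⟩, hx₀⟩ := X.nonemp g hg
  have : x₀ = y₀ := hd _ hx₀
  subst this
  obtain ⟨⟨x₀', y₀'⟩, hx₀'⟩ := X'.nonemp (χ g) (map_mem h hg)
  have : x₀' = y₀' := hd' _ hx₀'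
  subst this
  have hrel : IsRelationOf X (sg ×ˢ sg) := by
    rw [hsq]
    exact isRel_comp (isRel_mem hg) (isRel_comp isRel_univ (isRel_mem hg))
  have e2 : pointSet (sg ×ˢ sg) x₀ = sg := by
    ext y
    constructor
    · rintro ⟨_, hy⟩; exact hy
    · intro hy; exact ⟨hx₀, hy⟩
  have e2' : pointSet (sg' ×ˢ sg') x₀' = sg' := by
    ext y
    constructor
    · rintro ⟨_, hy⟩; exact hy
    · intro hy; exact ⟨hx₀', hy⟩
  have e3 := outdeg_transport h hrel hg hx₀ hx₀'
  have e4 : algImage X χ (sg ×ˢ sg) = sg' ×ˢ sg' := by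
    rw [hsq, hsq', algImage_comp h (isRel_mem hg) (isRel_comp isRel_univ (isRel_mem hg)),
      algImage_comp h isRel_univ (isRel_mem hg), algImage_univ h,
      algImage_class h hg]
  rw [e2, e4, e2'] at e3
  exact e3

/-- algebraic isomorphisms preserve the number of points -/
lemma card_transport (h : IsAlgIso X X' χ) : Nat.card Ω = Nat.card Ω' := by
  haveI := X.finite
  haveI := X'.finite
  classical
  have e1 : ∀ {T : Type u} [Finite T],
      Nat.card T = {p : T × T | p.1 = p.2}.ncard := by
    intro T _
    have : {p : T × T | p.1 = p.2} = (fun x : T => (x, x)) '' Set.univ := by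
      ext ⟨a, b⟩
      constructor
      · intro hab
        exact ⟨a, Set.mem_univ _, by simp_all⟩
      · rintro ⟨x, _, heq⟩
        rw [← heq]
        rfl
    rw [this, Set.ncard_image_of_injective _ (fun x y hxy => congrArg Prod.fst hxy),
      Set.ncard_univ]
  rw [e1, e1]
  have hrel : IsRelationOf X {p : Ω × Ω | p.1 = p.2} := isRel_diag
  have hrel' : IsRelationOf X' {p : Ω' × Ω' | p.1 = p.2} := isRel_diag
  rw [← sUnion_classesIn hrel, ← sUnion_classesIn hrel',
    ncard_sUnion_classes _ classesIn_subset, ncard_sUnion_classes _ classesIn_subset]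
  have him : classesIn X' {p : Ω' × Ω' | p.1 = p.2} =
      (classesIn X {p : Ω × Ω | p.1 = p.2}).image χ := by
    ext w
    rw [mem_classesIn, Finset.mem_image]
    constructor
    · rintro ⟨hw, hsub⟩
      refine ⟨invMap X χ w, mem_classesIn.mpr ⟨invMap_mem h hw, ?_⟩, map_invMap h hw⟩
      intro p hp
      apply map_diag (invMap_isAlgIso h) hw (fun q hq => hsub hq)
      exact hp
    · rintro ⟨g, hg, rfl⟩
      obtain ⟨hg1, hg2⟩ := mem_classesIn.mp hg
      exact ⟨map_mem h hg1, fun p hp => map_diag h hg1 (fun q hq => hg2 hq) p hp⟩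
  rw [him, Finset.sum_image (fun x hx y hy hxy =>
    h.bijOn.injOn (classesIn_subset hx) (classesIn_subset hy) hxy)]
  apply Finset.sum_congr rfl
  intro g hg
  exact map_diag_ncard h (classesIn_subset hg) (fun p hp => (mem_classesIn.mp hg).2 hp)

end CardTransport


/-! ### The bridge between the two quotient configurations -/

section Bridge

variable {X : CohCfg Ω} {X' : CohCfg Ω'} {φ : Set (Ω × Ω) → Set (Ω' × Ω')}
variable {Δ : Set Ω} {e : Set (Ω × Ω)} {Δ' : Set Ω'} {e' : Set (Ω' × Ω')}
variable {Y : CohCfg (Sec Δ e)} {Y' : CohCfg (Sec Δ' e')}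
variable {ψ : Set (Sec Δ e × Sec Δ e) → Set (Sec Δ' e' × Sec Δ' e')}
variable {W : CohCfg Ω} {W' : CohCfg Ω'} {χ : Set (Ω × Ω) → Set (Ω' × Ω')}
variable {α : Ω} {α' : Ω'} {d' : Set (Ω' × Ω')}

/-- relations transfer down refinements -/
lemma rel_le_transfer {A B : CohCfg Ω} (hAB : le A B) {r : Set (Ω × Ω)}
    (hr : IsRelationOf A r) : IsRelationOf B r := by
  intro t ht ⟨p, hp1, hp2⟩
  obtain ⟨s, hs, hps⟩ := A.cover p
  have h1 : t ⊆ s := hAB s hs t ht ⟨p, hp1, hps⟩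
  have h2 : s ⊆ r := hr s hs ⟨p, hps, hp2⟩
  exact h1.trans h2

/-- all the data available after taking a point extension -/
structure BData (X : CohCfg Ω) (X' : CohCfg Ω') (φ : Set (Ω × Ω) → Set (Ω' × Ω'))
    (Δ : Set Ω) (e : Set (Ω × Ω)) (Δ' : Set Ω') (e' : Set (Ω' × Ω'))
    (Y : CohCfg (Sec Δ e)) (Y' : CohCfg (Sec Δ' e'))
    (ψ : Set (Sec Δ e × Sec Δ e) → Set (Sec Δ' e' × Sec Δ' e'))
    (W : CohCfg Ω) (W' : CohCfg Ω') (χ : Set (Ω × Ω) → Set (Ω' × Ω'))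
    (α : Ω) (α' : Ω') (d' : Set (Ω' × Ω')) : Prop where
  hφ : IsAlgIso X X' φ
  hψ : IsAlgIso Y Y' ψ
  hYS : Y.S = {t | ∃ s ∈ X.S, t = secRel Δ e s ∧ t.Nonempty}
  hY'S : Y'.S = {t | ∃ s ∈ X'.S, t = secRel Δ' e' s ∧ t.Nonempty}
  hind : ∀ s ∈ X.S, (secRel Δ e s).Nonempty → ψ (secRel Δ e s) = secRel Δ' e' (φ s)
  hχ : IsAlgIso W W' χ
  hXW : le X W
  hX'W' : le X' W'
  ss : SecSetup W Δ e
  ss' : SecSetup W' Δ' e'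
  hext : ∀ s ∈ X.S, algImage W χ s = φ s
  heX : IsRelationOf X e
  heX' : IsRelationOf X' e'
  hd'rel : IsRelationOf X' d'
  hd'symm : ∀ p ∈ d', (p.2, p.1) ∈ d'
  hd'trans : ∀ a b c : Ω', (a, b) ∈ d' → (b, c) ∈ d' → (a, c) ∈ d'
  hΔ'cls : ∀ x' : Ω', x' ∈ Δ' ↔ (α', x') ∈ d'
  hαΔ : α ∈ Δ
  hα'Δ' : α' ∈ Δ'
  hαW : ({(α, α)} : Set (Ω × Ω)) ∈ W.S
  hχα : χ ({(α, α)} : Set (Ω × Ω)) = ({(α', α')} : Set (Ω' × Ω'))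

/-- the image of `Δ` inside `Δ'` -/
def Del1 (W : CohCfg Ω) (χ : Set (Ω × Ω) → Set (Ω' × Ω')) (Δ : Set Ω) (α' : Ω') :
    Set Ω' := {y' | (α', y') ∈ algImage W χ (Δ ×ˢ Δ)}

namespace BData

variable (bd : BData X X' φ Δ e Δ' e' Y Y' ψ W W' χ α α' d')

include bd

lemma D1sq : algImage W χ (Δ ×ˢ Δ) = Del1 W χ Δ α' ×ˢ Del1 W χ Δ α' := by
  set A : Set (Ω × Ω) := comp {(α, α)} (Δ ×ˢ Δ) with hA
  have haeq : A = {p : Ω × Ω | p.1 = α ∧ p.2 ∈ Δ} := by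
    ext ⟨x, y⟩
    constructor
    · rintro ⟨γ, h1, h2⟩
      rw [Set.mem_singleton_iff, Prod.ext_iff] at h1
      have hx : x = α := h1.1
      have hγ : γ = α := h1.2
      rw [hγ] at h2
      exact ⟨hx, h2.2⟩
    · rintro ⟨hx1, hy⟩
      refine ⟨α, ?_, bd.hαΔ, hy⟩
      simp only [Set.mem_singleton_iff, Prod.ext_iff]
      exact ⟨hx1, by trivial⟩
  have hDeq : Δ ×ˢ Δ = comp (conv A) A := by
    ext ⟨x, y⟩
    constructor
    · rintro ⟨hx, hy⟩
      exact ⟨α, by rw [haeq]; exact ⟨rfl, hx⟩, by rw [haeq]; exact ⟨rfl, hy⟩⟩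
    · rintro ⟨γ, h1, h2⟩
      rw [haeq] at h1 h2
      exact ⟨h1.2, h2.2⟩
  have hArel : IsRelationOf W A := isRel_comp (isRel_mem bd.hαW) bd.ss.Drel
  have hA' : algImage W χ A = comp {(α', α')} (algImage W χ (Δ ×ˢ Δ)) := by
    rw [hA, algImage_comp bd.hχ (isRel_mem bd.hαW) bd.ss.Drel,
      algImage_class bd.hχ bd.hαW, bd.hχα]
  have ha'eq : algImage W χ A = {p : Ω' × Ω' | p.1 = α' ∧ p.2 ∈ Del1 W χ Δ α'} := by
    rw [hA']
    ext ⟨x, y⟩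
    constructor
    · rintro ⟨γ, h1, h2⟩
      rw [Set.mem_singleton_iff, Prod.ext_iff] at h1
      have hx : x = α' := h1.1
      have hγ : γ = α' := h1.2
      rw [hγ] at h2
      exact ⟨hx, h2⟩
    · rintro ⟨hx1, hy⟩
      refine ⟨α', ?_, hy⟩
      simp only [Set.mem_singleton_iff, Prod.ext_iff]
      exact ⟨hx1, by trivial⟩
  calc algImage W χ (Δ ×ˢ Δ) = algImage W χ (comp (conv A) A) := by rw [← hDeq]
    _ = comp (conv (algImage W χ A)) (algImage W χ A) := by
        rw [algImage_comp bd.hχ (isRel_conv hArel) hArel, algImage_conv bd.hχ hArel]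
    _ = Del1 W χ Δ α' ×ˢ Del1 W χ Δ α' := by
        ext ⟨x, y⟩
        constructor
        · rintro ⟨γ, h1, h2⟩
          rw [ha'eq] at h2
          have h1' : (γ, x) ∈ algImage W χ A := h1
          rw [ha'eq] at h1'
          exact ⟨h1'.2, h2.2⟩
        · rintro ⟨hx, hy⟩
          refine ⟨α', ?_, ?_⟩
          · show (α', x) ∈ algImage W χ A
            rw [ha'eq]; exact ⟨rfl, hx⟩
          · rw [ha'eq]; exact ⟨rfl, hy⟩

lemma alpha'_mem : α' ∈ Del1 W χ Δ α' := by
  have h1 : ({(α, α)} : Set (Ω × Ω)) ⊆ Δ ×ˢ Δ := by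
    apply bd.ss.Drel _ bd.hαW
    exact ⟨(α, α), rfl, bd.hαΔ, bd.hαΔ⟩
  have h2 : χ {(α, α)} ⊆ algImage W χ (Δ ×ˢ Δ) := subset_algImage bd.hαW h1
  rw [bd.hχα] at h2
  exact h2 rfl

lemma class_D_iff {u : Set (Ω × Ω)} (hu : u ∈ W.S) :
    χ u ⊆ Del1 W χ Δ α' ×ˢ Del1 W χ Δ α' ↔ u ⊆ Δ ×ˢ Δ := by
  rw [← bd.D1sq]
  exact map_subset_algImage_iff bd.hχ hu bd.ss.Drel

lemma secY_mem {s : Set (Ω × Ω)} (hs : s ∈ X.S) (hne : (secRel Δ e s).Nonempty) :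
    secRel Δ e s ∈ Y.S := by
  rw [bd.hYS]
  exact ⟨s, hs, rfl, hne⟩

lemma secY'_mem {s : Set (Ω' × Ω')} (hs : s ∈ X'.S) (hne : (secRel Δ' e' s).Nonempty) :
    secRel Δ' e' s ∈ Y'.S := by
  rw [bd.hY'S]
  exact ⟨s, hs, rfl, hne⟩

lemma sec_ne_transfer {s : Set (Ω × Ω)} (hs : s ∈ X.S) (hne : (secRel Δ e s).Nonempty) :
    (secRel Δ' e' (φ s)).Nonempty := by
  rw [← bd.hind s hs hne]
  exact Y'.nonemp _ (bd.hψ.bijOn.mapsTo (bd.secY_mem hs hne))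

omit bd in
lemma diag_of_sub_e {WW : CohCfg Ω} {ee : Set (Ω × Ω)} {ΔΔ : Set Ω}
    (sss : SecSetup WW ΔΔ ee) {s : Set (Ω × Ω)} (hse : s ⊆ ee) :
    ∀ p ∈ secRel ΔΔ ee s, p.1 = p.2 := by
  rintro ⟨Γ₁, Γ₂⟩ ⟨a, ha, b, hb, hab⟩
  have hbΓ₁ : b ∈ Γ₁.1 := sss.sec_mem_of_rel ha (hse hab)
  apply Subtype.ext
  rw [sss.sec_eClass hbΓ₁, sss.sec_eClass hb]

lemma mapE {s : Set (Ω × Ω)} (hs : s ∈ X.S) (hse : s ⊆ e)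
    (hne : (s ∩ Δ ×ˢ Δ).Nonempty) : φ s ⊆ e' := by
  have hsec : (secRel Δ e s).Nonempty := (bd.ss.secRel_nonempty_iff).mpr hne
  have hdiag : ∀ p ∈ secRel Δ e s, p.1 = p.2 := diag_of_sub_e bd.ss hse
  have hdiag' : ∀ p ∈ ψ (secRel Δ e s), p.1 = p.2 :=
    map_diag bd.hψ (bd.secY_mem hs hsec) hdiag
  rw [bd.hind s hs hsec] at hdiag'
  obtain ⟨⟨Λ₁, Λ₂⟩, hp⟩ := bd.sec_ne_transfer hs hsec
  have : Λ₁ = Λ₂ := hdiag' _ hp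
  subst this
  obtain ⟨a', ha', b', hb', hab'⟩ := hp
  exact bd.heX' (φ s) (map_mem bd.hφ hs) ⟨(a', b'), hab', bd.ss'.sec_rel ha' hb'⟩

lemma pullE {w' : Set (Ω' × Ω')} (hw' : w' ∈ W'.S)
    (hw'D : w' ⊆ Del1 W χ Δ α' ×ˢ Del1 W χ Δ α') (hw'e : (w' ∩ e').Nonempty) :
    invMap W χ w' ⊆ e ∩ Δ ×ˢ Δ := by
  set w := invMap W χ w' with hw
  have hwS : w ∈ W.S := invMap_mem bd.hχ hw'
  have hχw : χ w = w' := map_invMap bd.hχ hw'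
  have hwD : w ⊆ Δ ×ˢ Δ := by
    rw [← bd.class_D_iff hwS, hχw]
    exact hw'D
  obtain ⟨p, hp⟩ := W.nonemp w hwS
  obtain ⟨s, hsX, hps⟩ := X.cover p
  have hws : w ⊆ s := bd.hXW s hsX w hwS ⟨p, hp, hps⟩
  have hsD : (s ∩ Δ ×ˢ Δ).Nonempty := ⟨p, hps, hwD hp⟩
  have hsec : (secRel Δ e s).Nonempty := (bd.ss.secRel_nonempty_iff).mpr hsD
  have hw'φs : w' ⊆ φ s := by
    rw [← hχw, ← bd.hext s hsX]
    exact subset_algImage hwS hws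
  have hφse : φ s ⊆ e' := by
    apply bd.heX' (φ s) (map_mem bd.hφ hsX)
    obtain ⟨q, hq1, hq2⟩ := hw'e
    exact ⟨q, hw'φs hq1, hq2⟩
  have hdiag' : ∀ p ∈ secRel Δ' e' (φ s), p.1 = p.2 := diag_of_sub_e bd.ss' hφse
  rw [← bd.hind s hsX hsec] at hdiag'
  have hdiag : ∀ p ∈ secRel Δ e s, p.1 = p.2 := by
    have h2 := map_diag (invMap_isAlgIso bd.hψ)
      (bd.hψ.bijOn.mapsTo (bd.secY_mem hsX hsec)) hdiag'
    rwa [invMap_map bd.hψ (bd.secY_mem hsX hsec)] at h2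
  obtain ⟨⟨Γ₁, Γ₂⟩, hq⟩ := hsec
  have : Γ₁ = Γ₂ := hdiag _ hq
  subst this
  obtain ⟨a₁, ha₁, b₁, hb₁, hab₁⟩ := hq
  have hseE : s ⊆ e := bd.heX s hsX ⟨(a₁, b₁), hab₁, bd.ss.sec_rel ha₁ hb₁⟩
  exact fun q hq => ⟨hseE (hws hq), hwD hq⟩

lemma hatE_img : algImage W χ (hatE Δ e) = hatE (Del1 W χ Δ α') e' := by
  apply Set.Subset.antisymm
  · rintro p' ⟨w'', ⟨w, ⟨hw, hwsub⟩, rfl⟩, hp'⟩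
    have hwe : w ⊆ e := fun q hq => (mem_hatE.mp (hwsub hq)).1
    have hwD : w ⊆ Δ ×ˢ Δ := fun q hq => ⟨(mem_hatE.mp (hwsub hq)).2.1, (mem_hatE.mp (hwsub hq)).2.2⟩
    have h1 : χ w ⊆ Del1 W χ Δ α' ×ˢ Del1 W χ Δ α' := (bd.class_D_iff hw).mpr hwD
    obtain ⟨q, hq⟩ := W.nonemp w hw
    obtain ⟨s, hsX, hqs⟩ := X.cover q
    have hws : w ⊆ s := bd.hXW s hsX w hw ⟨q, hq, hqs⟩
    have hse : s ⊆ e := bd.heX s hsX ⟨q, hqs, hwe hq⟩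
    have hsD : (s ∩ Δ ×ˢ Δ).Nonempty := ⟨q, hqs, hwD hq⟩
    have hφse : φ s ⊆ e' := bd.mapE hsX hse hsD
    have hχws : χ w ⊆ φ s := by
      rw [← bd.hext s hsX]
      exact subset_algImage hw hws
    rw [mem_hatE]
    exact ⟨hφse (hχws hp'), (h1 hp').1, (h1 hp').2⟩
  · rintro ⟨x', y'⟩ hmem
    rw [mem_hatE] at hmem
    obtain ⟨he', hx', hy'⟩ := hmem
    obtain ⟨w', hw', hpw'⟩ := W'.cover (x', y')
    have hD1rel : IsRelationOf W' (Del1 W χ Δ α' ×ˢ Del1 W χ Δ α') := by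
      rw [← bd.D1sq]
      exact isRel_algImage bd.hχ _
    have hw'D : w' ⊆ Del1 W χ Δ α' ×ˢ Del1 W χ Δ α' :=
      hD1rel w' hw' ⟨(x', y'), hpw', hx', hy'⟩
    have hw'e : (w' ∩ e').Nonempty := ⟨(x', y'), hpw', he'⟩
    have hsub := bd.pullE hw' hw'D hw'e
    have : χ (invMap W χ w') ⊆ algImage W χ (hatE Δ e) :=
      subset_algImage (invMap_mem bd.hχ hw') hsub
    rw [map_invMap bd.hχ hw'] at this
    exact this hpw'

lemma fibD : ∀ g ∈ W.S, (∀ p ∈ g, p.1 = p.2) →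
    (Δ ∩ {x | (x, x) ∈ g}).ncard = (Del1 W χ Δ α' ∩ {x' | (x', x') ∈ χ g}).ncard := by
  intro g hg hgdiag
  have hχgdiag : ∀ p ∈ χ g, p.1 = p.2 := map_diag bd.hχ hg hgdiag
  have e2 : Δ ∩ {x | (x, x) ∈ g} = pointSet (comp (Δ ×ˢ Δ) g) α := by
    ext y
    constructor
    · rintro ⟨hy, hyg⟩
      exact ⟨y, ⟨bd.hαΔ, hy⟩, hyg⟩
    · rintro ⟨δ, h1, h2⟩
      have : δ = y := hgdiag (δ, y) h2
      subst this
      exact ⟨h1.2, h2⟩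
  have e2' : Del1 W χ Δ α' ∩ {x' | (x', x') ∈ χ g} =
      pointSet (comp (Del1 W χ Δ α' ×ˢ Del1 W χ Δ α') (χ g)) α' := by
    ext y
    constructor
    · rintro ⟨hy, hyg⟩
      exact ⟨y, ⟨bd.alpha'_mem, hy⟩, hyg⟩
    · rintro ⟨δ, h1, h2⟩
      have : δ = y := hχgdiag (δ, y) h2
      subst this
      exact ⟨h1.2, h2⟩
  rw [e2, e2']
  have e3 := outdeg_transport bd.hχ (isRel_comp bd.ss.Drel (isRel_mem hg)) bd.hαW
    rfl (by rw [bd.hχα]; rfl)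
  have e4 : algImage W χ (comp (Δ ×ˢ Δ) g) =
      comp (Del1 W χ Δ α' ×ˢ Del1 W χ Δ α') (χ g) := by
    rw [algImage_comp bd.hχ bd.ss.Drel (isRel_mem hg), algImage_class bd.hχ hg, bd.D1sq]
  rw [e4] at e3
  exact e3

lemma D1sub : Del1 W χ Δ α' ⊆ Δ' := by
  intro x' hx'
  obtain ⟨w'', ⟨w, ⟨hw, hwD⟩, rfl⟩, hmem⟩ := hx'
  obtain ⟨p, hp⟩ := W.nonemp w hw
  obtain ⟨s, hsX, hps⟩ := X.cover p
  have hws : w ⊆ s := bd.hXW s hsX w hw ⟨p, hp, hps⟩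
  have hsD : (s ∩ Δ ×ˢ Δ).Nonempty := ⟨p, hps, hwD hp⟩
  have hsec : (secRel Δ e s).Nonempty := (bd.ss.secRel_nonempty_iff).mpr hsD
  obtain ⟨⟨Λ₁, Λ₂⟩, a', ha', b', hb', hab'⟩ := bd.sec_ne_transfer hsX hsec
  have ha'Δ' : a' ∈ Δ' := bd.ss'.sec_subset Λ₁ ha'
  have hb'Δ' : b' ∈ Δ' := bd.ss'.sec_subset Λ₂ hb'
  have hab'd' : (a', b') ∈ d' := by
    have h1 : (α', a') ∈ d' := (bd.hΔ'cls a').mp ha'Δ'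
    have h2 : (α', b') ∈ d' := (bd.hΔ'cls b').mp hb'Δ'
    exact bd.hd'trans a' α' b' (bd.hd'symm _ h1) h2
  have hφsd' : φ s ⊆ d' := bd.hd'rel (φ s) (map_mem bd.hφ hsX) ⟨(a', b'), hab', hab'd'⟩
  have hχws : χ w ⊆ φ s := by
    rw [← bd.hext s hsX]
    exact subset_algImage hw hws
  rw [bd.hΔ'cls]
  exact hφsd' (hχws hmem)

end BData

end Bridge


section Bridge2

variable {X : CohCfg Ω} {X' : CohCfg Ω'} {φ : Set (Ω × Ω) → Set (Ω' × Ω')}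
variable {Δ : Set Ω} {e : Set (Ω × Ω)} {Δ' : Set Ω'} {e' : Set (Ω' × Ω')}
variable {Y : CohCfg (Sec Δ e)} {Y' : CohCfg (Sec Δ' e')}
variable {ψ : Set (Sec Δ e × Sec Δ e) → Set (Sec Δ' e' × Sec Δ' e')}
variable {W : CohCfg Ω} {W' : CohCfg Ω'} {χ : Set (Ω × Ω) → Set (Ω' × Ω')}
variable {α : Ω} {α' : Ω'} {d' : Set (Ω' × Ω')}

/-- `Nat.card` of a section type as an `ncard` -/
lemma card_sec (Δ₀ : Set Ω) (e₀ : Set (Ω × Ω)) [Finite Ω] :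
    Nat.card (Sec Δ₀ e₀) = {C : Set Ω | ∃ a ∈ Δ₀, C = eClass e₀ a}.ncard :=
  Nat.card_coe_set_eq {C : Set Ω | ∃ a ∈ Δ₀, C = eClass e₀ a}

namespace BData

variable (bd : BData X X' φ Δ e Δ' e' Y Y' ψ W W' χ α α' d')

include bd

/-- every `e'`-class of `Δ'` meets the image of `Δ` -/
lemma meetD1 : ∀ a' ∈ Δ', ∃ x' ∈ Del1 W χ Δ α', (a', x') ∈ e' := by
  haveI := W.finite
  haveI := W'.finite
  set D1 := Del1 W χ Δ α' with hD1
  have hcard : Nat.card (Sec Δ e) = Nat.card (Sec Δ' e') := card_transport bd.hψ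
  have cil := class_count_transport bd.hχ bd.ss.hatE_rel
    (fun x y h => bd.ss.hatE_symm h)
    (fun x y z h1 h2 => bd.ss.hatE_trans h1 h2) Δ.ncard Δ D1 rfl
    (fun x hx => bd.ss.hatE_refl hx)
    (fun x _ y hxy => (mem_hatE.mp hxy).2.2)
    (fun x' hx' => by rw [bd.hatE_img]; exact mem_hatE.mpr ⟨bd.ss'.erefl x', hx', hx'⟩)
    (fun x' _ y' hxy => by rw [bd.hatE_img] at hxy; exact (mem_hatE.mp hxy).2.2)
    bd.fibD
  rw [bd.hatE_img] at cil
  have tL : {C : Set Ω | ∃ x ∈ Δ, C = eClass e x} =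
      {C : Set Ω | ∃ x ∈ Δ, C = {y | (x, y) ∈ hatE Δ e}} :=
    bd.ss.count_eClass_eq subset_rfl
  -- relate the D1-classes of `e' ∩ D1 ×ˢ D1` with the `e'`-classes of points of D1
  have hmemcls : ∀ x' ∈ D1, eClass e' x' ∩ D1 = {y | (x', y) ∈ hatE D1 e'} := by
    intro x' hx'
    ext y
    constructor
    · rintro ⟨h1, h2⟩
      exact mem_hatE.mpr ⟨h1, hx', h2⟩
    · intro h
      exact ⟨(mem_hatE.mp h).1, (mem_hatE.mp h).2.2⟩
  have himg : {C : Set Ω' | ∃ x' ∈ D1, C = {y | (x', y) ∈ hatE D1 e'}} =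
      (fun C => C ∩ D1) '' {C : Set Ω' | ∃ x' ∈ D1, C = eClass e' x'} := by
    ext C
    constructor
    · rintro ⟨x', hx', rfl⟩
      exact ⟨eClass e' x', ⟨x', hx', rfl⟩, hmemcls x' hx'⟩
    · rintro ⟨C₀, ⟨x', hx', rfl⟩, rfl⟩
      exact ⟨x', hx', (hmemcls x' hx')⟩
  have hinj : Set.InjOn (fun C => C ∩ D1) {C : Set Ω' | ∃ x' ∈ D1, C = eClass e' x'} := by
    rintro C₁ ⟨x₁, hx₁, rfl⟩ C₂ ⟨x₂, hx₂, rfl⟩ heq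
    have hx₁m : x₁ ∈ eClass e' x₁ ∩ D1 := ⟨bd.ss'.erefl x₁, hx₁⟩
    rw [show (fun C => C ∩ D1) (eClass e' x₁) = eClass e' x₁ ∩ D1 from rfl,
      show (fun C => C ∩ D1) (eClass e' x₂) = eClass e' x₂ ∩ D1 from rfl] at heq
    rw [heq] at hx₁m
    exact (bd.ss'.eClass_congr hx₁m.1).symm
  have key : {C : Set Ω' | ∃ x' ∈ D1, C = eClass e' x'}.ncard = Nat.card (Sec Δ' e') := by
    have e5 : {C : Set Ω' | ∃ x' ∈ D1, C = eClass e' x'}.ncard =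
        {C : Set Ω' | ∃ x' ∈ D1, C = {y | (x', y) ∈ hatE D1 e'}}.ncard := by
      rw [himg, Set.ncard_image_of_injOn hinj]
    rw [e5, ← cil, ← tL, ← card_sec Δ e, hcard]
  have hsub : {C : Set Ω' | ∃ x' ∈ D1, C = eClass e' x'} ⊆
      {C : Set Ω' | ∃ a' ∈ Δ', C = eClass e' a'} := by
    rintro C ⟨x', hx', rfl⟩
    exact ⟨x', bd.D1sub hx', rfl⟩
  have heq : {C : Set Ω' | ∃ x' ∈ D1, C = eClass e' x'} =
      {C : Set Ω' | ∃ a' ∈ Δ', C = eClass e' a'} := by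
    apply Set.eq_of_subset_of_ncard_le hsub _ (Set.toFinite _)
    rw [key, ← card_sec Δ' e']
  intro a' ha'
  have : eClass e' a' ∈ {C : Set Ω' | ∃ a' ∈ Δ', C = eClass e' a'} := ⟨a', ha', rfl⟩
  rw [← heq] at this
  obtain ⟨x', hx', hcls⟩ := this
  refine ⟨x', hx', ?_⟩
  have : x' ∈ eClass e' x' := bd.ss'.erefl x'
  rw [← hcls] at this
  exact this

end BData

end Bridge2


section Bridge3

variable {X : CohCfg Ω} {X' : CohCfg Ω'} {φ : Set (Ω × Ω) → Set (Ω' × Ω')}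
variable {Δ : Set Ω} {e : Set (Ω × Ω)} {Δ' : Set Ω'} {e' : Set (Ω' × Ω')}
variable {Y : CohCfg (Sec Δ e)} {Y' : CohCfg (Sec Δ' e')}
variable {ψ : Set (Sec Δ e × Sec Δ e) → Set (Sec Δ' e' × Sec Δ' e')}
variable {W : CohCfg Ω} {W' : CohCfg Ω'} {χ : Set (Ω × Ω) → Set (Ω' × Ω')}
variable {α : Ω} {α' : Ω'} {d' : Set (Ω' × Ω')}

/-- generic saturation lemmas for counting sets -/
lemma USet_refl_gen {Δ₀ : Set Ω} {e₀ r₀ s₀ : Set (Ω × Ω)} {a b γ : Ω}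
    (hsym : ∀ x y : Ω, (x, y) ∈ hatE Δ₀ e₀ → (y, x) ∈ hatE Δ₀ e₀)
    (htrans : ∀ x y z : Ω, (x, y) ∈ hatE Δ₀ e₀ → (y, z) ∈ hatE Δ₀ e₀ → (x, z) ∈ hatE Δ₀ e₀)
    (hγ : γ ∈ SecSetup.USet (Δ := Δ₀) (e := e₀) r₀ s₀ a b) : (γ, γ) ∈ hatE Δ₀ e₀ := by
  obtain ⟨⟨m, _, n, _, hn2⟩, _⟩ := hγ
  exact htrans _ _ _ (hsym _ _ hn2) hn2

lemma USet_sat_gen {Δ₀ : Set Ω} {e₀ r₀ s₀ : Set (Ω × Ω)} {a b γ δ : Ω}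
    (hsym : ∀ x y : Ω, (x, y) ∈ hatE Δ₀ e₀ → (y, x) ∈ hatE Δ₀ e₀)
    (htrans : ∀ x y z : Ω, (x, y) ∈ hatE Δ₀ e₀ → (y, z) ∈ hatE Δ₀ e₀ → (x, z) ∈ hatE Δ₀ e₀)
    (hγ : γ ∈ SecSetup.USet (Δ := Δ₀) (e := e₀) r₀ s₀ a b) (hδ : (γ, δ) ∈ hatE Δ₀ e₀) :
    δ ∈ SecSetup.USet (Δ := Δ₀) (e := e₀) r₀ s₀ a b := by
  obtain ⟨⟨m, hm, n, hn1, hn2⟩, ⟨m', hm', n', hn1', hn2'⟩⟩ := hγ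
  exact ⟨⟨m, hm, n, hn1, htrans _ _ _ hn2 hδ⟩,
    ⟨m', htrans _ _ _ (hsym _ _ hδ) hm', n', hn1', hn2'⟩⟩

lemma hatE_symm_gen {Δ₀ : Set Ω} {e₀ : Set (Ω × Ω)}
    (hs : ∀ a b : Ω, (a, b) ∈ e₀ → (b, a) ∈ e₀) :
    ∀ x y : Ω, (x, y) ∈ hatE Δ₀ e₀ → (y, x) ∈ hatE Δ₀ e₀ := by
  intro x y h
  rw [mem_hatE] at h ⊢
  exact ⟨hs _ _ h.1, h.2.2, h.2.1⟩

lemma hatE_trans_gen {Δ₀ : Set Ω} {e₀ : Set (Ω × Ω)}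
    (ht : ∀ a b c : Ω, (a, b) ∈ e₀ → (b, c) ∈ e₀ → (a, c) ∈ e₀) :
    ∀ x y z : Ω, (x, y) ∈ hatE Δ₀ e₀ → (y, z) ∈ hatE Δ₀ e₀ → (x, z) ∈ hatE Δ₀ e₀ := by
  intro x y z h1 h2
  rw [mem_hatE] at h1 h2 ⊢
  exact ⟨ht _ _ _ h1.1 h2.1, h1.2.1, h2.2.2⟩

/-- the induced map on quotient relations -/
def Theta (W : CohCfg Ω) (χ : Set (Ω × Ω) → Set (Ω' × Ω')) (Δ : Set Ω) (e : Set (Ω × Ω))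
    (Δ' : Set Ω') (e' : Set (Ω' × Ω')) :
    Set (Sec Δ e × Sec Δ e) → Set (Sec Δ' e' × Sec Δ' e') :=
  fun q => ⋃₀ {t' | ∃ u ∈ W.S, secRel Δ e u = q ∧ t' = secRel Δ' e' (χ u)}

namespace BData

variable (bd : BData X X' φ Δ e Δ' e' Y Y' ψ W W' χ α α' d')

include bd

lemma hatE1_sub : hatE (Del1 W χ Δ α') e' ⊆ hatE Δ' e' := by
  intro p hp
  rw [mem_hatE] at hp ⊢
  exact ⟨hp.1, bd.D1sub hp.2.1, bd.D1sub hp.2.2⟩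

lemma secne_of_D {u : Set (Ω × Ω)} (hu : u ∈ W.S) (huD : u ⊆ Δ ×ˢ Δ) :
    (secRel Δ e u).Nonempty := by
  obtain ⟨p, hp⟩ := W.nonemp u hu
  exact bd.ss.secRel_nonempty_iff.mpr ⟨p, hp, huD hp⟩

lemma secne_of_D' {u : Set (Ω × Ω)} (hu : u ∈ W.S) (huD : u ⊆ Δ ×ˢ Δ) :
    (secRel Δ' e' (χ u)).Nonempty := by
  obtain ⟨p', hp'⟩ := W'.nonemp (χ u) (map_mem bd.hχ hu)
  have h1 : χ u ⊆ Del1 W χ Δ α' ×ˢ Del1 W χ Δ α' := (bd.class_D_iff hu).mpr huD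
  refine bd.ss'.secRel_nonempty_iff.mpr ⟨p', hp', ?_⟩
  have := h1 hp'
  exact ⟨bd.D1sub this.1, bd.D1sub this.2⟩

lemma ker_fwd_sub {u v : Set (Ω × Ω)} (hu : u ∈ W.S) (hv : v ∈ W.S)
    (huD : u ⊆ Δ ×ˢ Δ) (hvD : v ⊆ Δ ×ˢ Δ) (heq : secRel Δ e u = secRel Δ e v) :
    secRel Δ' e' (χ u) ⊆ secRel Δ' e' (χ v) := by
  have hune : (secRel Δ e u).Nonempty := bd.secne_of_D hu huD
  have hmeet : (secRel Δ e u ∩ secRel Δ e v).Nonempty := by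
    rw [heq, Set.inter_self]
    rw [heq] at hune
    exact hune
  have h1 : u ⊆ comp (hatE Δ e) (comp v (hatE Δ e)) :=
    bd.ss.ker_of_secRel_meet hu (isRel_mem hv) hmeet
  have hrel : IsRelationOf W (comp (hatE Δ e) (comp v (hatE Δ e))) :=
    isRel_comp bd.ss.hatE_rel (isRel_comp (isRel_mem hv) bd.ss.hatE_rel)
  have h2 : χ u ⊆ algImage W χ (comp (hatE Δ e) (comp v (hatE Δ e))) :=
    (map_subset_algImage_iff bd.hχ hu hrel).mpr h1
  have h3 : algImage W χ (comp (hatE Δ e) (comp v (hatE Δ e))) =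
      comp (hatE (Del1 W χ Δ α') e') (comp (χ v) (hatE (Del1 W χ Δ α') e')) := by
    rw [algImage_comp bd.hχ bd.ss.hatE_rel (isRel_comp (isRel_mem hv) bd.ss.hatE_rel),
      algImage_comp bd.hχ (isRel_mem hv) bd.ss.hatE_rel,
      algImage_class bd.hχ hv, bd.hatE_img]
  rw [h3] at h2
  have h4 : χ u ⊆ comp (hatE Δ' e') (comp (χ v) (hatE Δ' e')) :=
    h2.trans (comp_mono bd.hatE1_sub (comp_mono subset_rfl bd.hatE1_sub))
  exact bd.ss'.secRel_subset_of_ker h4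

lemma ker_fwd {u v : Set (Ω × Ω)} (hu : u ∈ W.S) (hv : v ∈ W.S)
    (huD : u ⊆ Δ ×ˢ Δ) (hvD : v ⊆ Δ ×ˢ Δ) (heq : secRel Δ e u = secRel Δ e v) :
    secRel Δ' e' (χ u) = secRel Δ' e' (χ v) :=
  Set.Subset.antisymm (bd.ker_fwd_sub hu hv huD hvD heq)
    (bd.ker_fwd_sub hv hu hvD huD heq.symm)

lemma ker_bwd {u v : Set (Ω × Ω)} (hu : u ∈ W.S) (hv : v ∈ W.S)
    (huD : u ⊆ Δ ×ˢ Δ) (hvD : v ⊆ Δ ×ˢ Δ)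
    (heq : secRel Δ' e' (χ u) = secRel Δ' e' (χ v)) : secRel Δ e u = secRel Δ e v := by
  have main : ∀ u₀ v₀ : Set (Ω × Ω), u₀ ∈ W.S → v₀ ∈ W.S → u₀ ⊆ Δ ×ˢ Δ → v₀ ⊆ Δ ×ˢ Δ →
      secRel Δ' e' (χ u₀) = secRel Δ' e' (χ v₀) → secRel Δ e u₀ ⊆ secRel Δ e v₀ := by
    intro u₀ v₀ hu₀ hv₀ hu₀D hv₀D heq₀
    have hne : (secRel Δ' e' (χ u₀)).Nonempty := bd.secne_of_D' hu₀ hu₀D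
    have hmeet : (secRel Δ' e' (χ u₀) ∩ secRel Δ' e' (χ v₀)).Nonempty := by
      rw [heq₀, Set.inter_self]
      rw [heq₀] at hne
      exact hne
    have h1 : χ u₀ ⊆ comp (hatE Δ' e') (comp (χ v₀) (hatE Δ' e')) :=
      bd.ss'.ker_of_secRel_meet (map_mem bd.hχ hu₀) (isRel_mem (map_mem bd.hχ hv₀)) hmeet
    have hu₀D1 : χ u₀ ⊆ Del1 W χ Δ α' ×ˢ Del1 W χ Δ α' := (bd.class_D_iff hu₀).mpr hu₀D
    have hv₀D1 : χ v₀ ⊆ Del1 W χ Δ α' ×ˢ Del1 W χ Δ α' := (bd.class_D_iff hv₀).mpr hv₀D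
    have h2 : χ u₀ ⊆ comp (hatE (Del1 W χ Δ α') e')
        (comp (χ v₀) (hatE (Del1 W χ Δ α') e')) := by
      rintro ⟨x', y'⟩ hp
      obtain ⟨m', hm', n', hn', hn2'⟩ := h1 hp
      have hx'D1 : x' ∈ Del1 W χ Δ α' := (hu₀D1 hp).1
      have hy'D1 : y' ∈ Del1 W χ Δ α' := (hu₀D1 hp).2
      have hm'D1 : m' ∈ Del1 W χ Δ α' := (hv₀D1 hn').1
      have hn'D1 : n' ∈ Del1 W χ Δ α' := (hv₀D1 hn').2
      exact ⟨m', mem_hatE.mpr ⟨(mem_hatE.mp hm').1, hx'D1, hm'D1⟩, n', hn',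
        mem_hatE.mpr ⟨(mem_hatE.mp hn2').1, hn'D1, hy'D1⟩⟩
    have h3 : algImage W χ (comp (hatE Δ e) (comp v₀ (hatE Δ e))) =
        comp (hatE (Del1 W χ Δ α') e') (comp (χ v₀) (hatE (Del1 W χ Δ α') e')) := by
      rw [algImage_comp bd.hχ bd.ss.hatE_rel (isRel_comp (isRel_mem hv₀) bd.ss.hatE_rel),
        algImage_comp bd.hχ (isRel_mem hv₀) bd.ss.hatE_rel,
        algImage_class bd.hχ hv₀, bd.hatE_img]
    rw [← h3] at h2
    have hrel : IsRelationOf W (comp (hatE Δ e) (comp v₀ (hatE Δ e))) :=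
      isRel_comp bd.ss.hatE_rel (isRel_comp (isRel_mem hv₀) bd.ss.hatE_rel)
    have h4 : u₀ ⊆ comp (hatE Δ e) (comp v₀ (hatE Δ e)) :=
      (map_subset_algImage_iff bd.hχ hu₀ hrel).mp h2
    exact bd.ss.secRel_subset_of_ker h4
  exact Set.Subset.antisymm (main u v hu hv huD hvD heq) (main v u hv hu hvD huD heq.symm)

lemma pull_to_D {u' : Set (Ω' × Ω')} (hu' : u' ∈ W'.S) (hu'D : u' ⊆ Δ' ×ˢ Δ') :
    ∃ w' ∈ W'.S, w' ⊆ Del1 W χ Δ α' ×ˢ Del1 W χ Δ α' ∧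
      secRel Δ' e' w' = secRel Δ' e' u' := by
  obtain ⟨⟨x₀, y₀⟩, hxy₀⟩ := W'.nonemp u' hu'
  have hx₀ : x₀ ∈ Δ' := (hu'D hxy₀).1
  have hy₀ : y₀ ∈ Δ' := (hu'D hxy₀).2
  obtain ⟨x₁, hx₁D1, hx₁e⟩ := bd.meetD1 x₀ hx₀
  obtain ⟨y₁, hy₁D1, hy₁e⟩ := bd.meetD1 y₀ hy₀
  have hx₁Δ' : x₁ ∈ Δ' := bd.D1sub hx₁D1
  have hy₁Δ' : y₁ ∈ Δ' := bd.D1sub hy₁D1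
  have hmem : (x₁, y₁) ∈ comp (hatE Δ' e') (comp u' (hatE Δ' e')) :=
    ⟨x₀, mem_hatE.mpr ⟨bd.ss'.esymm _ _ hx₁e, hx₁Δ', hx₀⟩, y₀, hxy₀,
      mem_hatE.mpr ⟨hy₁e, hy₀, hy₁Δ'⟩⟩
  obtain ⟨w', hw', hpw'⟩ := W'.cover (x₁, y₁)
  have hD1rel : IsRelationOf W' (Del1 W χ Δ α' ×ˢ Del1 W χ Δ α') := by
    rw [← bd.D1sq]
    exact isRel_algImage bd.hχ _
  have hw'D1 : w' ⊆ Del1 W χ Δ α' ×ˢ Del1 W χ Δ α' :=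
    hD1rel w' hw' ⟨(x₁, y₁), hpw', hx₁D1, hy₁D1⟩
  refine ⟨w', hw', hw'D1, ?_⟩
  apply bd.ss'.secRel_eq_of_meet hw' hu'
  refine ⟨(SecSetup.mkSec (e := e') x₁ hx₁Δ', SecSetup.mkSec (e := e') y₁ hy₁Δ'), ?_, ?_⟩
  · exact ⟨x₁, bd.ss'.mem_mkSec hx₁Δ', y₁, bd.ss'.mem_mkSec hy₁Δ', hpw'⟩
  · refine ⟨x₀, ?_, y₀, ?_, hxy₀⟩
    · exact bd.ss'.sec_mem_of_rel (bd.ss'.mem_mkSec hx₁Δ') (bd.ss'.esymm _ _ hx₁e)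
    · exact bd.ss'.sec_mem_of_rel (bd.ss'.mem_mkSec hy₁Δ') (bd.ss'.esymm _ _ hy₁e)

lemma Theta_eq {u : Set (Ω × Ω)} (hu : u ∈ W.S) (huD : u ⊆ Δ ×ˢ Δ) :
    Theta W χ Δ e Δ' e' (secRel Δ e u) = secRel Δ' e' (χ u) := by
  apply Set.Subset.antisymm
  · rintro p ⟨t', ⟨v, hv, hsec, rfl⟩, hp⟩
    have hvD : v ⊆ Δ ×ˢ Δ := by
      apply bd.ss.class_subset_D hv
      rw [← bd.ss.secRel_nonempty_iff, hsec]
      exact bd.secne_of_D hu huD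
    rw [bd.ker_fwd hv hu hvD huD hsec] at hp
    exact hp
  · intro p hp
    exact ⟨secRel Δ' e' (χ u), ⟨u, hu, rfl, rfl⟩, hp⟩

end BData

end Bridge3


section Bridge4

variable {X : CohCfg Ω} {X' : CohCfg Ω'} {φ : Set (Ω × Ω) → Set (Ω' × Ω')}
variable {Δ : Set Ω} {e : Set (Ω × Ω)} {Δ' : Set Ω'} {e' : Set (Ω' × Ω')}
variable {Y : CohCfg (Sec Δ e)} {Y' : CohCfg (Sec Δ' e')}
variable {ψ : Set (Sec Δ e × Sec Δ e) → Set (Sec Δ' e' × Sec Δ' e')}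
variable {W : CohCfg Ω} {W' : CohCfg Ω'} {χ : Set (Ω × Ω) → Set (Ω' × Ω')}
variable {α : Ω} {α' : Ω'} {d' : Set (Ω' × Ω')}

namespace BData

variable (bd : BData X X' φ Δ e Δ' e' Y Y' ψ W W' χ α α' d')

include bd

lemma count_eq {r₀ s₀ t₀ : Set (Ω × Ω)} (hr₀ : r₀ ∈ W.S) (hs₀ : s₀ ∈ W.S) (ht₀ : t₀ ∈ W.S)
    (hrD : r₀ ⊆ Δ ×ˢ Δ) (hsD : s₀ ⊆ Δ ×ˢ Δ) (htD : t₀ ⊆ Δ ×ˢ Δ)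
    {a b : Ω} (hab : (a, b) ∈ t₀) {a' b' : Ω'} (hab' : (a', b') ∈ χ t₀) :
    {C : Set Ω | ∃ γ ∈ SecSetup.USet (Δ := Δ) (e := e) r₀ s₀ a b,
        C = {y | (γ, y) ∈ hatE Δ e}}.ncard =
    {C : Set Ω' | ∃ γ' ∈ SecSetup.USet (Δ := Δ') (e := e') (χ r₀) (χ s₀) a' b',
        C = {y | (γ', y) ∈ hatE Δ' e'}}.ncard := by
  haveI := W.finite
  haveI := W'.finite
  have hsymΔ := hatE_symm_gen (Δ₀ := Δ) (fun x y h => bd.ss.esymm x y h)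
  have htrΔ := hatE_trans_gen (Δ₀ := Δ) (fun x y z h1 h2 => bd.ss.etrans x y z h1 h2)
  have hsymD1 := hatE_symm_gen (Δ₀ := Del1 W χ Δ α') (fun x y h => bd.ss'.esymm x y h)
  have htrD1 := hatE_trans_gen (Δ₀ := Del1 W χ Δ α')
    (fun x y z h1 h2 => bd.ss'.etrans x y z h1 h2)
  have hsymΔ' := hatE_symm_gen (Δ₀ := Δ') (fun x y h => bd.ss'.esymm x y h)
  have htrΔ' := hatE_trans_gen (Δ₀ := Δ') (fun x y z h1 h2 => bd.ss'.etrans x y z h1 h2)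
  have hχtD1 : χ t₀ ⊆ Del1 W χ Δ α' ×ˢ Del1 W χ Δ α' := (bd.class_D_iff ht₀).mpr htD
  have hχrD1 : χ r₀ ⊆ Del1 W χ Δ α' ×ˢ Del1 W χ Δ α' := (bd.class_D_iff hr₀).mpr hrD
  have hχsD1 : χ s₀ ⊆ Del1 W χ Δ α' ×ˢ Del1 W χ Δ α' := (bd.class_D_iff hs₀).mpr hsD
  have ha'D1 : a' ∈ Del1 W χ Δ α' := (hχtD1 hab').1
  have hb'D1 : b' ∈ Del1 W χ Δ α' := (hχtD1 hab').2
  -- fiber counts match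
  have hfib : ∀ g ∈ W.S, (∀ p ∈ g, p.1 = p.2) →
      (SecSetup.USet (Δ := Δ) (e := e) r₀ s₀ a b ∩ {x | (x, x) ∈ g}).ncard =
      (SecSetup.USet (Δ := Del1 W χ Δ α') (e := e') (χ r₀) (χ s₀) a' b' ∩
        {x | (x, x) ∈ χ g}).ncard := by
    intro g hg hgdiag
    have hgd' := map_diag bd.hχ hg hgdiag
    rw [SecSetup.USet_fib_ncard hgdiag, SecSetup.USet_fib_ncard hgd']
    have hPrel : IsRelationOf W (comp (comp (hatE Δ e) (comp r₀ (hatE Δ e))) g) :=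
      isRel_comp (isRel_comp bd.ss.hatE_rel (isRel_comp (isRel_mem hr₀) bd.ss.hatE_rel))
        (isRel_mem hg)
    have hQrel : IsRelationOf W (comp (hatE Δ e) (comp s₀ (hatE Δ e))) :=
      isRel_comp bd.ss.hatE_rel (isRel_comp (isRel_mem hs₀) bd.ss.hatE_rel)
    have htr := cnum_eq_rel bd.hχ hPrel hQrel ht₀ hab hab'
    have hP : algImage W χ (comp (comp (hatE Δ e) (comp r₀ (hatE Δ e))) g) =
        comp (comp (hatE (Del1 W χ Δ α') e') (comp (χ r₀) (hatE (Del1 W χ Δ α') e')))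
          (χ g) := by
      rw [algImage_comp bd.hχ
          (isRel_comp bd.ss.hatE_rel (isRel_comp (isRel_mem hr₀) bd.ss.hatE_rel))
          (isRel_mem hg),
        algImage_comp bd.hχ bd.ss.hatE_rel (isRel_comp (isRel_mem hr₀) bd.ss.hatE_rel),
        algImage_comp bd.hχ (isRel_mem hr₀) bd.ss.hatE_rel,
        algImage_class bd.hχ hr₀, algImage_class bd.hχ hg, bd.hatE_img]
    have hQ : algImage W χ (comp (hatE Δ e) (comp s₀ (hatE Δ e))) =
        comp (hatE (Del1 W χ Δ α') e') (comp (χ s₀) (hatE (Del1 W χ Δ α') e')) := by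
      rw [algImage_comp bd.hχ bd.ss.hatE_rel (isRel_comp (isRel_mem hs₀) bd.ss.hatE_rel),
        algImage_comp bd.hχ (isRel_mem hs₀) bd.ss.hatE_rel,
        algImage_class bd.hχ hs₀, bd.hatE_img]
    rw [hP, hQ] at htr
    exact htr
  have cil := class_count_transport bd.hχ bd.ss.hatE_rel hsymΔ htrΔ
    (SecSetup.USet (Δ := Δ) (e := e) r₀ s₀ a b).ncard
    (SecSetup.USet (Δ := Δ) (e := e) r₀ s₀ a b)
    (SecSetup.USet (Δ := Del1 W χ Δ α') (e := e') (χ r₀) (χ s₀) a' b') rfl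
    (fun x hx => bd.ss.hatE_refl (SecSetup.USet_subset hx))
    (fun x hx y hxy => SecSetup.USet_sat bd.ss hx (mem_hatE.mp hxy).1)
    (fun x hx => by rw [bd.hatE_img]; exact USet_refl_gen hsymD1 htrD1 hx)
    (fun x hx y hxy => by
      rw [bd.hatE_img] at hxy
      exact USet_sat_gen hsymD1 htrD1 hx hxy)
    hfib
  rw [bd.hatE_img] at cil
  rw [cil]
  -- now compare the D1-level classes with the Δ'-level classes
  have hU'sub : SecSetup.USet (Δ := Δ') (e := e') (χ r₀) (χ s₀) a' b' ⊆ Δ' :=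
    SecSetup.USet_subset
  have hU'sat : ∀ γ' ∈ SecSetup.USet (Δ := Δ') (e := e') (χ r₀) (χ s₀) a' b',
      ∀ δ', (γ', δ') ∈ hatE Δ' e' →
      δ' ∈ SecSetup.USet (Δ := Δ') (e := e') (χ r₀) (χ s₀) a' b' :=
    fun γ' h δ' hh => USet_sat_gen hsymΔ' htrΔ' h hh
  have hcap : SecSetup.USet (Δ := Δ') (e := e') (χ r₀) (χ s₀) a' b' ∩ Del1 W χ Δ α' =
      SecSetup.USet (Δ := Del1 W χ Δ α') (e := e') (χ r₀) (χ s₀) a' b' := by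
    apply Set.Subset.antisymm
    · rintro γ' ⟨⟨⟨m, hm, n, hn1, hn2⟩, ⟨m2, hm2, n2, hn12, hn22⟩⟩, hγ'D⟩
      constructor
      · exact ⟨m, mem_hatE.mpr ⟨(mem_hatE.mp hm).1, ha'D1, (hχrD1 hn1).1⟩, n, hn1,
          mem_hatE.mpr ⟨(mem_hatE.mp hn2).1, (hχrD1 hn1).2, hγ'D⟩⟩
      · exact ⟨m2, mem_hatE.mpr ⟨(mem_hatE.mp hm2).1, hγ'D, (hχsD1 hn12).1⟩, n2, hn12,
          mem_hatE.mpr ⟨(mem_hatE.mp hn22).1, (hχsD1 hn12).2, hb'D1⟩⟩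
    · intro γ₁ hγ₁
      have hγ₁D1 : γ₁ ∈ Del1 W χ Δ α' := SecSetup.USet_subset hγ₁
      obtain ⟨⟨m, hm, n, hn1, hn2⟩, ⟨m2, hm2, n2, hn12, hn22⟩⟩ := hγ₁
      refine ⟨⟨⟨m, bd.hatE1_sub hm, n, hn1, bd.hatE1_sub hn2⟩,
        ⟨m2, bd.hatE1_sub hm2, n2, hn12, bd.hatE1_sub hn22⟩⟩, hγ₁D1⟩
  have hclsD1 : ∀ γ₁ ∈ Del1 W χ Δ α',
      {y | (γ₁, y) ∈ hatE Δ' e'} ∩ Del1 W χ Δ α' = {y | (γ₁, y) ∈ hatE (Del1 W χ Δ α') e'} := by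
    intro γ₁ hγ₁D
    ext y
    constructor
    · rintro ⟨h1, h2⟩
      exact mem_hatE.mpr ⟨(mem_hatE.mp h1).1, hγ₁D, h2⟩
    · intro h
      exact ⟨mem_hatE.mpr ⟨(mem_hatE.mp h).1, bd.D1sub hγ₁D, bd.D1sub (mem_hatE.mp h).2.2⟩,
        (mem_hatE.mp h).2.2⟩
  have hrep : ∀ γ' ∈ SecSetup.USet (Δ := Δ') (e := e') (χ r₀) (χ s₀) a' b',
      ∃ γ₁ ∈ SecSetup.USet (Δ := Del1 W χ Δ α') (e := e') (χ r₀) (χ s₀) a' b',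
        (γ', γ₁) ∈ hatE Δ' e' := by
    intro γ' hγ'
    obtain ⟨γ₁, hγ₁D, hγ₁e⟩ := bd.meetD1 γ' (hU'sub hγ')
    have h2 : (γ', γ₁) ∈ hatE Δ' e' := mem_hatE.mpr ⟨hγ₁e, hU'sub hγ', bd.D1sub hγ₁D⟩
    have h3 := hU'sat γ' hγ' γ₁ h2
    refine ⟨γ₁, ?_, h2⟩
    rw [← hcap]
    exact ⟨h3, hγ₁D⟩
  have hclseq : ∀ γ' γ₁ : Ω', (γ', γ₁) ∈ hatE Δ' e' →
      {y | (γ', y) ∈ hatE Δ' e'} = {y | (γ₁, y) ∈ hatE Δ' e'} := by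
    intro γ' γ₁ h
    ext y
    exact ⟨fun hy => htrΔ' _ _ _ (hsymΔ' _ _ h) hy, fun hy => htrΔ' _ _ _ h hy⟩
  have himg : {C : Set Ω' | ∃ γ₁ ∈ SecSetup.USet (Δ := Del1 W χ Δ α') (e := e')
        (χ r₀) (χ s₀) a' b', C = {y | (γ₁, y) ∈ hatE (Del1 W χ Δ α') e'}} =
      (fun C => C ∩ Del1 W χ Δ α') ''
        {C : Set Ω' | ∃ γ' ∈ SecSetup.USet (Δ := Δ') (e := e') (χ r₀) (χ s₀) a' b',
          C = {y | (γ', y) ∈ hatE Δ' e'}} := by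
    ext C
    constructor
    · rintro ⟨γ₁, hγ₁, rfl⟩
      have hγ₁D1 : γ₁ ∈ Del1 W χ Δ α' := SecSetup.USet_subset hγ₁
      have hγ₁U' : γ₁ ∈ SecSetup.USet (Δ := Δ') (e := e') (χ r₀) (χ s₀) a' b' := by
        rw [← hcap] at hγ₁
        exact hγ₁.1
      exact ⟨{y | (γ₁, y) ∈ hatE Δ' e'}, ⟨γ₁, hγ₁U', rfl⟩, hclsD1 γ₁ hγ₁D1⟩
    · rintro ⟨C₀, ⟨γ', hγ', rfl⟩, rfl⟩
      obtain ⟨γ₁, hγ₁, hγe⟩ := hrep γ' hγ'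
      refine ⟨γ₁, hγ₁, ?_⟩
      show {y | (γ', y) ∈ hatE Δ' e'} ∩ Del1 W χ Δ α' = _
      rw [hclseq γ' γ₁ hγe]
      exact hclsD1 γ₁ (SecSetup.USet_subset hγ₁)
  have hinj : Set.InjOn (fun C => C ∩ Del1 W χ Δ α')
      {C : Set Ω' | ∃ γ' ∈ SecSetup.USet (Δ := Δ') (e := e') (χ r₀) (χ s₀) a' b',
        C = {y | (γ', y) ∈ hatE Δ' e'}} := by
    rintro C₁ ⟨γ'₁, h1, rfl⟩ C₂ ⟨γ'₂, h2, rfl⟩ heq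
    obtain ⟨γ₁, hγ₁, hγe⟩ := hrep γ'₁ h1
    have hγ₁m : γ₁ ∈ {y | (γ'₁, y) ∈ hatE Δ' e'} ∩ Del1 W χ Δ α' :=
      ⟨hγe, SecSetup.USet_subset hγ₁⟩
    have heq' : {y | (γ'₁, y) ∈ hatE Δ' e'} ∩ Del1 W χ Δ α' =
        {y | (γ'₂, y) ∈ hatE Δ' e'} ∩ Del1 W χ Δ α' := heq
    rw [heq'] at hγ₁m
    rw [hclseq γ'₁ γ₁ hγe, hclseq γ'₂ γ₁ hγ₁m.1]
  rw [himg, Set.ncard_image_of_injOn hinj]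

end BData

end Bridge4


section Bridge5

variable {X : CohCfg Ω} {X' : CohCfg Ω'} {φ : Set (Ω × Ω) → Set (Ω' × Ω')}
variable {Δ : Set Ω} {e : Set (Ω × Ω)} {Δ' : Set Ω'} {e' : Set (Ω' × Ω')}
variable {Y : CohCfg (Sec Δ e)} {Y' : CohCfg (Sec Δ' e')}
variable {ψ : Set (Sec Δ e × Sec Δ e) → Set (Sec Δ' e' × Sec Δ' e')}
variable {W : CohCfg Ω} {W' : CohCfg Ω'} {χ : Set (Ω × Ω) → Set (Ω' × Ω')}
variable {α : Ω} {α' : Ω'} {d' : Set (Ω' × Ω')}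

namespace BData

variable (bd : BData X X' φ Δ e Δ' e' Y Y' ψ W W' χ α α' d')

include bd

lemma Theta_isAlgIso : IsAlgIso (SecSetup.quotCfg bd.ss) (SecSetup.quotCfg bd.ss')
    (Theta W χ Δ e Δ' e') := by
  constructor
  · refine ⟨?_, ?_, ?_⟩
    · rintro t ⟨u, hu, rfl, hne⟩
      have huD : u ⊆ Δ ×ˢ Δ :=
        bd.ss.class_subset_D hu (bd.ss.secRel_nonempty_iff.mp hne)
      rw [bd.Theta_eq hu huD]
      exact ⟨χ u, map_mem bd.hχ hu, rfl, bd.secne_of_D' hu huD⟩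
    · rintro t₁ ⟨u, hu, rfl, hneu⟩ t₂ ⟨v, hv, rfl, hnev⟩ heq
      have huD : u ⊆ Δ ×ˢ Δ :=
        bd.ss.class_subset_D hu (bd.ss.secRel_nonempty_iff.mp hneu)
      have hvD : v ⊆ Δ ×ˢ Δ :=
        bd.ss.class_subset_D hv (bd.ss.secRel_nonempty_iff.mp hnev)
      rw [bd.Theta_eq hu huD, bd.Theta_eq hv hvD] at heq
      exact bd.ker_bwd hu hv huD hvD heq
    · rintro t' ⟨u', hu', rfl, hne'⟩
      have hu'D : u' ⊆ Δ' ×ˢ Δ' :=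
        bd.ss'.class_subset_D hu' (bd.ss'.secRel_nonempty_iff.mp hne')
      obtain ⟨w', hw', hw'D1, hsecw⟩ := bd.pull_to_D hu' hu'D
      have huW : invMap W χ w' ∈ W.S := invMap_mem bd.hχ hw'
      have hχu : χ (invMap W χ w') = w' := map_invMap bd.hχ hw'
      have huD : invMap W χ w' ⊆ Δ ×ˢ Δ := by
        rw [← bd.class_D_iff huW, hχu]
        exact hw'D1
      refine ⟨secRel Δ e (invMap W χ w'),
        ⟨invMap W χ w', huW, rfl, bd.secne_of_D huW huD⟩, ?_⟩
      rw [bd.Theta_eq huW huD, hχu, hsecw]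
  · intro r hr s hs t ht p hp q hq
    obtain ⟨r₀, hr₀, rfl, hner⟩ := hr
    obtain ⟨s₀, hs₀, rfl, hnes⟩ := hs
    obtain ⟨t₀, ht₀, rfl, hnet⟩ := ht
    have hrD : r₀ ⊆ Δ ×ˢ Δ :=
      bd.ss.class_subset_D hr₀ (bd.ss.secRel_nonempty_iff.mp hner)
    have hsD : s₀ ⊆ Δ ×ˢ Δ :=
      bd.ss.class_subset_D hs₀ (bd.ss.secRel_nonempty_iff.mp hnes)
    have htD : t₀ ⊆ Δ ×ˢ Δ :=
      bd.ss.class_subset_D ht₀ (bd.ss.secRel_nonempty_iff.mp hnet)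
    rw [bd.Theta_eq ht₀ htD] at hq
    rw [bd.Theta_eq hr₀ hrD, bd.Theta_eq hs₀ hsD]
    obtain ⟨Γ₁, Γ₂⟩ := p
    obtain ⟨Λ₁, Λ₂⟩ := q
    obtain ⟨a, ha, b, hb, hab⟩ := hp
    obtain ⟨a', ha', b', hb', hab'⟩ := hq
    rw [bd.ss.quotient_count ha hb, bd.ss'.quotient_count ha' hb',
      bd.ss.count_eClass_eq SecSetup.USet_subset, bd.ss'.count_eClass_eq SecSetup.USet_subset]
    exact bd.count_eq hr₀ hs₀ ht₀ hrD hsD htD hab hab'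

lemma Theta_ext {s : Set (Ω × Ω)} (hs : s ∈ X.S) (hne : (secRel Δ e s).Nonempty) :
    algImage (SecSetup.quotCfg bd.ss) (Theta W χ Δ e Δ' e') (secRel Δ e s) =
    secRel Δ' e' (φ s) := by
  apply Set.Subset.antisymm
  · rintro x' ⟨t', ⟨q, ⟨hqQ, hqsub⟩, rfl⟩, hx'⟩
    obtain ⟨u, hu, rfl, hneu⟩ := hqQ
    have huD : u ⊆ Δ ×ˢ Δ :=
      bd.ss.class_subset_D hu (bd.ss.secRel_nonempty_iff.mp hneu)
    obtain ⟨⟨Γa, Γb⟩, hpq⟩ := hneu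
    obtain ⟨c, hc, dd, hd, hcd⟩ := hqsub hpq
    obtain ⟨u₂, hu₂, hcd₂⟩ := W.cover (c, dd)
    have hu₂s : u₂ ⊆ s :=
      rel_le_transfer bd.hXW (isRel_mem hs) u₂ hu₂ ⟨(c, dd), hcd₂, hcd⟩
    have hmeet : (secRel Δ e u ∩ secRel Δ e u₂).Nonempty :=
      ⟨(Γa, Γb), hpq, ⟨c, hc, dd, hd, hcd₂⟩⟩
    have hsec2 := bd.ss.secRel_eq_of_meet hu hu₂ hmeet
    have hu₂D : u₂ ⊆ Δ ×ˢ Δ := by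
      apply bd.ss.class_subset_D hu₂
      apply bd.ss.secRel_nonempty_iff.mp
      exact ⟨(Γa, Γb), ⟨c, hc, dd, hd, hcd₂⟩⟩
    rw [bd.Theta_eq hu huD, bd.ker_fwd hu hu₂ huD hu₂D hsec2] at hx'
    have hsub : χ u₂ ⊆ φ s := by
      rw [← bd.hext s hs]
      exact subset_algImage hu₂ hu₂s
    exact SecSetup.secRel_mono hsub hx'
  · rintro ⟨Λ, Λ'⟩ hx'
    obtain ⟨c', hc', d'', hd'', hcd'⟩ := hx'
    obtain ⟨u', hu', hcd''⟩ := W'.cover (c', d'')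
    have hu's : u' ⊆ φ s :=
      rel_le_transfer bd.hX'W' (isRel_mem (map_mem bd.hφ hs)) u' hu' ⟨_, hcd'', hcd'⟩
    have hu'D : u' ⊆ Δ' ×ˢ Δ' := bd.ss'.class_subset_D hu'
      ⟨(c', d''), hcd'', bd.ss'.sec_subset Λ hc', bd.ss'.sec_subset Λ' hd''⟩
    obtain ⟨w', hw', hw'D1, hsecw⟩ := bd.pull_to_D hu' hu'D
    have huW : invMap W χ w' ∈ W.S := invMap_mem bd.hχ hw'
    have hχu : χ (invMap W χ w') = w' := map_invMap bd.hχ hw'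
    have huD : invMap W χ w' ⊆ Δ ×ˢ Δ := by
      rw [← bd.class_D_iff huW, hχu]
      exact hw'D1
    obtain ⟨p₀, hp₀⟩ := W.nonemp _ huW
    obtain ⟨s₂, hs₂, hp₀s₂⟩ := X.cover p₀
    have hus₂ : invMap W χ w' ⊆ s₂ := bd.hXW s₂ hs₂ _ huW ⟨p₀, hp₀, hp₀s₂⟩
    have hw'ne : (secRel Δ' e' w').Nonempty := by
      rw [hsecw]
      exact ⟨(Λ, Λ'), ⟨c', hc', d'', hd'', hcd''⟩⟩
    have hw'ker : w' ⊆ comp (hatE Δ' e') (comp u' (hatE Δ' e')) := by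
      apply bd.ss'.ker_of_secRel_meet hw' (isRel_mem hu')
      rw [hsecw]
      rw [Set.inter_self]
      exact ⟨(Λ, Λ'), ⟨c', hc', d'', hd'', hcd''⟩⟩
    have hw'e : w' ⊆ comp e' (comp (φ s) e') := by
      refine hw'ker.trans (comp_mono ?_ (comp_mono hu's ?_))
      · exact fun p hp => (mem_hatE.mp hp).1
      · exact fun p hp => (mem_hatE.mp hp).1
    have hχuφ : χ (invMap W χ w') ⊆ φ s₂ := by
      rw [← bd.hext s₂ hs₂]
      exact subset_algImage huW hus₂
    have hφs₂sub : φ s₂ ⊆ comp e' (comp (φ s) e') := by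
      apply isRel_comp bd.heX' (isRel_comp (isRel_mem (map_mem bd.hφ hs)) bd.heX')
        (φ s₂) (map_mem bd.hφ hs₂)
      obtain ⟨q', hq'⟩ := W'.nonemp w' hw'
      refine ⟨q', ?_, hw'e hq'⟩
      rw [← hχu] at hq'
      exact hχuφ hq'
    have hsub2 : secRel Δ' e' (φ s₂) ⊆ secRel Δ' e' (φ s) :=
      bd.ss'.secRel_subset_of_ker_full hφs₂sub
    have hne2 : (secRel Δ' e' (φ s₂)).Nonempty := by
      obtain ⟨pp, hpp⟩ := bd.secne_of_D' huW huD
      refine ⟨pp, SecSetup.secRel_mono ?_ hpp⟩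
      exact hχuφ
    have hne1 : (secRel Δ' e' (φ s)).Nonempty := bd.sec_ne_transfer hs hne
    have hYeq : secRel Δ' e' (φ s₂) = secRel Δ' e' (φ s) := by
      obtain ⟨pp, hpp⟩ := id hne2
      exact class_eq (bd.secY'_mem (map_mem bd.hφ hs₂) hne2)
        (bd.secY'_mem (map_mem bd.hφ hs) hne1) hpp (hsub2 hpp)
    have hsecs₂ne : (secRel Δ e s₂).Nonempty := by
      obtain ⟨pp, hpp⟩ := bd.secne_of_D huW huD
      exact ⟨pp, SecSetup.secRel_mono hus₂ hpp⟩
    have hψeq : ψ (secRel Δ e s₂) = ψ (secRel Δ e s) := by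
      rw [bd.hind s₂ hs₂ hsecs₂ne, bd.hind s hs hne, hYeq]
    have hsseq : secRel Δ e s₂ = secRel Δ e s :=
      bd.hψ.bijOn.injOn (bd.secY_mem hs₂ hsecs₂ne) (bd.secY_mem hs hne) hψeq
    refine ⟨Theta W χ Δ e Δ' e' (secRel Δ e (invMap W χ w')),
      ⟨secRel Δ e (invMap W χ w'),
        ⟨⟨invMap W χ w', huW, rfl, bd.secne_of_D huW huD⟩, ?_⟩, rfl⟩, ?_⟩
    · rw [← hsseq]
      exact SecSetup.secRel_mono hus₂
    · rw [bd.Theta_eq huW huD, hχu, hsecw]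
      exact ⟨c', hc', d'', hd'', hcd''⟩

lemma Theta_pt {Γ : Sec Δ e} {Γ' : Sec Δ' e'} (hαΓ : α ∈ Γ.1) (hα'Γ' : α' ∈ Γ'.1) :
    Theta W χ Δ e Δ' e' ({(Γ, Γ)} : Set (Sec Δ e × Sec Δ e)) =
      ({(Γ', Γ')} : Set (Sec Δ' e' × Sec Δ' e')) := by
  have h1 : secRel Δ e ({(α, α)} : Set (Ω × Ω)) = {(Γ, Γ)} := by
    ext ⟨Λ₁, Λ₂⟩
    constructor
    · rintro ⟨x, hx, y, hy, hxy⟩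
      rw [Set.mem_singleton_iff, Prod.ext_iff] at hxy
      have hx' : x = α := hxy.1
      have hy' : y = α := hxy.2
      rw [hx'] at hx
      rw [hy'] at hy
      have e1 : Λ₁ = Γ := Subtype.ext (by
        rw [bd.ss.sec_eClass hx, ← bd.ss.sec_eClass hαΓ])
      have e2 : Λ₂ = Γ := Subtype.ext (by
        rw [bd.ss.sec_eClass hy, ← bd.ss.sec_eClass hαΓ])
      rw [Set.mem_singleton_iff, Prod.ext_iff]
      exact ⟨e1, e2⟩
    · intro h
      rw [Set.mem_singleton_iff] at h
      have e1 : Λ₁ = Γ := congrArg Prod.fst h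
      have e2 : Λ₂ = Γ := congrArg Prod.snd h
      rw [e1, e2]
      exact ⟨α, hαΓ, α, hαΓ, rfl⟩
  have h2 : secRel Δ' e' ({(α', α')} : Set (Ω' × Ω')) = {(Γ', Γ')} := by
    ext ⟨Λ₁, Λ₂⟩
    constructor
    · rintro ⟨x, hx, y, hy, hxy⟩
      rw [Set.mem_singleton_iff, Prod.ext_iff] at hxy
      have hx' : x = α' := hxy.1
      have hy' : y = α' := hxy.2
      rw [hx'] at hx
      rw [hy'] at hy
      have e1 : Λ₁ = Γ' := Subtype.ext (by
        rw [bd.ss'.sec_eClass hx, ← bd.ss'.sec_eClass hα'Γ'])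
      have e2 : Λ₂ = Γ' := Subtype.ext (by
        rw [bd.ss'.sec_eClass hy, ← bd.ss'.sec_eClass hα'Γ'])
      rw [Set.mem_singleton_iff, Prod.ext_iff]
      exact ⟨e1, e2⟩
    · intro h
      rw [Set.mem_singleton_iff] at h
      have e1 : Λ₁ = Γ' := congrArg Prod.fst h
      have e2 : Λ₂ = Γ' := congrArg Prod.snd h
      rw [e1, e2]
      exact ⟨α', hα'Γ', α', hα'Γ', rfl⟩
  have hsub : ({(α, α)} : Set (Ω × Ω)) ⊆ Δ ×ˢ Δ := by
    intro p hp
    rw [Set.mem_singleton_iff] at hp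
    rw [hp]
    exact ⟨bd.hαΔ, bd.hαΔ⟩
  rw [← h1, bd.Theta_eq bd.hαW hsub, bd.hχα, h2]

end BData

end Bridge5


section Assemble

variable {X : CohCfg Ω} {X' : CohCfg Ω'} {φ : Set (Ω × Ω) → Set (Ω' × Ω')}
variable {Δ : Set Ω} {e : Set (Ω × Ω)} {Δ' : Set Ω'} {e' : Set (Ω' × Ω')}
variable {Y : CohCfg (Sec Δ e)} {Y' : CohCfg (Sec Δ' e')}
variable {ψ : Set (Sec Δ e × Sec Δ e) → Set (Sec Δ' e' × Sec Δ' e')}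
variable {W : CohCfg Ω} {W' : CohCfg Ω'} {χ : Set (Ω × Ω) → Set (Ω' × Ω')}
variable {α : Ω} {α' : Ω'} {d' : Set (Ω' × Ω')}

/-- mutually comparable configurations have the same classes -/
lemma le_antisymm_S {T : Type u} {A B : CohCfg T} (h1 : le A B) (h2 : le B A) :
    A.S = B.S := by
  have main : ∀ {A B : CohCfg T}, le A B → le B A → ∀ s ∈ A.S, s ∈ B.S := by
    intro A B hab hba s hs
    obtain ⟨p, hp⟩ := A.nonemp s hs
    obtain ⟨b, hb, hpb⟩ := B.cover p
    have hbs : b ⊆ s := hab s hs b hb ⟨p, hpb, hp⟩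
    have hsb : s ⊆ b := hba b hb s hs ⟨p, hp, hpb⟩
    rw [Set.Subset.antisymm hsb hbs]
    exact hb
  ext s
  exact ⟨fun hs => main h1 h2 s hs, fun hs => main h2 h1 s hs⟩

namespace BData

variable (bd : BData X X' φ Δ e Δ' e' Y Y' ψ W W' χ α α' d')

include bd

lemma leYQ : le Y (SecSetup.quotCfg bd.ss) := by
  intro t ht
  rw [bd.hYS] at ht
  obtain ⟨s, hs, rfl, hne⟩ := ht
  rintro q ⟨u, hu, rfl, hneu⟩ ⟨p, hp1, hp2⟩
  obtain ⟨c, hc, dd, hd, hcd⟩ := hp2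
  obtain ⟨u₂, hu₂, hcd₂⟩ := W.cover (c, dd)
  have hu₂s : u₂ ⊆ s :=
    rel_le_transfer bd.hXW (isRel_mem hs) u₂ hu₂ ⟨_, hcd₂, hcd⟩
  have heq := bd.ss.secRel_eq_of_meet hu hu₂ ⟨p, hp1, ⟨c, hc, dd, hd, hcd₂⟩⟩
  rw [heq]
  exact SecSetup.secRel_mono hu₂s

lemma leY'Q' : le Y' (SecSetup.quotCfg bd.ss') := by
  intro t ht
  rw [bd.hY'S] at ht
  obtain ⟨s, hs, rfl, hne⟩ := ht
  rintro q ⟨u, hu, rfl, hneu⟩ ⟨p, hp1, hp2⟩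
  obtain ⟨c, hc, dd, hd, hcd⟩ := hp2
  obtain ⟨u₂, hu₂, hcd₂⟩ := W'.cover (c, dd)
  have hu₂s : u₂ ⊆ s :=
    rel_le_transfer bd.hX'W' (isRel_mem hs) u₂ hu₂ ⟨_, hcd₂, hcd⟩
  have heq := bd.ss'.secRel_eq_of_meet hu hu₂ ⟨p, hp1, ⟨c, hc, dd, hd, hcd₂⟩⟩
  rw [heq]
  exact SecSetup.secRel_mono hu₂s

lemma sec_pt {Γ : Sec Δ e} (hαΓ : α ∈ Γ.1) :
    secRel Δ e ({(α, α)} : Set (Ω × Ω)) = {(Γ, Γ)} := by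
  ext ⟨Λ₁, Λ₂⟩
  constructor
  · rintro ⟨x, hx, y, hy, hxy⟩
    rw [Set.mem_singleton_iff, Prod.ext_iff] at hxy
    have hx' : x = α := hxy.1
    have hy' : y = α := hxy.2
    rw [hx'] at hx
    rw [hy'] at hy
    have e1 : Λ₁ = Γ := Subtype.ext (by
      rw [bd.ss.sec_eClass hx, ← bd.ss.sec_eClass hαΓ])
    have e2 : Λ₂ = Γ := Subtype.ext (by
      rw [bd.ss.sec_eClass hy, ← bd.ss.sec_eClass hαΓ])
    rw [Set.mem_singleton_iff, Prod.ext_iff]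
    exact ⟨e1, e2⟩
  · intro h
    rw [Set.mem_singleton_iff] at h
    have e1 : Λ₁ = Γ := congrArg Prod.fst h
    have e2 : Λ₂ = Γ := congrArg Prod.snd h
    rw [e1, e2]
    exact ⟨α, hαΓ, α, hαΓ, rfl⟩

lemma sec_pt' {Γ' : Sec Δ' e'} (hα'Γ' : α' ∈ Γ'.1) :
    secRel Δ' e' ({(α', α')} : Set (Ω' × Ω')) = {(Γ', Γ')} := by
  ext ⟨Λ₁, Λ₂⟩
  constructor
  · rintro ⟨x, hx, y, hy, hxy⟩
    rw [Set.mem_singleton_iff, Prod.ext_iff] at hxy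
    have hx' : x = α' := hxy.1
    have hy' : y = α' := hxy.2
    rw [hx'] at hx
    rw [hy'] at hy
    have e1 : Λ₁ = Γ' := Subtype.ext (by
      rw [bd.ss'.sec_eClass hx, ← bd.ss'.sec_eClass hα'Γ'])
    have e2 : Λ₂ = Γ' := Subtype.ext (by
      rw [bd.ss'.sec_eClass hy, ← bd.ss'.sec_eClass hα'Γ'])
    rw [Set.mem_singleton_iff, Prod.ext_iff]
    exact ⟨e1, e2⟩
  · intro h
    rw [Set.mem_singleton_iff] at h
    have e1 : Λ₁ = Γ' := congrArg Prod.fst h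
    have e2 : Λ₂ = Γ' := congrArg Prod.snd h
    rw [e1, e2]
    exact ⟨α', hα'Γ', α', hα'Γ', rfl⟩

lemma ptQ {Γ : Sec Δ e} (hαΓ : α ∈ Γ.1) :
    ({(Γ, Γ)} : Set (Sec Δ e × Sec Δ e)) ∈ (SecSetup.quotCfg bd.ss).S :=
  ⟨{(α, α)}, bd.hαW, (bd.sec_pt hαΓ).symm, ⟨(Γ, Γ), rfl⟩⟩

lemma ptQ' {Γ' : Sec Δ' e'} (hα'Γ' : α' ∈ Γ'.1) :
    ({(Γ', Γ')} : Set (Sec Δ' e' × Sec Δ' e')) ∈ (SecSetup.quotCfg bd.ss').S := by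
  refine ⟨{(α', α')}, ?_, (bd.sec_pt' hα'Γ').symm, ⟨(Γ', Γ'), rfl⟩⟩
  rw [← bd.hχα]
  exact map_mem bd.hχ bd.hαW

end BData

end Assemble


end SQ

open CohCfg in
/-- Lemma: if a sesquiclosed algebraic isomorphism `φ : X → X'` induces an
algebraic isomorphism `ψ : X_𝔖 → X'_{𝔖'}` between section configurations, then
`ψ` is sesquiclosed. -/
theorem stmt_4 {Ω Ω' : Type u} (X : CohCfg Ω) (X' : CohCfg Ω')
    (φ : Set (Ω × Ω) → Set (Ω' × Ω')) (hφ : SesquiclosedIso X X' φ)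
    (Δ : Set Ω) (e : Set (Ω × Ω)) (hsec : IsSection X Δ e)
    (Δ' : Set Ω') (e' : Set (Ω' × Ω')) (hsec' : IsSection X' Δ' e')
    (Y : CohCfg (Sec Δ e)) (hY : IsSectionCfg X Δ e Y)
    (Y' : CohCfg (Sec Δ' e')) (hY' : IsSectionCfg X' Δ' e' Y')
    (ψ : Set (Sec Δ e × Sec Δ e) → Set (Sec Δ' e' × Sec Δ' e'))
    (hψ : IsAlgIso Y Y' ψ)
    (hind : ∀ s ∈ X.S, (secRel Δ e s).Nonempty →
      ψ (secRel Δ e s) = secRel Δ' e' (φ s)) :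
    SesquiclosedIso Y Y' ψ := by
  classical
  obtain ⟨hφa, hφext⟩ := hφ
  refine ⟨hψ, ?_⟩
  intro Λf hΛf Γ hΓΛ Γ' hΓ'm
  obtain ⟨⟨herel, herefl, hesymm, hetrans⟩, d, ⟨hdrel, hdrefl, hdsymm, hdtrans⟩,
    hed, a₀, hΔ⟩ := hsec
  obtain ⟨⟨he'rel, he'refl, he'symm, he'trans⟩, d', ⟨hd'rel, hd'refl, hd'symm, hd'trans⟩,
    hed', a₀', hΔ'⟩ := hsec'
  have hsat : ∀ a ∈ Δ, ∀ b, (a, b) ∈ e → b ∈ Δ := by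
    intro a ha b hab
    rw [hΔ] at ha ⊢
    exact hdtrans _ _ _ ha (hed hab)
  have hsat' : ∀ a ∈ Δ', ∀ b, (a, b) ∈ e' → b ∈ Δ' := by
    intro a ha b hab
    rw [hΔ'] at ha ⊢
    exact hd'trans _ _ _ ha (hed' hab)
  -- unpack the fiber of `Y`
  have hYdiag : diagRel Λf ∈ Y.S := hΛf
  rw [hY] at hYdiag
  obtain ⟨s₀, hs₀X, hdeq, hne₀⟩ := hYdiag
  have hΓΓ : (Γ, Γ) ∈ secRel Δ e s₀ := by
    rw [← hdeq]
    exact ⟨rfl, hΓΛ⟩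
  obtain ⟨a, haΓ, b, hbΓ, habs₀⟩ := hΓΓ
  have hΓsubΔ : Γ.1 ⊆ Δ := by
    obtain ⟨c, hcΔ, hΓ1⟩ := Γ.2
    rw [hΓ1]
    intro x hx
    exact hsat c hcΔ x hx
  have haΔ : a ∈ Δ := hΓsubΔ haΓ
  -- the fiber of `a` in `X`
  obtain ⟨f₀, hf₀X, haf₀⟩ := X.cover (a, a)
  have hf₀diag : ∀ p ∈ f₀, p.1 = p.2 := X.diag f₀ hf₀X ⟨(a, a), haf₀, rfl⟩
  have hf₀eq : f₀ = diagRel {x : Ω | (x, x) ∈ f₀} := by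
    ext ⟨x, y⟩
    constructor
    · intro h
      have hxy : x = y := hf₀diag _ h
      refine ⟨hxy, ?_⟩
      show (x, x) ∈ f₀
      rw [show ((x, y) : Ω × Ω) = (x, x) from by rw [hxy]] at h
      exact h
    · rintro ⟨hxy, hx⟩
      have hxy' : x = y := hxy
      rw [show ((x, y) : Ω × Ω) = (x, x) from by rw [hxy']]
      exact hx
  have hfibΔ₀ : IsFiber X {x : Ω | (x, x) ∈ f₀} := by
    rw [IsFiber, ← hf₀eq]
    exact hf₀X
  -- an admissible point `a'` on the other side
  have hΓ'mem : (Γ', Γ') ∈ ψ (diagRel Λf) := hΓ'm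
  rw [hdeq, hind s₀ hs₀X (by rw [← hdeq]; exact ⟨(Γ, Γ), ⟨rfl, hΓΛ⟩⟩)] at hΓ'mem
  obtain ⟨a', ha'Γ', b', hb'Γ', hab'⟩ := hΓ'mem
  have hc1 : 0 < cnum f₀ s₀ (a, b) := (SQ.cnum_pos' X).mpr ⟨a, haf₀, habs₀⟩
  have hc2 := hφa.cnum_eq f₀ hf₀X s₀ hs₀X s₀ hs₀X (a, b) habs₀ (a', b') hab'
  rw [hc2] at hc1
  rw [SQ.cnum_pos' X'] at hc1
  obtain ⟨γ', hγ'1, hγ'2⟩ := hc1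
  have hφf₀diag : ∀ p ∈ φ f₀, p.1 = p.2 := SQ.map_diag hφa hf₀X hf₀diag
  have hγ'a : a' = γ' := hφf₀diag _ hγ'1
  have ha'fib : a' ∈ fiberImage X φ {x : Ω | (x, x) ∈ f₀} := by
    show (a', a') ∈ φ (diagRel {x : Ω | (x, x) ∈ f₀})
    rw [← hf₀eq]
    rw [show ((a', a') : Ω' × Ω') = (a', γ') from by rw [← hγ'a]]
    exact hγ'1
  -- extension of φ at (a, a')
  obtain ⟨W, W', χ, hWpe, hW'pe, hχ, hext, hχα⟩ := hφext _ hfibΔ₀ a haf₀ a' ha'fib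
  obtain ⟨hXW, hαW, _⟩ := hWpe
  obtain ⟨hX'W', hα'W', _⟩ := hW'pe
  -- Δ' described from a'
  have hΓ'sub : Γ'.1 ⊆ Δ' := by
    obtain ⟨c, hcΔ, hΓ1⟩ := Γ'.2
    rw [hΓ1]
    intro x hx
    exact hsat' c hcΔ x hx
  have ha'Δ' : a' ∈ Δ' := hΓ'sub ha'Γ'
  have hΔ'cls : ∀ x' : Ω', x' ∈ Δ' ↔ (a', x') ∈ d' := by
    intro x'
    have h1 : (a₀', a') ∈ d' := by
      rw [hΔ'] at ha'Δ'
      exact ha'Δ'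
    rw [hΔ']
    constructor
    · intro hx'
      exact hd'trans _ _ _ (hd'symm _ h1) hx'
    · intro hx'
      exact hd'trans _ _ _ h1 hx'
  have hΔcls : ∀ x : Ω, x ∈ Δ ↔ (a, x) ∈ d := by
    intro x
    have h1 : (a₀, a) ∈ d := by
      rw [hΔ] at haΔ
      exact haΔ
    rw [hΔ]
    constructor
    · intro hx
      exact hdtrans _ _ _ (hdsymm _ h1) hx
    · intro hx
      exact hdtrans _ _ _ h1 hx
  -- SecSetups
  have hDrel : IsRelationOf W (Δ ×ˢ Δ) := by
    have hdW : IsRelationOf W d := SQ.rel_le_transfer hXW hdrel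
    have hA : IsRelationOf W (SQ.comp ({(a, a)} : Set (Ω × Ω)) d) :=
      SQ.isRel_comp (SQ.isRel_mem hαW) hdW
    have hDeq : Δ ×ˢ Δ =
        SQ.comp (SQ.conv (SQ.comp ({(a, a)} : Set (Ω × Ω)) d))
          (SQ.comp ({(a, a)} : Set (Ω × Ω)) d) := by
      ext ⟨x, y⟩
      constructor
      · rintro ⟨hx, hy⟩
        refine ⟨a, ⟨a, rfl, ?_⟩, ⟨a, rfl, ?_⟩⟩
        · exact (hΔcls x).mp hx
        · exact (hΔcls y).mp hy
      · rintro ⟨γ, ⟨δ, h1, h2⟩, ⟨δ₂, h3, h4⟩⟩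
        rw [Set.mem_singleton_iff, Prod.ext_iff] at h1 h3
        have hδ : δ = a := h1.2
        have hδ₂ : δ₂ = a := h3.2
        rw [hδ] at h2
        rw [hδ₂] at h4
        exact ⟨(hΔcls x).mpr h2, (hΔcls y).mpr h4⟩
    rw [hDeq]
    exact SQ.isRel_comp (SQ.isRel_conv hA) hA
  have hα'W' : ({(a', a')} : Set (Ω' × Ω')) ∈ W'.S := by
    rw [← hχα]
    exact SQ.map_mem hχ hαW
  have hD'rel : IsRelationOf W' (Δ' ×ˢ Δ') := by
    have hdW' : IsRelationOf W' d' := SQ.rel_le_transfer hX'W' hd'rel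
    have hA : IsRelationOf W' (SQ.comp ({(a', a')} : Set (Ω' × Ω')) d') :=
      SQ.isRel_comp (SQ.isRel_mem hα'W') hdW'
    have hDeq : Δ' ×ˢ Δ' =
        SQ.comp (SQ.conv (SQ.comp ({(a', a')} : Set (Ω' × Ω')) d'))
          (SQ.comp ({(a', a')} : Set (Ω' × Ω')) d') := by
      ext ⟨x, y⟩
      constructor
      · rintro ⟨hx, hy⟩
        refine ⟨a', ⟨a', rfl, ?_⟩, ⟨a', rfl, ?_⟩⟩
        · exact (hΔ'cls x).mp hx
        · exact (hΔ'cls y).mp hy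
      · rintro ⟨γ, ⟨δ, h1, h2⟩, ⟨δ₂, h3, h4⟩⟩
        rw [Set.mem_singleton_iff, Prod.ext_iff] at h1 h3
        have hδ : δ = a' := h1.2
        have hδ₂ : δ₂ = a' := h3.2
        rw [hδ] at h2
        rw [hδ₂] at h4
        exact ⟨(hΔ'cls x).mpr h2, (hΔ'cls y).mpr h4⟩
    rw [hDeq]
    exact SQ.isRel_comp (SQ.isRel_conv hA) hA
  have ss : SQ.SecSetup W Δ e :=
    ⟨SQ.rel_le_transfer hXW herel, herefl, fun x y h => hesymm (x, y) h, hetrans, hsat, hDrel⟩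
  have ss' : SQ.SecSetup W' Δ' e' :=
    ⟨SQ.rel_le_transfer hX'W' he'rel, he'refl, fun x y h => he'symm (x, y) h, he'trans,
      hsat', hD'rel⟩
  have bd : SQ.BData X X' φ Δ e Δ' e' Y Y' ψ W W' χ a a' d' :=
    ⟨hφa, hψ, hY, hY', hind, hχ, hXW, hX'W', ss, ss', hext, herel, he'rel,
      hd'rel, hd'symm, hd'trans, hΔ'cls, haΔ, ha'Δ', hαW, hχα⟩
  -- quotient configurations and the induced isomorphism
  have hΘ := bd.Theta_isAlgIso
  have hYQ : le Y (SQ.SecSetup.quotCfg ss) := bd.leYQ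
  have hY'Q' : le Y' (SQ.SecSetup.quotCfg ss') := bd.leY'Q'
  have hptQ : ({(Γ, Γ)} : Set (Sec Δ e × Sec Δ e)) ∈ (SQ.SecSetup.quotCfg ss).S :=
    bd.ptQ haΓ
  have hptQ' : ({(Γ', Γ')} : Set (Sec Δ' e' × Sec Δ' e')) ∈ (SQ.SecSetup.quotCfg ss').S :=
    bd.ptQ' ha'Γ'
  -- point extensions of the section configurations
  have hZpe : IsPointExt Y Γ (SQ.pExt (Y := Y) (α := Γ)) := SQ.isPointExt_pExt
  have hZ'pe : IsPointExt Y' Γ' (SQ.pExt (Y := Y') (α := Γ')) := SQ.isPointExt_pExt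
  set Z := SQ.pExt (Y := Y) (α := Γ) with hZdef
  set Z' := SQ.pExt (Y := Y') (α := Γ') with hZ'def
  have hZQ : le Z (SQ.SecSetup.quotCfg ss) := hZpe.2.2 _ hYQ hptQ
  have hZ'Q' : le Z' (SQ.SecSetup.quotCfg ss') := hZ'pe.2.2 _ hY'Q' hptQ'
  -- the fusion transport of Z along Θ
  set Θ := SQ.Theta W χ Δ e Δ' e' with hΘdef
  set θ := algImage (SQ.SecSetup.quotCfg ss) Θ with hθdef
  set Z'' := SQ.fusionImg hΘ hZQ with hZ''def
  have hθiso : IsAlgIso Z Z'' θ := SQ.fusionImg_isAlgIso hΘ hZQ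
  have hΘext : ∀ t ∈ Y.S, algImage (SQ.SecSetup.quotCfg ss) Θ t = ψ t := by
    intro t ht
    have ht2 := ht
    rw [hY] at ht2
    obtain ⟨s, hs, rfl, hne⟩ := ht2
    rw [bd.Theta_ext hs hne, ← hind s hs hne]
  have hθY : ∀ t ∈ Y.S, algImage Z θ t = ψ t := by
    intro t ht
    rw [hθdef, SQ.fusion_algImage hΘ hZQ (hZpe.1 t ht), hΘext t ht]
  have hΘpt : Θ {(Γ, Γ)} = {(Γ', Γ')} := bd.Theta_pt haΓ ha'Γ'
  have hθpt : θ ({(Γ, Γ)} : Set (Sec Δ e × Sec Δ e)) = {(Γ', Γ')} := by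
    rw [hθdef]
    show algImage (SQ.SecSetup.quotCfg ss) Θ {(Γ, Γ)} = _
    rw [SQ.algImage_class hΘ hptQ, hΘpt]
  -- `Z''` coincides with `Z'`
  have hY'Z'' : le Y' Z'' := by
    intro t' ht'
    obtain ⟨t, ht, heq⟩ := hψ.bijOn.surjOn ht'
    rw [← heq, ← hθY t ht]
    exact SQ.isRel_algImage hθiso t
  have hptZ'' : ({(Γ', Γ')} : Set (Sec Δ' e' × Sec Δ' e')) ∈ Z''.S := by
    refine ⟨{(Γ, Γ)}, hZpe.2.1, ?_⟩
    rw [SQ.algImage_class hΘ hptQ, hΘpt]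
  have hZ'Z'' : le Z' Z'' := hZ'pe.2.2 Z'' hY'Z'' hptZ''
  -- pull back Z' through the inverse of Θ
  have hΘiIso : IsAlgIso (SQ.SecSetup.quotCfg ss') (SQ.SecSetup.quotCfg ss)
      (SQ.invMap (SQ.SecSetup.quotCfg ss) Θ) := SQ.invMap_isAlgIso hΘ
  set Θi := SQ.invMap (SQ.SecSetup.quotCfg ss) Θ with hΘidef
  set V₀ := SQ.fusionImg hΘiIso hZ'Q' with hV₀def
  have hYV₀ : le Y V₀ := by
    intro t ht
    have h1 : algImage (SQ.SecSetup.quotCfg ss') Θi (ψ t) = t := by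
      rw [← hΘext t ht]
      exact SQ.invMap_algImage hΘ (hYQ t ht)
    have hψtZ' : IsRelationOf Z' (ψ t) := hZ'pe.1 (ψ t) (hψ.bijOn.mapsTo ht)
    have h2 : IsRelationOf V₀ (algImage Z' (algImage (SQ.SecSetup.quotCfg ss') Θi) (ψ t)) :=
      SQ.isRel_algImage (SQ.fusionImg_isAlgIso hΘiIso hZ'Q') (ψ t)
    rw [SQ.fusion_algImage hΘiIso hZ'Q' hψtZ', h1] at h2
    exact h2
  have hptV₀ : ({(Γ, Γ)} : Set (Sec Δ e × Sec Δ e)) ∈ V₀.S := by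
    refine ⟨{(Γ', Γ')}, hZ'pe.2.1, ?_⟩
    rw [SQ.algImage_class hΘiIso hptQ', hΘidef, ← hΘpt, SQ.invMap_map hΘ hptQ]
  have hZV₀ : le Z V₀ := hZpe.2.2 V₀ hYV₀ hptV₀
  have hZ''Z' : le Z'' Z' := by
    rintro t'' ⟨z, hz, rfl⟩
    intro y' hy' hmeet
    obtain ⟨x', hx'1, hx'2⟩ := hmeet
    obtain ⟨w0, ⟨qc, ⟨hqc, hqcz⟩, rfl⟩, hx'w⟩ := hx'2
    have hΘqcy' : Θ qc ⊆ y' :=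
      hZ'Q' y' hy' (Θ qc) (SQ.map_mem hΘ hqc) ⟨x', hx'w, hx'1⟩
    have hinvrel : IsRelationOf V₀ z := hZV₀ z hz
    have hmem2 : (algImage (SQ.SecSetup.quotCfg ss') Θi y' ∩ z).Nonempty := by
      obtain ⟨x, hx⟩ := (SQ.SecSetup.quotCfg ss).nonemp qc hqc
      refine ⟨x, ?_, hqcz hx⟩
      have h3 : Θi (Θ qc) ⊆ algImage (SQ.SecSetup.quotCfg ss') Θi y' :=
        SQ.subset_algImage (SQ.map_mem hΘ hqc) hΘqcy'
      rw [hΘidef, SQ.invMap_map hΘ hqc] at h3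
      exact h3 hx
    have hinvsub : algImage (SQ.SecSetup.quotCfg ss') Θi y' ⊆ z :=
      hinvrel _ ⟨y', hy', rfl⟩ hmem2
    intro p' hp'
    obtain ⟨w₂', hw₂'Q', hp'w₂⟩ := (SQ.SecSetup.quotCfg ss').cover p'
    have hw₂y' : w₂' ⊆ y' := hZ'Q' y' hy' w₂' hw₂'Q' ⟨p', hp'w₂, hp'⟩
    have hsub3 : Θi w₂' ⊆ z :=
      (SQ.subset_algImage hw₂'Q' hw₂y').trans hinvsub
    have h4 : Θ (Θi w₂') ⊆ algImage (SQ.SecSetup.quotCfg ss) Θ z :=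
      SQ.subset_algImage (SQ.invMap_mem hΘ hw₂'Q') hsub3
    rw [hΘidef, SQ.map_invMap hΘ hw₂'Q'] at h4
    exact h4 hp'w₂
  have hSS : Z''.S = Z'.S := SQ.le_antisymm_S hZ''Z' hZ'Z''
  refine ⟨Z, Z', θ, hZpe, hZ'pe, ?_, ?_, hθpt⟩
  · refine ⟨?_, hθiso.cnum_eq⟩
    rw [← hSS]
    exact hθiso.bijOn
  · intro t ht
    exact hθY t ht
end

section
/- Let X be a coherent configuration such that every one-point extension X_α (α ∈ Ω) is separable. Then X is sesquiseparable. -/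
open Set

universe u

open CohCfg in
/-- Lemma: if every one-point extension of `X` is separable, then `X` is
sesquiseparable. -/
theorem stmt_5 {Ω : Type u} (X : CohCfg Ω)
    (h : ∀ (α : Ω) (Y : CohCfg Ω), IsPointExt X α Y → Separable Y) :
    Sesquiseparable X := by

  intro Ω'' X' φ hφ
  obtain ⟨halg, hext⟩ := hφ
  have hfin'' : Finite Ω'' := X'.finite
  by_cases hΩ : Nonempty Ω
  case neg =>
    have hE : IsEmpty Ω := not_nonempty_iff.mp hΩ
    have hS : X.S = ∅ := by
      ext s; simp only [Set.mem_empty_iff_false, iff_false]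
      intro hs
      obtain ⟨p, _⟩ := X.nonemp s hs
      exact hE.elim p.1
    have hS' : X'.S = ∅ := by
      ext s; simp only [Set.mem_empty_iff_false, iff_false]
      intro hs
      obtain ⟨t, ht, _⟩ := halg.bijOn.surjOn hs
      rw [hS] at ht; exact ht
    have hE' : IsEmpty Ω'' := by
      by_contra hne
      obtain ⟨ω⟩ := not_isEmpty_iff.mp hne
      obtain ⟨s, hs, _⟩ := X'.cover (ω, ω)
      rw [hS'] at hs; exact hs
    refine ⟨fun x => hE.elim x, ⟨fun a => hE.elim a, fun b => hE'.elim b⟩, ?_⟩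
    intro s hs; rw [hS] at hs; exact hs.elim
  case pos =>
  obtain ⟨α⟩ := hΩ
  obtain ⟨s₀, hs₀, hαs₀⟩ := X.cover (α, α)
  have hdiag : ∀ p ∈ s₀, p.1 = p.2 := X.diag s₀ hs₀ ⟨(α, α), hαs₀, rfl⟩
  set Δ : Set Ω := {a | (a, a) ∈ s₀} with hΔdef
  have hΔeq : diagRel Δ = s₀ := by
    ext p
    constructor
    · rintro ⟨h1, h2⟩
      have : p = (p.1, p.1) := by ext <;> simp [h1.symm]
      rw [this]; exact h2
    · intro hp
      have h1 := hdiag p hp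
      refine ⟨h1, ?_⟩
      have : (p.1, p.1) = p := by ext <;> simp [h1]
      rw [hΔdef]; simp only [Set.mem_setOf_eq]; rw [this]; exact hp
  have hfib : IsFiber X Δ := by rw [IsFiber, hΔeq]; exact hs₀
  have hαΔ : α ∈ Δ := hαs₀
  have hmem : φ s₀ ∈ X'.S := halg.bijOn.mapsTo hs₀
  -- forward thinness of φ s₀
  have thin : ∀ a γ δ : Ω'', (a, γ) ∈ φ s₀ → (a, δ) ∈ φ s₀ → γ = δ := by
    intro a γ δ hγ hδ
    have he' : {p : Ω'' × Ω'' | (p.2, p.1) ∈ φ s₀} ∈ X'.S := X'.conv _ hmem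
    obtain ⟨u, hu, hue⟩ := halg.bijOn.surjOn he'
    obtain ⟨t', ht', haa⟩ := X'.cover (a, a)
    obtain ⟨t, ht, hte⟩ := halg.bijOn.surjOn ht'
    obtain ⟨p, hp⟩ := X.nonemp t ht
    have hq' : (a, a) ∈ φ t := by rw [hte]; exact haa
    have hc := halg.cnum_eq s₀ hs₀ u hu t ht p hp (a, a) hq'
    have hle : cnum s₀ u p ≤ 1 := by
      have hsub : {γ : Ω | (p.1, γ) ∈ s₀ ∧ (γ, p.2) ∈ u} ⊆ {p.1} := by
        intro x ⟨hx1, _⟩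
        have h' := hdiag (p.1, x) hx1
        simpa using h'.symm
      calc cnum s₀ u p ≤ ({p.1} : Set Ω).ncard :=
            Set.ncard_le_ncard hsub (Set.finite_singleton _)
        _ = 1 := Set.ncard_singleton _
    by_contra hne
    have hsub2 : ({γ, δ} : Set Ω'') ⊆ {x : Ω'' | ((a, a).1, x) ∈ φ s₀ ∧ (x, (a, a).2) ∈ φ u} := by
      intro x hx
      rcases hx with h | h
      · subst h; exact ⟨hγ, by rw [hue]; exact hγ⟩
      · have hxd : x = δ := h
        subst hxd; exact ⟨hδ, by rw [hue]; exact hδ⟩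
    have h2 : 2 ≤ cnum (φ s₀) (φ u) (a, a) := by
      have : ({γ, δ} : Set Ω'').ncard = 2 := Set.ncard_pair hne
      calc 2 = ({γ, δ} : Set Ω'').ncard := this.symm
        _ ≤ _ := Set.ncard_le_ncard hsub2 (Set.toFinite _)
    rw [← hc] at h2
    omega
  -- find a diagonal point in φ s₀
  obtain ⟨q, hq⟩ := X'.nonemp _ hmem
  have h1 : cnum s₀ s₀ ((α : Ω), α) = 1 := by
    have hset : {γ : Ω | (((α : Ω), α).1, γ) ∈ s₀ ∧ (γ, ((α : Ω), α).2) ∈ s₀} = {α} := by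
      ext x
      constructor
      · rintro ⟨h1, _⟩
        exact ((hdiag (α, x) h1).symm : x = α)
      · rintro rfl
        exact ⟨hαs₀, hαs₀⟩
    rw [cnum, hset, Set.ncard_singleton]
  have hc := halg.cnum_eq s₀ hs₀ s₀ hs₀ s₀ hs₀ (α, α) hαs₀ q hq
  rw [h1] at hc
  have hne : {γ : Ω'' | (q.1, γ) ∈ φ s₀ ∧ (γ, q.2) ∈ φ s₀}.Nonempty := by
    apply Set.nonempty_of_ncard_ne_zero
    rw [cnum] at hc
    omega
  obtain ⟨γ, hγ1, hγ2⟩ := hne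
  have hqe : (q.1, q.2) ∈ φ s₀ := hq
  have hγq : γ = q.2 := thin q.1 γ q.2 hγ1 hqe
  have hdiagpt : (q.2, q.2) ∈ φ s₀ := by rw [← hγq] at hγ2 ⊢; exact hγ2
  have hα' : q.2 ∈ fiberImage X φ Δ := by
    show (q.2, q.2) ∈ φ (diagRel Δ)
    rw [hΔeq]; exact hdiagpt
  -- use sesquiclosedness
  obtain ⟨Y, Y', ψ, hY, hY', hψiso, hψext, -⟩ := hext Δ hfib α hαΔ q.2 hα'
  obtain ⟨f, hfbij, hf2⟩ := h α Y hY Ω'' Y' ψ hψiso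
  refine ⟨f, hfbij, ?_⟩
  intro s hs
  rw [← hψext s hs]
  have himg : ψ '' {t | t ∈ Y.S ∧ t ⊆ s} = (relImage f) '' {t | t ∈ Y.S ∧ t ⊆ s} :=
    Set.image_congr (fun t ht => hf2 t ht.1)
  rw [algImage, himg]
  have hcov : ⋃₀ {t | t ∈ Y.S ∧ t ⊆ s} = s := by
    apply Set.Subset.antisymm
    · exact Set.sUnion_subset (fun t ht => ht.2)
    · intro p hp
      obtain ⟨t, ht, hpt⟩ := Y.cover p
      exact ⟨t, ⟨ht, hY.1 s hs t ht ⟨p, hpt, hp⟩⟩, hpt⟩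
  have hun : ⋃₀ ((relImage f) '' {t | t ∈ Y.S ∧ t ⊆ s})
      = relImage f (⋃₀ {t | t ∈ Y.S ∧ t ⊆ s}) := by
    ext p
    simp only [Set.mem_sUnion, Set.mem_image, relImage]
    constructor
    · rintro ⟨u, ⟨t, ht, rfl⟩, ⟨w, hw, rfl⟩⟩
      exact ⟨w, ⟨t, ht, hw⟩, rfl⟩
    · rintro ⟨w, ⟨t, ht, hw⟩, rfl⟩
      exact ⟨_, ⟨t, ht, rfl⟩, ⟨w, hw, rfl⟩⟩
  rw [hun, hcov]
end
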